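/- arXiv:2107.05572 — 9 statements merged into one kernel-verified Lean document; each statement's English description precedes it below -/
import Mathlib

section
/- If p(x) = a_0 + a_1 x + ... + a_n x^n is a real polynomial of degree n ≥ 1 all of whose roots are real and distinct (i.e., p has exactly n distinct real roots), then there exists a nonzero real number u such that the polynomial q(x) = p(x) + u·x^{n+1} has all of its roots real and distinct (i.e., q has exactly n+1 distinct real roots). -/
open Polynomial Filter

-- helper: IVT zero
lemma find_zero {f : ℝ → ℝ} (hf : Continuous f) {a b : ℝ} (hab : a < b)
    (h : f a * f b < 0) : ∃ z, a < z ∧ z < b ∧ f z = 0 := by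
  rcases lt_or_ge (f a) 0 with ha | ha
  · have hb : 0 < f b := by nlinarith
    have := intermediate_value_Ioo hab.le hf.continuousOn (a := a) (b := b)
    have h0 : (0:ℝ) ∈ Set.Ioo (f a) (f b) := ⟨ha, hb⟩
    obtain ⟨z, hz, hfz⟩ := this h0
    exact ⟨z, hz.1, hz.2, hfz⟩
  · have ha' : 0 < f a := by
      rcases eq_or_lt_of_le ha with h1 | h1
      · exfalso; have : f a * f b = 0 := by rw [← h1]; ring
        linarith
      · exact h1
    have hb : f b < 0 := by nlinarith
    have := intermediate_value_Ioo' hab.le hf.continuousOn (a := a) (b := b)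
    have h0 : (0:ℝ) ∈ Set.Ioo (f b) (f a) := ⟨hb, ha'⟩
    obtain ⟨z, hz, hfz⟩ := this h0
    exact ⟨z, hz.1, hz.2, hfz⟩

-- helper: zeros from alternating signs
lemma zeros_of_alternating {f : ℝ → ℝ} (hf : Continuous f) {m : ℕ} {x : ℕ → ℝ}
    (hmono : ∀ k < m, x k < x (k + 1))
    (hsign : ∀ k ≤ m, 0 < (-1 : ℝ) ^ k * f (x k)) :
    ∃ z : ℕ → ℝ, ∀ k < m, f (z k) = 0 ∧ x k < z k ∧ z k < x (k + 1) := by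
  have H : ∀ k, ∃ z, k < m → (f z = 0 ∧ x k < z ∧ z < x (k + 1)) := by
    intro k
    by_cases hk : k < m
    · have h1 := hsign k hk.le
      have h2 := hsign (k + 1) hk
      have hprod : f (x k) * f (x (k + 1)) < 0 := by
        rcases Nat.even_or_odd k with he | ho
        · rw [he.neg_one_pow] at h1
          rw [(Even.add_one he).neg_one_pow] at h2
          nlinarith
        · rw [ho.neg_one_pow] at h1
          rw [(Odd.add_one ho).neg_one_pow] at h2
          nlinarith
      obtain ⟨z, hz1, hz2, hz3⟩ := find_zero hf (hmono k hk) hprod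
      exact ⟨z, fun _ => ⟨hz3, hz1, hz2⟩⟩
    · exact ⟨0, fun h => absurd h hk⟩
  choose z hz using H
  exact ⟨z, fun k hk => hz k hk⟩

-- helper: a degree-m polynomial with m distinct roots has exactly m roots, all simple
lemma count_roots_of_zeros {q : Polynomial ℝ} (hq : q ≠ 0) {m : ℕ} (hdeg : q.natDegree = m)
    (z : ℕ → ℝ) (hz0 : ∀ k < m, q.eval (z k) = 0)
    (hzmono : ∀ j k, j < k → k < m → z j < z k) :
    Multiset.card q.roots = m ∧ q.roots.Nodup := by
  set T : Finset ℝ := (Finset.range m).image z with hT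
  have hTcard : T.card = m := by
    rw [hT, Finset.card_image_of_injOn, Finset.card_range]
    intro a ha b hb hab
    simp only [Finset.coe_range, Set.mem_Iio] at ha hb
    by_contra hne
    rcases Nat.lt_or_ge a b with h | h
    · exact absurd hab (hzmono a b h hb).ne
    · exact absurd hab.symm (hzmono b a (lt_of_le_of_ne h (Ne.symm hne)) ha).ne
  have hTsub : T ⊆ q.roots.toFinset := by
    intro a ha
    rw [hT, Finset.mem_image] at ha
    obtain ⟨k, hk, rfl⟩ := ha
    rw [Finset.mem_range] at hk
    rw [Multiset.mem_toFinset, mem_roots hq]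
    exact hz0 k hk
  have h1 : m ≤ q.roots.toFinset.card := hTcard ▸ Finset.card_le_card hTsub
  have h2 : q.roots.toFinset.card ≤ Multiset.card q.roots := q.roots.toFinset_card_le
  have h3 : Multiset.card q.roots ≤ m := hdeg ▸ q.card_roots'
  have hcard : Multiset.card q.roots = m := le_antisymm h3 (h1.trans h2)
  refine ⟨hcard, Multiset.toFinset_card_eq_card_iff_nodup.mp ?_⟩
  omega

-- helper: sign of a product of linear factors
lemma prod_sign {n : ℕ} (r : Fin n → ℝ) (t : ℝ) (k : ℕ) (hk : k ≤ n)
    (hlow : ∀ i : Fin n, (i : ℕ) < k → r i < t)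
    (hhigh : ∀ i : Fin n, k ≤ (i : ℕ) → t < r i) :
    0 < (-1 : ℝ) ^ (n - k) * ∏ i, (t - r i) := by
  classical
  set A := Finset.univ.filter (fun i : Fin n => (i : ℕ) < k) with hA
  set B := Finset.univ.filter (fun i : Fin n => ¬ (i : ℕ) < k) with hB
  have hAcard : A.card = k := by
    rcases eq_or_lt_of_le hk with rfl | hkn
    · rw [hA, Finset.filter_true_of_mem (fun i _ => i.isLt)]
      simp
    · have : A = Finset.Iio (⟨k, hkn⟩ : Fin n) := by
        ext i; simp [hA, Fin.lt_def]
      rw [this, Fin.card_Iio]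
  have hBcard : B.card = n - k := by
    have := Finset.card_filter_add_card_filter_not
      (s := (Finset.univ : Finset (Fin n))) (p := fun i : Fin n => (i : ℕ) < k)
    rw [← hA, ← hB, hAcard, Finset.card_univ, Fintype.card_fin] at this
    omega
  have hsplit : ∏ i, (t - r i) = (∏ i ∈ A, (t - r i)) * ∏ i ∈ B, (t - r i) :=
    (Finset.prod_filter_mul_prod_filter_not _ _ _).symm
  have hApos : 0 < ∏ i ∈ A, (t - r i) := by
    apply Finset.prod_pos
    intro i hi
    rw [hA, Finset.mem_filter] at hi
    linarith [hlow i hi.2]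
  have hBprod : ∏ i ∈ B, (t - r i) = (-1 : ℝ) ^ (n - k) * ∏ i ∈ B, (r i - t) := by
    rw [← hBcard]
    rw [← Finset.prod_const (-1 : ℝ), ← Finset.prod_mul_distrib]
    congr 1; ext i; ring
  have hBpos : 0 < ∏ i ∈ B, (r i - t) := by
    apply Finset.prod_pos
    intro i hi
    rw [hB, Finset.mem_filter] at hi
    linarith [hhigh i (le_of_not_gt hi.2)]
  rw [hsplit, hBprod]
  have hsq : (-1 : ℝ) ^ (n - k) * (-1 : ℝ) ^ (n - k) = 1 := by
    rw [← pow_add]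
    exact Even.neg_one_pow ⟨n - k, by ring⟩
  calc (0:ℝ) < (∏ i ∈ A, (t - r i)) * ∏ i ∈ B, (r i - t) := mul_pos hApos hBpos
    _ = ((-1 : ℝ) ^ (n - k) * (-1 : ℝ) ^ (n - k)) * ((∏ i ∈ A, (t - r i)) * ∏ i ∈ B, (r i - t)) := by
        rw [hsq, one_mul]
    _ = (-1 : ℝ) ^ (n - k) * ((∏ i ∈ A, (t - r i)) * ((-1 : ℝ) ^ (n - k) * ∏ i ∈ B, (r i - t))) := by
        ring

lemma chain_lt {x : ℕ → ℝ} {m : ℕ} (h : ∀ k < m, x k < x (k + 1)) :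
    ∀ j k, j < k → k ≤ m → x j < x k := by
  intro j k
  induction k with
  | zero => omega
  | succ k ih =>
    intro hjk hkm
    rcases Nat.lt_or_ge j k with hj | hj
    · exact (ih hj (by omega)).trans (h k (by omega))
    · have : j = k := by omega
      subst this
      exact h j (by omega)

theorem stmt_0 (n : ℕ) (hn : 1 ≤ n) (p : Polynomial ℝ)
    (hdeg : p.natDegree = n)
    (hroots : Multiset.card p.roots = n) (hnodup : p.roots.Nodup) :
    ∃ u : ℝ, u ≠ 0 ∧
      Multiset.card (p + C u * X ^ (n + 1)).roots = n + 1 ∧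
      (p + C u * X ^ (n + 1)).roots.Nodup := by
  classical
  have hp0 : p ≠ 0 := by
    intro h
    rw [h, natDegree_zero] at hdeg
    omega
  set c := p.leadingCoeff with hc
  have hc0 : c ≠ 0 := leadingCoeff_ne_zero.mpr hp0
  -- enumerate the roots in increasing order
  have hFcard : p.roots.toFinset.card = n := by
    rw [Multiset.toFinset_card_eq_card_iff_nodup.mpr hnodup, hroots]
  set F := p.roots.toFinset with hF
  set r : Fin n → ℝ := fun i => F.orderEmbOfFin hFcard i with hr
  have hrmono : StrictMono r := (F.orderEmbOfFin hFcard).strictMono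
  have hrinj : Function.Injective r := hrmono.injective
  have hFim : F = Finset.image r Finset.univ := by
    apply Finset.coe_injective
    rw [Finset.coe_image, Finset.coe_univ, Set.image_univ]
    exact (Finset.range_orderEmbOfFin F hFcard).symm
  -- evaluation formula
  have hfac := C_leadingCoeff_mul_prod_multiset_X_sub_C (p := p) (by rw [hroots, hdeg])
  have heval : ∀ t, p.eval t = c * ∏ i, (t - r i) := by
    intro t
    conv_lhs => rw [← hfac]
    rw [eval_mul, eval_C]
    congr 1
    rw [eval_multiset_prod, Multiset.map_map]
    simp only [Function.comp_def]
    have h1 : (p.roots.map fun a => eval t (X - C a)) = p.roots.map fun a => t - a := by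
      apply Multiset.map_congr rfl
      intro a _
      simp
    rw [h1]
    have h2 : p.roots = F.val := by
      rw [hF, Multiset.toFinset_val, Multiset.dedup_eq_self.mpr hnodup]
    rw [h2]
    have h3 : (F.val.map fun a => t - a).prod = ∏ a ∈ F, (t - a) := rfl
    rw [h3, hFim, Finset.prod_image (fun a _ b _ h => hrinj h)]
  -- the test points
  have hn0 : 0 < n := hn
  set s : ℕ → ℝ := fun k =>
    if k = 0 then r ⟨0, hn0⟩ - 1
    else if h2 : k < n then (r ⟨k - 1, by omega⟩ + r ⟨k, h2⟩) / 2
    else r ⟨n - 1, by omega⟩ + 1 with hs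
  have hst0 : s 0 = r ⟨0, hn0⟩ - 1 := by simp [hs]
  have hstmid : ∀ k, ∀ h1 : 0 < k, ∀ h2 : k < n,
      s k = (r ⟨k - 1, by omega⟩ + r ⟨k, h2⟩) / 2 := by
    intro k h1 h2
    simp only [hs]
    rw [if_neg h1.ne', dif_pos h2]
  have hstn : ∀ k, n ≤ k → s k = r ⟨n - 1, by omega⟩ + 1 := by
    intro k hk
    have h1 : ¬ k = 0 := by omega
    have h2 : ¬ k < n := by omega
    simp only [hs]
    rw [if_neg h1, dif_neg h2]
  have hkey : ∀ k ≤ n, (∀ i : Fin n, (i : ℕ) < k → r i < s k) ∧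
      (∀ i : Fin n, k ≤ (i : ℕ) → s k < r i) := by
    intro k hk
    rcases Nat.eq_zero_or_pos k with rfl | hkpos
    · refine ⟨fun i hi => by omega, fun i _ => ?_⟩
      have h2 : r ⟨0, hn0⟩ ≤ r i := hrmono.monotone (by simp [Fin.le_def])
      rw [hst0]
      linarith
    rcases Nat.lt_or_ge k n with hkn | hkn
    · have hsk := hstmid k hkpos hkn
      have hlt : r ⟨k - 1, by omega⟩ < r ⟨k, hkn⟩ := hrmono (by simp [Fin.lt_def]; omega)
      constructor
      · intro i hi
        have : r i ≤ r ⟨k - 1, by omega⟩ := hrmono.monotone (by simp [Fin.le_def]; omega)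
        rw [hsk]; linarith
      · intro i hi
        have : r ⟨k, hkn⟩ ≤ r i := hrmono.monotone (by simp [Fin.le_def]; omega)
        rw [hsk]; linarith
    · have hkn' : k = n := le_antisymm hk hkn
      subst hkn'
      have hsk := hstn k le_rfl
      refine ⟨fun i hi => ?_, fun i hi => by have := i.isLt; omega⟩
      have : r i ≤ r ⟨k - 1, by omega⟩ := hrmono.monotone (by simp [Fin.le_def]; omega)
      rw [hsk]; linarith
  -- signs of p at the test points
  have hsignp : ∀ k ≤ n, 0 < (-1 : ℝ) ^ (n + k) * (c * p.eval (s k)) := by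
    intro k hk
    have hps := prod_sign r (s k) k hk (fun i hi => (hkey k hk).1 i hi)
      (fun i hi => (hkey k hk).2 i hi)
    have hpow : (-1 : ℝ) ^ (n + k) = (-1 : ℝ) ^ (n - k) := by
      rw [show n + k = (n - k) + 2 * k by omega, pow_add, pow_mul]
      norm_num
    rw [heval, hpow]
    have hc2 : 0 < c * c := mul_self_pos.mpr hc0
    nlinarith [hps, hc2]
  have hpne : ∀ k ≤ n, p.eval (s k) ≠ 0 := by
    intro k hk h0
    have := hsignp k hk
    rw [h0] at this
    simp at this
  -- choose u
  set G : Finset ℝ := (Finset.range (n + 1)).image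
    (fun k => |p.eval (s k)| / (|s k| ^ (n + 1) + 1)) with hG
  have hGne : G.Nonempty := by
    rw [hG]
    exact Finset.Nonempty.image ⟨0, Finset.mem_range.mpr (by omega)⟩ _
  set ε := G.min' hGne with hε
  have hεpos : 0 < ε := by
    obtain ⟨k, hk, hkeq⟩ := Finset.mem_image.mp (G.min'_mem hGne)
    rw [hε, ← hkeq]
    apply div_pos
    · exact abs_pos.mpr (hpne k (by rw [Finset.mem_range] at hk; omega))
    · positivity
  have hεle : ∀ k ≤ n, ε ≤ |p.eval (s k)| / (|s k| ^ (n + 1) + 1) := by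
    intro k hk
    apply Finset.min'_le
    rw [hG]
    exact Finset.mem_image.mpr ⟨k, Finset.mem_range.mpr (by omega), rfl⟩
  set u : ℝ := -(c / |c|) * ε with hu
  have habsc : |c| > 0 := abs_pos.mpr hc0
  have hu0 : u ≠ 0 := by
    rw [hu]
    exact mul_ne_zero (neg_ne_zero.mpr (div_ne_zero hc0 (ne_of_gt habsc))) (ne_of_gt hεpos)
  have huabs : |u| = ε := by
    rw [hu, abs_mul, abs_neg, abs_div, abs_abs, div_self (ne_of_gt habsc), one_mul,
      abs_of_pos hεpos]
  have hcu : c * u = -(|c| * ε) := by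
    calc c * u = -((c * c) / |c| * ε) := by rw [hu]; ring
      _ = -((|c| * |c|) / |c| * ε) := by rw [abs_mul_abs_self]
      _ = -(|c| * ε) := by rw [mul_div_assoc, div_self (ne_of_gt habsc), mul_one]
  refine ⟨u, hu0, ?_⟩
  set q : Polynomial ℝ := p + C u * X ^ (n + 1) with hq
  have hmdeg : (C u * X ^ (n + 1)).natDegree = n + 1 := natDegree_C_mul_X_pow (n + 1) u hu0
  have hqdeg : q.natDegree = n + 1 := by
    rw [hq, natDegree_add_eq_right_of_natDegree_lt (by rw [hmdeg, hdeg]; omega), hmdeg]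
  have hq0 : q ≠ 0 := by
    intro h
    rw [h, natDegree_zero] at hqdeg
    omega
  have hqeval : ∀ t, q.eval t = p.eval t + u * t ^ (n + 1) := by
    intro t; rw [hq]; simp
  -- signs of q at the test points
  have hsignq : ∀ k ≤ n, 0 < (-1 : ℝ) ^ (n + k) * (c * q.eval (s k)) := by
    intro k hk
    have ha := hsignp k hk
    have hble : ε * (|s k| ^ (n + 1) + 1) ≤ |p.eval (s k)| := by
      rw [← le_div_iff₀ (by positivity)]
      exact hεle k hk
    have hblt : |u| * |s k| ^ (n + 1) < |p.eval (s k)| := by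
      rw [huabs]
      nlinarith [hεpos]
    have hb : |u * s k ^ (n + 1)| < |p.eval (s k)| := by
      rw [abs_mul, abs_pow]
      exact hblt
    have hbc : |c * (u * s k ^ (n + 1))| < |c * p.eval (s k)| := by
      calc |c * (u * s k ^ (n + 1))| = |c| * |u * s k ^ (n + 1)| := abs_mul _ _
        _ < |c| * |p.eval (s k)| := (mul_lt_mul_iff_right₀ habsc).mpr hb
        _ = |c * p.eval (s k)| := (abs_mul _ _).symm
    rw [hqeval, mul_add, mul_add]
    set e : ℝ := (-1 : ℝ) ^ (n + k) with he
    have habs_e : |e| = 1 := by rw [he, abs_pow, abs_neg, abs_one, one_pow]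
    set a : ℝ := c * p.eval (s k)
    set b : ℝ := c * (u * s k ^ (n + 1))
    have h1 : |e * a| = |a| := by rw [abs_mul, habs_e, one_mul]
    have h2 : |e * a| = e * a := abs_of_pos ha
    have h3 : -(|b|) ≤ e * b := by
      have : |e * b| = |b| := by rw [abs_mul, habs_e, one_mul]
      linarith [neg_abs_le (e * b), this.le, this.ge]
    have : c * (u * s k ^ (n + 1)) = b := rfl
    calc (0:ℝ) < |a| - |b| := by
          have : |b| < |a| := hbc
          linarith
      _ ≤ e * a + e * b := by rw [← h2, h1]; linarith
  -- large point where q has the sign of u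
  have hqlead : q.leadingCoeff = u := by
    rw [leadingCoeff, hqdeg, hq, coeff_add, coeff_C_mul, coeff_X_pow, if_pos rfl,
      coeff_eq_zero_of_natDegree_lt (by rw [hdeg]; omega)]
    ring
  set Q : Polynomial ℝ := Polynomial.C (-c) * q with hQ
  have hCc0 : Polynomial.C (-c) ≠ (0 : Polynomial ℝ) := by
    simpa using hc0
  have hQ0 : Q ≠ 0 := mul_ne_zero hCc0 hq0
  have hQlead : Q.leadingCoeff = -c * u := by
    rw [hQ, leadingCoeff_mul, leadingCoeff_C, hqlead]
  have hQleadpos : 0 < Q.leadingCoeff := by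
    rw [hQlead]
    nlinarith [hcu, mul_pos habsc hεpos]
  have hQnatdeg : Q.natDegree = n + 1 := by
    rw [hQ, natDegree_mul hCc0 hq0, natDegree_C, hqdeg]
    omega
  have hQdegpos : 0 < Q.degree :=
    natDegree_pos_iff_degree_pos.mp (by omega)
  have htends := Polynomial.tendsto_atTop_of_leadingCoeff_nonneg Q hQdegpos hQleadpos.le
  have hev : ∀ᶠ (x : ℝ) in atTop, 0 < eval x Q := htends.eventually_gt_atTop 0
  obtain ⟨M, hM1, hM2⟩ := (hev.and (eventually_gt_atTop (s n))).exists
  have hMsign : c * q.eval M < 0 := by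
    have hQM : eval M Q = -c * q.eval M := by rw [hQ]; simp
    rw [hQM] at hM1
    linarith
  set x : ℕ → ℝ := fun k => if k ≤ n then s k else M with hx
  have hxval : ∀ k ≤ n, x k = s k := by
    intro k hk; simp [hx, hk]
  have hxlast : x (n + 1) = M := by
    simp [hx]
  have hxmono : ∀ k < n + 1, x k < x (k + 1) := by
    intro k hk
    rcases Nat.lt_or_ge k n with h | h
    · rw [hxval k (by omega), hxval (k + 1) (by omega)]
      have h1 := (hkey k (by omega)).2 ⟨k, h⟩ (le_refl k)
      have h2 := (hkey (k + 1) (by omega)).1 ⟨k, h⟩ (by simp)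
      linarith
    · have hkn : k = n := by omega
      subst hkn
      rw [hxval k le_rfl, hxlast]
      exact hM2
  have hfcont : Continuous (fun t : ℝ => ((-1 : ℝ) ^ n * c) * q.eval t) :=
    continuous_const.mul q.continuous
  have hfsign : ∀ k ≤ n + 1, 0 < (-1 : ℝ) ^ k *
      ((fun t : ℝ => ((-1 : ℝ) ^ n * c) * q.eval t) (x k)) := by
    intro k hk
    simp only []
    rcases Nat.lt_or_ge k (n + 1) with h | h
    · have hkn : k ≤ n := by omega
      rw [hxval k hkn]
      have hq1 := hsignq k hkn
      have heq : (-1 : ℝ) ^ k * ((-1 : ℝ) ^ n * c * q.eval (s k)) =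
          (-1 : ℝ) ^ (n + k) * (c * q.eval (s k)) := by
        rw [pow_add]; ring
      rw [heq]
      exact hq1
    · have hkn : k = n + 1 := by omega
      subst hkn
      rw [hxlast]
      have hpw : (-1 : ℝ) ^ (n + 1) * (-1 : ℝ) ^ n = -1 := by
        rw [← pow_add]
        exact Odd.neg_one_pow ⟨n, by ring⟩
      have heq : (-1 : ℝ) ^ (n + 1) * ((-1 : ℝ) ^ n * c * q.eval M) =
          -(c * q.eval M) := by
        calc (-1 : ℝ) ^ (n + 1) * ((-1 : ℝ) ^ n * c * q.eval M)
            = ((-1 : ℝ) ^ (n + 1) * (-1 : ℝ) ^ n) * (c * q.eval M) := by ring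
          _ = -(c * q.eval M) := by rw [hpw]; ring
      rw [heq]
      linarith
  obtain ⟨z, hz⟩ := zeros_of_alternating hfcont hxmono hfsign
  have hzq : ∀ k < n + 1, q.eval (z k) = 0 := by
    intro k hk
    have h0 := (hz k hk).1
    have hne : ((-1 : ℝ) ^ n * c) ≠ 0 := mul_ne_zero (pow_ne_zero _ (by norm_num)) hc0
    exact (mul_eq_zero.mp h0).resolve_left hne
  have hzmono : ∀ j k, j < k → k < n + 1 → z j < z k := by
    intro j k hjk hk
    have h1 := (hz j (by omega)).2.2
    have h2 := (hz k hk).2.1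
    rcases eq_or_lt_of_le (show j + 1 ≤ k by omega) with h | h
    · rw [h] at h1; linarith
    · have h3 := chain_lt hxmono (j + 1) k h (by omega)
      linarith
  have hfin := count_roots_of_zeros hq0 hqdeg z hzq hzmono
  exact hfin
end

section
/- Let u be a nonzero real number and n ≥ 3 an integer. Then the polynomial q(x) = (x-1)^n + u·x^{n+1} cannot have all of its roots real; that is, the number of real roots of q counted with multiplicity is strictly less than n+1 (the degree of q). -/
open Polynomial

noncomputable def QQaux (S : Multiset ℝ) : Polynomial ℝ := (S.map fun r => 1 - C r * X).prod

noncomputable def psaux (k : ℕ) (S : Multiset ℝ) : ℝ := (S.map fun r => r^k).sum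

lemma psaux_cons (k : ℕ) (a : ℝ) (S : Multiset ℝ) : psaux k (a ::ₘ S) = a^k + psaux k S := by
  simp [psaux]

lemma QQaux_cons (a : ℝ) (S : Multiset ℝ) : QQaux (a ::ₘ S) = (1 - C a * X) * QQaux S := by
  simp [QQaux]

lemma QQaux_coeff_zero (S : Multiset ℝ) : (QQaux S).coeff 0 = 1 := by
  induction S using Multiset.induction_on with
  | empty => simp [QQaux]
  | cons a S ih => rw [QQaux_cons, mul_coeff_zero]; simp [ih]

lemma QQaux_coeff_succ_cons (a : ℝ) (S : Multiset ℝ) (k : ℕ) :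
    (QQaux (a ::ₘ S)).coeff (k+1) = (QQaux S).coeff (k+1) - a * (QQaux S).coeff k := by
  rw [QQaux_cons, sub_mul, one_mul, mul_assoc]
  rw [coeff_sub, coeff_C_mul, coeff_X_mul]

lemma newton_aux (S : Multiset ℝ) :
    (psaux 1 S + (QQaux S).coeff 1 = 0) ∧
    (psaux 2 S + (QQaux S).coeff 1 * psaux 1 S + 2 * (QQaux S).coeff 2 = 0) ∧
    (psaux 3 S + (QQaux S).coeff 1 * psaux 2 S + (QQaux S).coeff 2 * psaux 1 S
      + 3 * (QQaux S).coeff 3 = 0) ∧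
    (psaux 4 S + (QQaux S).coeff 1 * psaux 3 S + (QQaux S).coeff 2 * psaux 2 S
      + (QQaux S).coeff 3 * psaux 1 S + 4 * (QQaux S).coeff 4 = 0) ∧
    (psaux 5 S + (QQaux S).coeff 1 * psaux 4 S + (QQaux S).coeff 2 * psaux 3 S
      + (QQaux S).coeff 3 * psaux 2 S + (QQaux S).coeff 4 * psaux 1 S
      + 5 * (QQaux S).coeff 5 = 0) ∧
    (psaux 6 S + (QQaux S).coeff 1 * psaux 5 S + (QQaux S).coeff 2 * psaux 4 S
      + (QQaux S).coeff 3 * psaux 3 S + (QQaux S).coeff 4 * psaux 2 S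
      + (QQaux S).coeff 5 * psaux 1 S + 6 * (QQaux S).coeff 6 = 0) := by
  induction S using Multiset.induction_on with
  | empty => norm_num [QQaux, psaux, coeff_one]
  | cons a S ih =>
    obtain ⟨h1, h2, h3, h4, h5, h6⟩ := ih
    have c0 := QQaux_coeff_zero S
    have e1 := QQaux_coeff_succ_cons a S 0
    have e2 := QQaux_coeff_succ_cons a S 1
    have e3 := QQaux_coeff_succ_cons a S 2
    have e4 := QQaux_coeff_succ_cons a S 3
    have e5 := QQaux_coeff_succ_cons a S 4
    have e6 := QQaux_coeff_succ_cons a S 5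
    refine ⟨?_, ?_, ?_, ?_, ?_, ?_⟩ <;>
      simp only [psaux_cons, e1, e2, e3, e4, e5, e6, c0, show (0:ℕ)+1 = 1 from rfl,
        show (1:ℕ)+1 = 2 from rfl, show (2:ℕ)+1 = 3 from rfl, show (3:ℕ)+1 = 4 from rfl,
        show (4:ℕ)+1 = 5 from rfl, show (5:ℕ)+1 = 6 from rfl]
    · linear_combination h1
    · linear_combination h2 - a * h1
    · linear_combination h3 - a * h2
    · linear_combination h4 - a * h3
    · linear_combination h5 - a * h4
    · linear_combination h6 - a * h5

lemma bridge_aux (S : Multiset ℝ) (hS : ∀ r ∈ S, r ≠ 0) :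
    ∃ c : ℝ, (S.map fun r => (X : ℝ[X]) - C r).prod = C c * QQaux (S.map (·⁻¹)) := by
  induction S using Multiset.induction_on with
  | empty => exact ⟨1, by simp [QQaux]⟩
  | cons a S ih =>
    obtain ⟨c, hc⟩ := ih fun r hr => hS r (Multiset.mem_cons_of_mem hr)
    have ha : a ≠ 0 := hS a (Multiset.mem_cons_self a S)
    refine ⟨-a * c, ?_⟩
    have hfac : (X : ℝ[X]) - C a = C (-a) * (1 - C a⁻¹ * X) := by
      rw [mul_sub, mul_one, ← mul_assoc, ← C_mul]
      rw [show -a * a⁻¹ = -1 by field_simp]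
      simp [sub_eq_add_neg]
      ring
    rw [Multiset.map_cons, Multiset.prod_cons, hc, Multiset.map_cons, QQaux_cons, hfac, map_mul]
    ring

lemma nat_c2aux (n : ℕ) : 2 * (n+1).choose 2 = (n+1) * n := by
  induction n with
  | zero => rfl
  | succ m ih =>
    rw [show m+1+1 = (m+1)+1 from rfl, Nat.choose_succ_succ (m+1) 1, Nat.mul_add, ih,
      Nat.choose_one_right]
    ring

lemma nat_c3aux (n : ℕ) : 6 * (n+2).choose 3 = (n+2) * (n+1) * n := by
  induction n with
  | zero => rfl
  | succ m ih =>
    rw [show m+1+2 = (m+2)+1 from rfl, Nat.choose_succ_succ (m+2) 2, Nat.mul_add, ih,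
      show 6 * (m+2).choose 2 = 3 * (2 * ((m+1)+1).choose 2) by ring, nat_c2aux (m+1)]
    ring

lemma nat_c4aux (n : ℕ) : 24 * (n+3).choose 4 = (n+3) * (n+2) * (n+1) * n := by
  induction n with
  | zero => rfl
  | succ m ih =>
    rw [show m+1+3 = (m+3)+1 from rfl, Nat.choose_succ_succ (m+3) 3, Nat.mul_add, ih,
      show 24 * (m+3).choose 3 = 4 * (6 * ((m+1)+2).choose 3) by ring, nat_c3aux (m+1)]
    ring

lemma sumA_aux (T : Multiset ℝ) :
    (T.map fun s => (s - s^2)^2).sum = psaux 2 T - 2 * psaux 3 T + psaux 4 T := by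
  induction T using Multiset.induction_on with
  | empty => simp [psaux]
  | cons a T ih =>
    simp only [Multiset.map_cons, Multiset.sum_cons, psaux_cons, ih]
    ring

lemma sumB_aux (T : Multiset ℝ) :
    (T.map fun s => (s^3 - 3*s^2 + 2*s)^2).sum
      = psaux 6 T - 6 * psaux 5 T + 13 * psaux 4 T - 12 * psaux 3 T + 4 * psaux 2 T := by
  induction T using Multiset.induction_on with
  | empty => simp [psaux]
  | cons a T ih =>
    simp only [Multiset.map_cons, Multiset.sum_cons, psaux_cons, ih]
    ring

theorem stmt_2 (u : ℝ) (hu : u ≠ 0) (n : ℕ) (hn : 3 ≤ n) :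
    Multiset.card ((X - 1) ^ n + C u * X ^ (n + 1) : Polynomial ℝ).roots < n + 1 := by
  set p : ℝ[X] := (X - 1) ^ n + C u * X ^ (n + 1) with hp
  have hX1 : (X - 1 : ℝ[X]) = X + C (-1) := by simp [sub_eq_add_neg]
  have hdegpow : ((X - 1 : ℝ[X]) ^ n).degree = (n : ℕ) := by
    rw [hX1, degree_pow, degree_X_add_C]; simp
  have hdeg : p.degree = (n + 1 : ℕ) := by
    rw [hp, degree_add_eq_right_of_degree_lt, degree_C_mul_X_pow _ hu]
    rw [hdegpow, degree_C_mul_X_pow _ hu]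
    exact_mod_cast Nat.lt_succ_self n
  have hndeg : p.natDegree = n + 1 := natDegree_eq_of_degree_eq_some hdeg
  have hp0 : p ≠ 0 := fun h => by rw [h] at hndeg; simp at hndeg
  have hlead : p.leadingCoeff = u := by
    rw [leadingCoeff, hndeg, hp, coeff_add, coeff_C_mul, coeff_X_pow, if_pos rfl, mul_one,
      coeff_eq_zero_of_degree_lt, zero_add]
    rw [hdegpow]; exact_mod_cast Nat.lt_succ_self n
  have hcoeff : ∀ k, p.coeff k
      = (-1:ℝ)^(n-k) * (n.choose k) + (if k = n+1 then u else 0) := by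
    intro k
    rw [hp, coeff_add, coeff_C_mul, coeff_X_pow, hX1, coeff_X_add_C_pow]
    simp [mul_ite]
  have hroots : ∀ r ∈ p.roots, r ≠ 0 ∧ r ≠ 1 := by
    intro r hr
    have hev : p.eval r = 0 := (mem_roots hp0).1 hr
    constructor
    · rintro rfl
      rw [hp] at hev
      simp [zero_pow (Nat.succ_ne_zero n)] at hev
    · rintro rfl
      rw [hp] at hev
      simp [zero_pow (by omega : n ≠ 0)] at hev
      exact hu hev
  by_contra hcon
  push_neg at hcon
  have hcard : Multiset.card p.roots = n + 1 := le_antisymm (hndeg ▸ p.card_roots') hcon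
  have hsplit := C_leadingCoeff_mul_prod_multiset_X_sub_C (p := p) (by rw [hcard, hndeg])
  obtain ⟨c, hc⟩ := bridge_aux p.roots (fun r hr => (hroots r hr).1)
  set T : Multiset ℝ := p.roots.map (·⁻¹) with hT
  have hpf : p = C (u * c) * QQaux T := by
    rw [← hsplit, hlead, hc, ← mul_assoc, ← C_mul]
  have hck : ∀ k, p.coeff k = (u * c) * (QQaux T).coeff k := by
    intro k; rw [hpf, coeff_C_mul]
  -- value of the constant
  have hw : u * c = (-1:ℝ)^n := by
    have h0 := hck 0
    rw [QQaux_coeff_zero, mul_one] at h0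
    have h0' := hcoeff 0
    simp at h0'
    rw [← h0, h0']
  obtain ⟨N1, N2, N3, N4, N5, N6⟩ := newton_aux T
  set w : ℝ := u * c with hwdef
  have M1 : w * psaux 1 T + p.coeff 1 = 0 := by
    linear_combination w * N1 + hck 1
  have M2 : w * psaux 2 T + p.coeff 1 * psaux 1 T + 2 * p.coeff 2 = 0 := by
    linear_combination w * N2 + psaux 1 T * hck 1 + 2 * hck 2
  have M3 : w * psaux 3 T + p.coeff 1 * psaux 2 T + p.coeff 2 * psaux 1 T
      + 3 * p.coeff 3 = 0 := by
    linear_combination w * N3 + psaux 2 T * hck 1 + psaux 1 T * hck 2 + 3 * hck 3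
  have M4 : w * psaux 4 T + p.coeff 1 * psaux 3 T + p.coeff 2 * psaux 2 T
      + p.coeff 3 * psaux 1 T + 4 * p.coeff 4 = 0 := by
    linear_combination w * N4 + psaux 3 T * hck 1 + psaux 2 T * hck 2 + psaux 1 T * hck 3
      + 4 * hck 4
  have M5 : w * psaux 5 T + p.coeff 1 * psaux 4 T + p.coeff 2 * psaux 3 T
      + p.coeff 3 * psaux 2 T + p.coeff 4 * psaux 1 T + 5 * p.coeff 5 = 0 := by
    linear_combination w * N5 + psaux 4 T * hck 1 + psaux 3 T * hck 2 + psaux 2 T * hck 3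
      + psaux 1 T * hck 4 + 5 * hck 5
  have M6 : w * psaux 6 T + p.coeff 1 * psaux 5 T + p.coeff 2 * psaux 4 T
      + p.coeff 3 * psaux 3 T + p.coeff 4 * psaux 2 T + p.coeff 5 * psaux 1 T
      + 6 * p.coeff 6 = 0 := by
    linear_combination w * N6 + psaux 5 T * hck 1 + psaux 4 T * hck 2 + psaux 3 T * hck 3
      + psaux 2 T * hck 4 + psaux 1 T * hck 5 + 6 * hck 6
  -- nonnegativity of the two square sums
  have hAnn : (0:ℝ) ≤ psaux 2 T - 2 * psaux 3 T + psaux 4 T := by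
    rw [← sumA_aux]
    apply Multiset.sum_nonneg
    intro x hx
    obtain ⟨s, _, rfl⟩ := Multiset.mem_map.1 hx
    positivity
  have hBnn : (0:ℝ) ≤ psaux 6 T - 6 * psaux 5 T + 13 * psaux 4 T - 12 * psaux 3 T
      + 4 * psaux 2 T := by
    rw [← sumB_aux]
    apply Multiset.sum_nonneg
    intro x hx
    obtain ⟨s, _, rfl⟩ := Multiset.mem_map.1 hx
    positivity
  rcases Nat.lt_or_ge n 4 with h4 | h4
  · -- n = 3
    have hn3 : n = 3 := by omega
    subst hn3
    have hw3 : w = -1 := by rw [hw]; norm_num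
    have hc1 : p.coeff 1 = 3 := by rw [hcoeff]; norm_num [Nat.choose]
    have hc2 : p.coeff 2 = -3 := by rw [hcoeff]; norm_num [Nat.choose]
    have hc3 : p.coeff 3 = 1 := by rw [hcoeff]; norm_num [Nat.choose]
    have hc4 : p.coeff 4 = u := by rw [hcoeff]; norm_num [Nat.choose]
    have hc5 : p.coeff 5 = 0 := by rw [hcoeff]; norm_num [Nat.choose]
    have hc6 : p.coeff 6 = 0 := by rw [hcoeff]; norm_num [Nat.choose]
    rw [hw3, hc1] at M1
    rw [hw3, hc1, hc2] at M2
    rw [hw3, hc1, hc2, hc3] at M3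
    rw [hw3, hc1, hc2, hc3, hc4] at M4
    rw [hw3, hc1, hc2, hc3, hc4, hc5] at M5
    rw [hw3, hc1, hc2, hc3, hc4, hc5, hc6] at M6
    have hs1 : psaux 1 T = 3 := by linarith
    rw [hs1] at M2
    have hs2 : psaux 2 T = 3 := by linarith
    rw [hs1, hs2] at M3
    have hs3 : psaux 3 T = 3 := by linarith
    rw [hs1, hs2, hs3] at M4
    have hs4 : psaux 4 T = 3 + 4*u := by linarith
    rw [hs1, hs2, hs3, hs4] at M5
    have hs5 : psaux 5 T = 3 + 15*u := by linarith
    rw [hs1, hs2, hs3, hs4, hs5] at M6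
    have hs6 : psaux 6 T = 3 + 36*u := by linarith
    rw [hs2, hs3, hs4] at hAnn
    rw [hs2, hs3, hs4, hs5, hs6] at hBnn
    rcases hu.lt_or_gt with h | h <;> linarith
  · -- n ≥ 4
    obtain ⟨m, rfl⟩ : ∃ m, n = m + 4 := ⟨n - 4, by omega⟩
    set nn : ℝ := (m : ℝ) with hnn
    set ε : ℝ := (-1:ℝ)^(m+4) with hε
    have hεne : ε ≠ 0 := by
      rw [hε]; exact pow_ne_zero _ (by norm_num)
    have hsign : ∀ k, k ≤ m+4 → (-1:ℝ)^(m+4-k) = ε * (-1)^k := by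
      intro k hk
      have h1 : (-1:ℝ)^(m+4-k) * (-1)^k = ε := by
        rw [hε, ← pow_add, Nat.sub_add_cancel hk]
      have h2 : ((-1:ℝ)^k) * ((-1)^k) = 1 := by
        rw [← pow_add, ← two_mul, pow_mul]; norm_num
      calc (-1:ℝ)^(m+4-k) = (-1)^(m+4-k) * ((-1)^k * (-1)^k) := by rw [h2, mul_one]
        _ = ε * (-1)^k := by rw [← mul_assoc, h1]
    -- coefficient values
    have hC1 : ((m+4).choose 1 : ℝ) = nn + 4 := by
      rw [Nat.choose_one_right]; push_cast; ring
    have hC2 : 2 * ((m+4).choose 2 : ℝ) = (nn+4) * (nn+3) := by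
      have h := nat_c2aux (m+3)
      rw [show m+3+1 = m+4 from rfl] at h
      calc 2 * ((m+4).choose 2 : ℝ) = ((2 * (m+4).choose 2 : ℕ) : ℝ) := by push_cast; ring
        _ = (((m+4) * (m+3) : ℕ) : ℝ) := by rw [h]
        _ = (nn+4) * (nn+3) := by push_cast; ring
    have hC3 : 6 * ((m+4).choose 3 : ℝ) = (nn+4) * (nn+3) * (nn+2) := by
      have h := nat_c3aux (m+2)
      rw [show m+2+2 = m+4 from rfl] at h
      calc 6 * ((m+4).choose 3 : ℝ) = ((6 * (m+4).choose 3 : ℕ) : ℝ) := by push_cast; ring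
        _ = (((m+4) * (m+3) * (m+2) : ℕ) : ℝ) := by rw [h]
        _ = (nn+4) * (nn+3) * (nn+2) := by push_cast; ring
    have hC4 : 24 * ((m+4).choose 4 : ℝ) = (nn+4) * (nn+3) * (nn+2) * (nn+1) := by
      have h := nat_c4aux (m+1)
      rw [show m+1+3 = m+4 from rfl] at h
      calc 24 * ((m+4).choose 4 : ℝ) = ((24 * (m+4).choose 4 : ℕ) : ℝ) := by push_cast; ring
        _ = (((m+4) * (m+3) * (m+2) * (m+1) : ℕ) : ℝ) := by rw [h]
        _ = (nn+4) * (nn+3) * (nn+2) * (nn+1) := by push_cast; ring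
    set C2r : ℝ := ((m+4).choose 2 : ℝ) with hC2r
    set C3r : ℝ := ((m+4).choose 3 : ℝ) with hC3r
    set C4r : ℝ := ((m+4).choose 4 : ℝ) with hC4r
    have hwε : w = ε := hw
    have hp1 : p.coeff 1 = -(ε * (nn+4)) := by
      rw [hcoeff]
      rw [if_neg (by omega), hsign 1 (by omega), hC1]
      ring
    have hp2 : p.coeff 2 = ε * C2r := by
      rw [hcoeff]
      rw [if_neg (by omega), hsign 2 (by omega)]
      ring
    have hp3 : p.coeff 3 = -(ε * C3r) := by
      rw [hcoeff]
      rw [if_neg (by omega), hsign 3 (by omega)]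
      ring
    have hp4 : p.coeff 4 = ε * C4r := by
      rw [hcoeff]
      rw [if_neg (by omega), hsign 4 (by omega)]
      ring
    rw [hwε, hp1] at M1
    rw [hwε, hp1, hp2] at M2
    rw [hwε, hp1, hp2, hp3] at M3
    rw [hwε, hp1, hp2, hp3, hp4] at M4
    -- solve successively
    have K1 : psaux 1 T = nn + 4 := by
      apply mul_left_cancel₀ hεne
      linear_combination M1
    have K2 : psaux 2 T = nn + 4 := by
      apply mul_left_cancel₀ hεne
      linear_combination M2 + ε * (nn+4) * K1 - ε * hC2
    have K3 : psaux 3 T = nn + 4 := by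
      apply mul_left_cancel₀ hεne
      linear_combination M3 - ε * C2r * K1 + ε * (nn+4) * K2 - (ε * (nn+4) / 2) * hC2
        + (ε / 2) * hC3
    have K4 : psaux 4 T = nn + 4 := by
      apply mul_left_cancel₀ hεne
      linear_combination M4 + ε * C3r * K1 - ε * C2r * K2 + ε * (nn+4) * K3
        - (ε * (nn+4) / 2) * hC2 + (ε * (nn+4) / 6) * hC3 - (ε / 6) * hC4
    -- the sum of squares is zero, but one term is positive
    have hzero : psaux 2 T - 2 * psaux 3 T + psaux 4 T = 0 := by
      rw [K2, K3, K4]; ring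
    -- pick an element of T
    have hTne : T ≠ 0 := by
      intro h
      have : Multiset.card T = 0 := by rw [h]; rfl
      rw [hT, Multiset.card_map, hcard] at this
      omega
    obtain ⟨a, ha⟩ := Multiset.exists_mem_of_ne_zero hTne
    obtain ⟨r, hr, rfl⟩ := Multiset.mem_map.1 ha
    have hrne := hroots r hr
    have hterm : 0 < (r⁻¹ - (r⁻¹)^2)^2 := by
      have h1 : r⁻¹ ≠ 0 := inv_ne_zero hrne.1
      have h2 : r⁻¹ ≠ 1 := by
        intro h
        exact hrne.2 (by rw [← inv_inv r, h, inv_one])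
      have : r⁻¹ - (r⁻¹)^2 ≠ 0 := by
        intro h
        have : r⁻¹ * (1 - r⁻¹) = 0 := by ring_nf; linear_combination h
        rcases mul_eq_zero.1 this with h' | h'
        · exact h1 h'
        · exact h2 (by linarith)
      positivity
    have hsum := sumA_aux T
    rw [hzero] at hsum
    obtain ⟨T', hT'⟩ := Multiset.exists_cons_of_mem ha
    rw [hT', Multiset.map_cons, Multiset.sum_cons] at hsum
    have hrest : (0:ℝ) ≤ (T'.map fun s => (s - s^2)^2).sum := by
      apply Multiset.sum_nonneg
      intro x hx
      obtain ⟨s, _, rfl⟩ := Multiset.mem_map.1 hx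
      positivity
    linarith
end

section
/- Let a, b, c ≥ 0 be real numbers and set a_n = a·n² + b·n + c for n ≥ 0. Then b_n = n mod 2 for all n ≥ 0 if and only if one of the following holds: (I) b > a ≥ 0 and b/2 ≤ c < b - a; (II) b > a ≥ 0, c = b - a, and b ≥ 2a; (III) c > max{0, b - a} and either (i) c ≥ (a+b)/2, or (ii) b/2 ≤ c ≤ (3b-a)/4, or (iii) (3b-a)/4 < c < (a+b)/2, 8ac ≥ (a+b)², and for every odd n ≥ 1, the polynomial q_n(x) has exactly one real root (counted with multiplicity) in the open interval (-1, 0). -/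
open Polynomial

/-- The auxiliary polynomial `q_n` satisfying `p_n(x) = q_n(x)/(1-x)^3`, where
`p_n(x) = ∑_{i=0}^n (a i² + b i + c) xⁱ`. -/
noncomputable def qAux (a b c : ℝ) (n : ℕ) : Polynomial ℝ :=
  -C (a * n ^ 2 + b * n + c) * X ^ (n + 3)
    + C (a * (2 * n ^ 2 + 2 * n - 1) + b * (2 * n + 1) + 2 * c) * X ^ (n + 2)
    - C (a * (n + 1) ^ 2 + b * (n + 1) + c) * X ^ (n + 1)
    + C (a - b + c) * X ^ 2 + C (a + b - 2 * c) * X + C c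

namespace Stmt4

noncomputable def Pp (a b c : ℝ) (n : ℕ) : Polynomial ℝ :=
  ∑ i ∈ Finset.range (n + 1), C (a * (i : ℝ) ^ 2 + b * i + c) * X ^ i

/-- limiting quadratic -/
def Rf (a b c : ℝ) (x : ℝ) : ℝ := (a - b + c) * x ^ 2 + (a + b - 2 * c) * x + c

/-- the tail quadratic -/
def Gf (a b c : ℝ) (n : ℕ) (x : ℝ) : ℝ :=
  (a * n ^ 2 + b * n + c) * x ^ 2
    - (a * (2 * n ^ 2 + 2 * n - 1) + b * (2 * n + 1) + 2 * c) * x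
    + (a * (n + 1) ^ 2 + b * (n + 1) + c)

variable {a b c : ℝ}

lemma eval_qAux (n : ℕ) (x : ℝ) :
    (qAux a b c n).eval x = Rf a b c x - x ^ (n + 1) * Gf a b c n x := by
  simp [qAux, Rf, Gf]
  ring

lemma eval_Pp_identity (n : ℕ) (x : ℝ) :
    (1 - x) ^ 3 * (Pp a b c n).eval x = Rf a b c x - x ^ (n + 1) * Gf a b c n x := by
  induction n with
  | zero =>
      simp [Pp, Rf, Gf]
      ring
  | succ n ih =>
      have h : Pp a b c (n+1) = Pp a b c n + C (a * (n+1:ℕ) ^ 2 + b * (n+1:ℕ) + c) * X ^ (n+1) := by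
        rw [Pp, Pp, Finset.sum_range_succ]
      rw [h, eval_add, mul_add, ih, eval_mul, eval_pow, eval_C, eval_X]
      simp only [Rf, Gf]
      push_cast
      ring

lemma qAux_eq (n : ℕ) : (1 - X : ℝ[X]) ^ 3 * Pp a b c n = qAux a b c n := by
  apply Polynomial.funext
  intro x
  rw [eval_mul, eval_pow, eval_sub, eval_one, eval_X, eval_Pp_identity, eval_qAux]

lemma eval_Pp_zero (n : ℕ) : (Pp a b c n).eval 0 = c := by
  induction n with
  | zero => simp [Pp]
  | succ n ih =>
      rw [Pp, Finset.sum_range_succ, ← Pp]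
      simp [ih]

lemma Pp_ne_zero (hc : c ≠ 0) (n : ℕ) : Pp a b c n ≠ 0 := by
  intro h
  apply hc
  have := eval_Pp_zero (a := a) (b := b) (c := c) n
  rw [h] at this
  simpa using this.symm

lemma eval_Pp_nonneg (ha : 0 ≤ a) (hb : 0 ≤ b) (hc : 0 ≤ c) (n : ℕ) {x : ℝ} (hx : 0 ≤ x) :
    c ≤ (Pp a b c n).eval x := by
  induction n with
  | zero => simp [Pp]
  | succ n ih =>
      rw [Pp, Finset.sum_range_succ, ← Pp]
      simp only [eval_add, eval_mul, eval_pow, eval_C, eval_X]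
      have h1 : 0 ≤ (a * (n + 1 : ℕ) ^ 2 + b * (n + 1 : ℕ) + c) := by
        push_cast
        positivity
      have h2 : (0:ℝ) ≤ x ^ (n + 1) := by positivity
      nlinarith


lemma roots_qAux (hc : c ≠ 0) (n : ℕ) :
    (qAux a b c n).roots = 3 • {(1:ℝ)} + (Pp a b c n).roots := by
  have h1 : (1 - X : ℝ[X]) = -(X - C 1) := by ring_nf; rw [Polynomial.C_1]; ring
  have hX : (X - C (1:ℝ)) ≠ 0 := Polynomial.X_sub_C_ne_zero 1
  have h2 : (1 - X : ℝ[X]) ≠ 0 := by rw [h1]; exact neg_ne_zero.2 hX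
  rw [← qAux_eq, Polynomial.roots_mul (mul_ne_zero (pow_ne_zero 3 h2) (Pp_ne_zero hc n)),
    Polynomial.roots_pow]
  congr 1
  rw [h1]
  have : -(X - C (1:ℝ)) = C (-1) * (X - C 1) := by ring_nf; simp
  rw [this, Polynomial.roots_C_mul _ (by norm_num : (-1:ℝ) ≠ 0), Polynomial.roots_X_sub_C]

lemma card_roots_zero {p : ℝ[X]} (h : ∀ x : ℝ, ¬p.IsRoot x) :
    Multiset.card p.roots = 0 := by
  rw [Multiset.card_eq_zero, Multiset.eq_zero_iff_forall_notMem]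
  intro x hx
  exact h x ((Polynomial.mem_roots'.1 hx).2)

lemma card_roots_one {p : ℝ[X]} (hp : p ≠ 0) {ξ : ℝ} (hroot : p.IsRoot ξ)
    (huniq : ∀ y : ℝ, p.IsRoot y → y = ξ) (hder : p.derivative.eval ξ ≠ 0) :
    Multiset.card p.roots = 1 := by
  have hrep : p.roots = Multiset.replicate (Multiset.card p.roots) ξ :=
    Multiset.eq_replicate_card.2 fun y hy => huniq y (Polynomial.mem_roots'.1 hy).2
  have hcount : Multiset.card p.roots = p.rootMultiplicity ξ := by
    rw [← Polynomial.count_roots]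
    conv_rhs => rw [hrep]
    rw [Multiset.count_replicate_self]
  rw [hcount]
  have h1 : 1 ≤ p.rootMultiplicity ξ := (Polynomial.rootMultiplicity_pos hp).2 hroot
  have h2 : p.rootMultiplicity ξ < 2 := by
    by_contra hge
    push_neg at hge
    have hdvd : (X - C ξ) ^ 2 ∣ p :=
      (pow_dvd_pow _ hge).trans (Polynomial.pow_rootMultiplicity_dvd p ξ)
    obtain ⟨g, hg⟩ := hdvd
    apply hder
    rw [hg, derivative_mul, derivative_pow]
    simp
  omega

/-- the "no two roots" argument: if wherever `f ≤ 0` on `[s,t]` the derivative of `q` is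
positive, then `q` cannot vanish at both `s` and `t`. -/
lemma no_two_roots {q : ℝ[X]} {s t : ℝ} (hst : s < t)
    (key : ∀ x : ℝ, s ≤ x → x ≤ t → q.eval x ≤ 0 → 0 < q.derivative.eval x)
    (hs : q.eval s = 0) (ht : q.eval t = 0) : False := by
  set f : ℝ → ℝ := fun x => q.eval x with hf
  -- f t = 0 and f' t > 0, so f < 0 slightly to the left of t
  have hdt : HasDerivAt f (q.derivative.eval t) t := q.hasDerivAt t
  have hpos : 0 < q.derivative.eval t := key t hst.le le_rfl ht.le
  have hslope : Filter.Tendsto (slope f t) (nhdsWithin t {t}ᶜ) (nhds (q.derivative.eval t)) :=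
    hasDerivAt_iff_tendsto_slope.1 hdt
  have hmem : ∀ᶠ y in nhds (q.derivative.eval t), y ∈ Set.Ioi (0:ℝ) :=
    isOpen_Ioi.eventually_mem hpos
  have h1 : ∀ᶠ x in nhdsWithin t (Set.Iio t), 0 < slope f t x :=
    (hslope.eventually hmem).filter_mono
      (nhdsWithin_mono t (fun y hy => ne_of_lt hy))
  have h2 : ∀ᶠ x in nhdsWithin t (Set.Iio t), x ∈ Set.Ioo s t :=
    Filter.eventually_mem_set.2 (Ioo_mem_nhdsLT_of_mem ⟨hst, le_rfl⟩)
  obtain ⟨z₀, hz1, hz2⟩ := (h1.and h2).exists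
  have hz0neg : f z₀ < 0 := by
    have hslope_eq : slope f t z₀ = (f z₀ - f t) / (z₀ - t) := slope_def_field f t z₀
    rw [hslope_eq, hf] at hz1
    simp only [ht, sub_zero] at hz1
    rcases div_pos_iff.1 hz1 with ⟨h, h'⟩ | ⟨h, h'⟩
    · linarith [hz2.2, h']
    · simpa [hf] using h
  -- minimum argument
  have hcont : ContinuousOn f (Set.Icc s t) := (q.continuous_aeval).continuousOn
  obtain ⟨z, hzmem, hzmin⟩ := isCompact_Icc.exists_isMinOn (Set.nonempty_Icc.2 hst.le) hcont
  have hz0mem : z₀ ∈ Set.Icc s t := Set.mem_Icc.2 ⟨hz2.1.le, hz2.2.le⟩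
  have hfz : f z < 0 := lt_of_le_of_lt (hzmin hz0mem) hz0neg
  have hzs : z ≠ s := by intro h; rw [h, hf] at hfz; simp [hs] at hfz
  have hzt : z ≠ t := by intro h; rw [h, hf] at hfz; simp [ht] at hfz
  have hzin : z ∈ Set.Ioo s t :=
    ⟨lt_of_le_of_ne hzmem.1 (Ne.symm hzs), lt_of_le_of_ne hzmem.2 hzt⟩
  have hloc : IsLocalMin f z := hzmin.isLocalMin (Icc_mem_nhds hzin.1 hzin.2)
  have hderiv0 : deriv f z = 0 := hloc.deriv_eq_zero
  have : deriv f z = q.derivative.eval z := Polynomial.deriv q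
  rw [this] at hderiv0
  have := key z hzmem.1 hzmem.2 hfz.le
  rw [hderiv0] at this
  exact lt_irrefl 0 this


lemma Gf_pos (ha : 0 ≤ a) (hb : 0 ≤ b) (hc : 0 < c) {n : ℕ} (hn1 : 1 ≤ n)
    {x : ℝ} (hx : x ≤ 0) : 0 < Gf a b c n x := by
  have hn : (1:ℝ) ≤ (n:ℝ) := by exact_mod_cast hn1
  have h1 : (0:ℝ) ≤ a * (n:ℝ)^2 + b * n + c := by positivity
  have h2 : (0:ℝ) ≤ a * (2*(n:ℝ)^2 + 2*n - 1) + b * (2*n+1) + 2*c := by nlinarith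
  have h3 : (0:ℝ) < a * ((n:ℝ)+1)^2 + b * ((n:ℝ)+1) + c := by positivity
  simp only [Gf]
  push_cast
  nlinarith [sq_nonneg x, mul_nonneg h1 (sq_nonneg x), mul_nonneg h2 (neg_nonneg.2 hx)]

lemma Bn_pos (ha : 0 ≤ a) (hb : 0 ≤ b) (hc : 0 < c) {n : ℕ} (hn1 : 1 ≤ n) :
    0 < a * (2*(n:ℝ)^2 + 2*n - 1) + b * (2*(n:ℝ)+1) + 2*c := by
  have hn : (1:ℝ) ≤ (n:ℝ) := by exact_mod_cast hn1
  nlinarith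

lemma eval_qAux_zero (n : ℕ) : (qAux a b c n).eval 0 = c := by
  rw [eval_qAux]
  simp [Rf]

lemma eval_qAux_neg_one {n : ℕ} (hn : Odd n) :
    (qAux a b c n).eval (-1) = -4*((n:ℝ)+1)*(a*n+b) := by
  rw [eval_qAux]
  have h1 : ((-1:ℝ)) ^ (n+1) = 1 := (hn.add_one).neg_one_pow
  rw [h1]
  simp only [Rf, Gf]
  push_cast
  ring

/-- odd n, x < -1 : qAux is negative -/
lemma qAux_neg_of_lt_neg_one (ha : 0 ≤ a) (hb : 0 ≤ b) (hc : 0 < c) {n : ℕ}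
    (hn : Odd n) (hn1 : 1 ≤ n) {x : ℝ} (hx : x < -1) :
    (qAux a b c n).eval x < 0 := by
  have hn' : (1:ℝ) ≤ (n:ℝ) := by exact_mod_cast hn1
  set y : ℝ := -x with hy
  have hy1 : 1 < y := by simp [hy]; linarith
  have hxy : x = -y := by simp [hy]
  have hxpow : x ^ (n+1) = y ^ (n+1) := by rw [hxy, (hn.add_one).neg_pow]
  have hypow : y ^ 2 ≤ y ^ (n+1) := pow_le_pow_right₀ hy1.le (by omega)
  have hG : 0 < Gf a b c n x := Gf_pos ha hb hc hn1 (by linarith)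
  rw [eval_qAux, hxpow]
  have hstep : y^2 * Gf a b c n x ≤ y^(n+1) * Gf a b c n x :=
    mul_le_mul_of_nonneg_right hypow hG.le
  have habr : 0 ≤ a * ((n:ℝ)^2*y^4 + (2*(n:ℝ)^2+2*n-1)*y^3 + ((n:ℝ)^2+2*n)*y^2 + y) := by
    have : (0:ℝ) ≤ (n:ℝ)^2*y^4 + (2*(n:ℝ)^2+2*n-1)*y^3 + ((n:ℝ)^2+2*n)*y^2 + y := by
      nlinarith [pow_pos (by linarith : (0:ℝ) < y) 3, pow_pos (by linarith : (0:ℝ) < y) 4,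
        sq_nonneg y]
    positivity
  have hbbr : 0 ≤ b * ((n:ℝ)*y^4 + (2*(n:ℝ)+1)*y^3 + ((n:ℝ)+2)*y^2 + y) := by
    have : (0:ℝ) ≤ (n:ℝ)*y^4 + (2*(n:ℝ)+1)*y^3 + ((n:ℝ)+2)*y^2 + y := by
      nlinarith [pow_pos (by linarith : (0:ℝ) < y) 3, pow_pos (by linarith : (0:ℝ) < y) 4,
        sq_nonneg y]
    positivity
  have hcbr : 0 < c * ((y-1)*(y+1)^3) := by
    apply mul_pos hc
    apply mul_pos (by linarith)
    positivity
  have hkey : Rf a b c x - y^2 * Gf a b c n x =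
      -(a * ((n:ℝ)^2*y^4 + (2*(n:ℝ)^2+2*n-1)*y^3 + ((n:ℝ)^2+2*n)*y^2 + y))
      - (b * ((n:ℝ)*y^4 + (2*(n:ℝ)+1)*y^3 + ((n:ℝ)+2)*y^2 + y))
      - c * ((y-1)*(y+1)^3) := by
    simp only [Rf, Gf, hxy]
    push_cast
    ring
  nlinarith [hstep, habr, hbbr, hcbr, hkey]

/-- even n ≥ 2, x ≤ -1 : qAux is positive -/
lemma qAux_pos_of_le_neg_one (ha : 0 ≤ a) (hb : 0 ≤ b) (hc : 0 < c) {n : ℕ}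
    (hn : Even n) (hn1 : 1 ≤ n) {x : ℝ} (hx : x ≤ -1) :
    0 < (qAux a b c n).eval x := by
  have hn' : (1:ℝ) ≤ (n:ℝ) := by exact_mod_cast hn1
  set y : ℝ := -x with hy
  have hy1 : 1 ≤ y := by simp [hy]; linarith
  have hy0 : 0 < y := by linarith
  have hxy : x = -y := by simp [hy]
  have hodd : Odd (n+1) := Even.add_one hn
  have hxpow : x ^ (n+1) = -(y ^ (n+1)) := by rw [hxy, hodd.neg_pow]
  have hypow : y ^ 2 ≤ y ^ (n+1) := pow_le_pow_right₀ hy1 (by omega)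
  have hG : 0 < Gf a b c n x := Gf_pos ha hb hc hn1 (by linarith)
  rw [eval_qAux, hxpow]
  have hstep : y^2 * Gf a b c n x ≤ y^(n+1) * Gf a b c n x :=
    mul_le_mul_of_nonneg_right hypow hG.le
  have habr : 0 ≤ a * ((n:ℝ)^2*y^4 + (2*(n:ℝ)^2+2*n-1)*y^3 + ((n:ℝ)^2+2*n+2)*y^2 - y) := by
    have : (0:ℝ) ≤ (n:ℝ)^2*y^4 + (2*(n:ℝ)^2+2*n-1)*y^3 + ((n:ℝ)^2+2*n+2)*y^2 - y := by
      nlinarith [pow_pos hy0 3, pow_pos hy0 4, sq_nonneg y,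
        pow_le_pow_right₀ hy1 (by norm_num : 1 ≤ 4)]
    positivity
  have hbbr : 0 ≤ b * ((n:ℝ)*y^4 + (2*(n:ℝ)+1)*y^3 + (n:ℝ)*y^2 - y) := by
    have : (0:ℝ) ≤ (n:ℝ)*y^4 + (2*(n:ℝ)+1)*y^3 + (n:ℝ)*y^2 - y := by
      nlinarith [pow_pos hy0 3, pow_pos hy0 4, sq_nonneg y,
        pow_le_pow_right₀ hy1 (by norm_num : 1 ≤ 4)]
    positivity
  have hcbr : 0 < c * (y^4 + 2*y^3 + 2*y^2 + 2*y + 1) := by positivity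
  have hkey : Rf a b c x + y^2 * Gf a b c n x =
      a * ((n:ℝ)^2*y^4 + (2*(n:ℝ)^2+2*n-1)*y^3 + ((n:ℝ)^2+2*n+2)*y^2 - y)
      + b * ((n:ℝ)*y^4 + (2*(n:ℝ)+1)*y^3 + (n:ℝ)*y^2 - y)
      + c * (y^4 + 2*y^3 + 2*y^2 + 2*y + 1) := by
    simp only [Rf, Gf, hxy]
    push_cast
    ring
  nlinarith [hstep, habr, hbbr, hcbr, hkey]

/-- even n, -1 < x < 0, R ≥ 0 : qAux is positive -/
lemma qAux_pos_of_Ioo (ha : 0 ≤ a) (hb : 0 ≤ b) (hc : 0 < c) {n : ℕ}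
    (hn : Even n) (hn1 : 1 ≤ n) {x : ℝ} (hx1 : -1 < x) (hx0 : x < 0)
    (hR : 0 ≤ Rf a b c x) :
    0 < (qAux a b c n).eval x := by
  have hodd : Odd (n+1) := Even.add_one hn
  have hxpow : x ^ (n+1) < 0 := hodd.pow_neg hx0
  have hG : 0 < Gf a b c n x := Gf_pos ha hb hc hn1 hx0.le
  rw [eval_qAux]
  nlinarith [mul_pos (neg_pos.2 hxpow) hG]


lemma eval_derivative_qAux (n : ℕ) (x : ℝ) :
    (qAux a b c n).derivative.eval x =
      (2*(a-b+c)*x + (a+b-2*c)) - ((n:ℝ)+1) * x^n * Gf a b c n x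
        - x^(n+1) * (2*(a*(n:ℝ)^2+b*n+c)*x - (a*(2*(n:ℝ)^2+2*n-1)+b*(2*(n:ℝ)+1)+2*c)) := by
  have h3 : n + 3 - 1 = n + 2 := by omega
  have h2 : n + 2 - 1 = n + 1 := by omega
  have h1 : n + 1 - 1 = n := by omega
  simp only [qAux, derivative_add, derivative_sub, derivative_mul, derivative_neg,
    derivative_C, derivative_X_pow, derivative_X, h1, h2, h3]
  simp only [eval_add, eval_sub, eval_neg, eval_mul, eval_pow, eval_C, eval_X,
    eval_natCast, eval_zero, zero_mul, mul_zero, zero_add, add_zero, mul_one]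
  simp only [Gf]
  push_cast
  ring

/-- the crossing lemma: on [-1,0), if qAux ≤ 0 then its derivative is positive. -/
lemma crossing (ha : 0 ≤ a) (hb : 0 ≤ b) (hc : 0 < c) {n : ℕ}
    (hn : Odd n) (hn1 : 1 ≤ n) {x : ℝ} (hx1 : -1 ≤ x) (hx0 : x < 0)
    (hMx : 0 ≤ (a + b - 2*c) * x + 2*c) (hR : 0 ≤ Rf a b c x)
    (hE : (qAux a b c n).eval x ≤ 0) :
    0 < (qAux a b c n).derivative.eval x := by
  have hn' : (1:ℝ) ≤ (n:ℝ) := by exact_mod_cast hn1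
  have hxne : x ≠ 0 := ne_of_lt hx0
  obtain ⟨k, hk⟩ := hn
  have hspos : 0 < x ^ (n+1) := by
    have he : x ^ (n+1) = (x^(k+1))^2 := by rw [← pow_mul]; congr 1; omega
    rw [he]
    have := pow_ne_zero (k+1) hxne
    positivity
  have hupow : x ^ (n+1) = x ^ n * x := pow_succ x n
  have hG : 0 < Gf a b c n x := Gf_pos ha hb hc hn1 hx0.le
  rw [eval_qAux] at hE
  rw [eval_derivative_qAux]
  have hsG : Rf a b c x ≤ x^(n+1) * Gf a b c n x := by linarith
  have hBn : 0 < a * (2*(n:ℝ)^2 + 2*n - 1) + b * (2*(n:ℝ)+1) + 2*c := Bn_pos ha hb hc hn1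
  have hA : 0 ≤ a * (n:ℝ)^2 + b*n + c := by positivity
  -- quadratic term of the tail derivative
  have hquad : 0 < 2*(a*(n:ℝ)^2+b*n+c)*x^2
      - (a*(2*(n:ℝ)^2+2*n-1)+b*(2*(n:ℝ)+1)+2*c)*x := by
    nlinarith [mul_nonneg hA (sq_nonneg x), mul_pos hBn (neg_pos.2 hx0)]
  have ht1 : 0 < x^(n+1) * (2*(a*(n:ℝ)^2+b*n+c)*x^2
      - (a*(2*(n:ℝ)^2+2*n-1)+b*(2*(n:ℝ)+1)+2*c)*x) := mul_pos hspos hquad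
  have ht2 : 0 ≤ ((n:ℝ)-1) * (x^(n+1) * Gf a b c n x) :=
    mul_nonneg (by linarith) (mul_pos hspos hG).le
  have ht3 : 0 ≤ x^(n+1) * Gf a b c n x - Rf a b c x := by linarith
  -- (-x) * D  =  (Mx+2c) + (n-1)sG + 2(sG - R) + s(2Ax² - Bx)
  have hkey : (-x) * ((2*(a-b+c)*x + (a+b-2*c)) - ((n:ℝ)+1) * x^n * Gf a b c n x
        - x^(n+1) * (2*(a*(n:ℝ)^2+b*n+c)*x - (a*(2*(n:ℝ)^2+2*n-1)+b*(2*(n:ℝ)+1)+2*c)))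
      = ((a + b - 2*c) * x + 2*c) + ((n:ℝ)-1) * (x^(n+1) * Gf a b c n x)
        + 2 * (x^(n+1) * Gf a b c n x - Rf a b c x)
        + x^(n+1) * (2*(a*(n:ℝ)^2+b*n+c)*x^2
            - (a*(2*(n:ℝ)^2+2*n-1)+b*(2*(n:ℝ)+1)+2*c)*x) := by
    rw [hupow]
    simp only [Rf, Gf]
    ring
  have hfinal : 0 < (-x) * ((2*(a-b+c)*x + (a+b-2*c)) - ((n:ℝ)+1) * x^n * Gf a b c n x
        - x^(n+1) * (2*(a*(n:ℝ)^2+b*n+c)*x - (a*(2*(n:ℝ)^2+2*n-1)+b*(2*(n:ℝ)+1)+2*c))) := by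
    rw [hkey]; linarith
  by_contra hcon
  push_neg at hcon
  nlinarith [mul_nonneg (neg_nonneg.2 hcon) (neg_nonneg.2 hx0.le)]


lemma eval_Pp_pos_of_nonneg (ha : 0 ≤ a) (hb : 0 ≤ b) (hc : 0 < c) (n : ℕ)
    {x : ℝ} (hx : 0 ≤ x) : 0 < (Pp a b c n).eval x :=
  lt_of_lt_of_le hc (eval_Pp_nonneg ha hb hc.le n hx)

lemma Pp_eval_eq_zero_iff (n : ℕ) {x : ℝ} (hx : x < 1) :
    (Pp a b c n).eval x = 0 ↔ (qAux a b c n).eval x = 0 := by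
  rw [← qAux_eq, eval_mul, eval_pow, eval_sub, eval_one, eval_X]
  have h : (0:ℝ) < (1 - x) ^ 3 := by
    have h1x : (0:ℝ) < 1 - x := by linarith
    positivity
  constructor
  · intro h'; rw [h']; ring
  · intro h'
    rcases mul_eq_zero.1 h' with h'' | h''
    · exact absurd h'' h.ne'
    · exact h''

/-- even case: no real roots -/
lemma even_case (ha : 0 ≤ a) (hb : 0 ≤ b) (hc : 0 < c)
    (hR : ∀ x : ℝ, -1 < x → x < 0 → 0 ≤ Rf a b c x)
    {n : ℕ} (hn : Even n) : Multiset.card (Pp a b c n).roots = 0 := by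
  apply card_roots_zero
  intro x hroot
  rcases le_or_gt 0 x with hx | hx
  · exact (eval_Pp_pos_of_nonneg ha hb hc n hx).ne' hroot
  · rcases Nat.eq_zero_or_pos n with h0 | hn1
    · subst h0
      have : (Pp a b c 0).eval x = c := by simp [Pp]
      rw [Polynomial.IsRoot] at hroot
      rw [this] at hroot
      exact hc.ne' hroot
    · have hq : (qAux a b c n).eval x = 0 :=
        (Pp_eval_eq_zero_iff n (by linarith)).1 hroot
      rcases le_or_gt x (-1) with hx1 | hx1
      · exact absurd hq (qAux_pos_of_le_neg_one ha hb hc hn hn1 hx1).ne'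
      · exact absurd hq (qAux_pos_of_Ioo ha hb hc hn hn1 hx1 hx (hR x hx1 hx)).ne'

lemma Mx_nonneg (hc : 0 < c) (hM : a + b ≤ 4*c) {x : ℝ} (hx1 : -1 ≤ x) (hx0 : x ≤ 0) :
    0 ≤ (a + b - 2*c) * x + 2*c := by
  rcases le_or_gt 0 (a + b - 2*c) with h | h
  · nlinarith
  · nlinarith

/-- odd case (regions I, II, III(i), III(ii)): exactly one real root -/
lemma odd_case (ha : 0 ≤ a) (hb : 0 ≤ b) (hc : 0 < c) (hM : a + b ≤ 4*c)
    (hR : ∀ x : ℝ, -1 ≤ x → x ≤ 0 → 0 ≤ Rf a b c x)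
    {n : ℕ} (hn : Odd n) (hn1 : 1 ≤ n) : Multiset.card (Pp a b c n).roots = 1 := by
  set q := qAux a b c n with hqdef
  have hq0 : q.eval 0 = c := eval_qAux_zero n
  have hqm1 : q.eval (-1) ≤ 0 := by
    rw [hqdef, eval_qAux_neg_one hn]
    have h1 : (0:ℝ) ≤ (n:ℝ) := Nat.cast_nonneg n
    nlinarith [mul_nonneg ha h1]
  -- key crossing property on [-1, 0)
  have key : ∀ x : ℝ, -1 ≤ x → x < 0 → q.eval x ≤ 0 → 0 < q.derivative.eval x := by
    intro x h1 h0 hE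
    exact crossing ha hb hc hn hn1 h1 h0 (Mx_nonneg hc hM h1 h0.le) (hR x h1 h0.le) hE
  -- existence of a root ξ ∈ [-1, 0)
  obtain ⟨ξ, hξmem, hξroot⟩ : ∃ ξ : ℝ, (-1 ≤ ξ ∧ ξ < 0) ∧ q.eval ξ = 0 := by
    rcases eq_or_lt_of_le hqm1 with h | h
    · exact ⟨-1, ⟨le_refl _, by norm_num⟩, h⟩
    · have hcont : ContinuousOn (fun x => q.eval x) (Set.Icc (-1) 0) :=
        q.continuous_aeval.continuousOn
      have h0mem : (0:ℝ) ∈ Set.Ioo (q.eval (-1)) (q.eval 0) := ⟨h, by rw [hq0]; exact hc⟩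
      obtain ⟨ξ, hξ, hξeq⟩ := intermediate_value_Ioo (by norm_num : (-1:ℝ) ≤ 0) hcont h0mem
      exact ⟨ξ, ⟨hξ.1.le, hξ.2⟩, hξeq⟩
  have hProot : (Pp a b c n).IsRoot ξ :=
    (Pp_eval_eq_zero_iff n (by linarith [hξmem.2])).2 hξroot
  -- uniqueness
  have huniq : ∀ y : ℝ, (Pp a b c n).IsRoot y → y = ξ := by
    intro y hy
    have hy0 : y < 0 := by
      by_contra h
      push_neg at h
      exact (eval_Pp_pos_of_nonneg ha hb hc n h).ne' hy
    have hqy : q.eval y = 0 := (Pp_eval_eq_zero_iff n (by linarith)).1 hy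
    have hy1 : -1 ≤ y := by
      by_contra h
      push_neg at h
      exact absurd hqy (qAux_neg_of_lt_neg_one ha hb hc hn hn1 h).ne
    by_contra hne
    rcases lt_or_gt_of_ne hne with hlt | hlt
    · exact no_two_roots hlt
        (fun x hx1 hx2 hE => key x (by linarith) (by linarith [hξmem.2]) hE) hqy hξroot
    · exact no_two_roots hlt
        (fun x hx1 hx2 hE => key x (by linarith [hξmem.1]) (by linarith) hE) hξroot hqy
  -- simplicity
  have hder : (Pp a b c n).derivative.eval ξ ≠ 0 := by
    have hq' : 0 < q.derivative.eval ξ := key ξ hξmem.1 hξmem.2 hξroot.le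
    have hexp : q.derivative = derivative ((1 - X : ℝ[X]) ^ 3) * Pp a b c n
        + (1 - X : ℝ[X]) ^ 3 * (Pp a b c n).derivative := by
      rw [hqdef, ← qAux_eq, derivative_mul]
    rw [hexp] at hq'
    simp only [eval_add, eval_mul] at hq'
    rw [hProot] at hq'
    intro h
    rw [h] at hq'
    simp at hq'
  exact card_roots_one (Pp_ne_zero hc.ne' n) hProot huniq hder

/-- odd case (region III(iii)) : root count from the qAux hypothesis -/
lemma odd_case_iii (ha : 0 ≤ a) (hb : 0 ≤ b) (hc : 0 < c) (hab : 0 < a + b)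
    {n : ℕ} (hn : Odd n) (hn1 : 1 ≤ n)
    (hcount : Multiset.card ((qAux a b c n).roots.filter
        (fun x : ℝ => -1 < x ∧ x < 0)) = 1) :
    Multiset.card (Pp a b c n).roots = 1 := by
  have hroots : (qAux a b c n).roots = 3 • {(1:ℝ)} + (Pp a b c n).roots :=
    roots_qAux hc.ne' n
  have hloc : ∀ y ∈ (Pp a b c n).roots, -1 < y ∧ y < 0 := by
    intro y hy
    have hyroot : (Pp a b c n).IsRoot y := (Polynomial.mem_roots'.1 hy).2
    have hy0 : y < 0 := by
      by_contra h
      push_neg at h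
      exact (eval_Pp_pos_of_nonneg ha hb hc n h).ne' hyroot
    have hqy : (qAux a b c n).eval y = 0 := (Pp_eval_eq_zero_iff n (by linarith)).1 hyroot
    have hy1 : -1 < y := by
      rcases lt_trichotomy y (-1) with h | h | h
      · exact absurd hqy (qAux_neg_of_lt_neg_one ha hb hc hn hn1 h).ne
      · exfalso
        rw [h, eval_qAux_neg_one hn] at hqy
        have hnb : 0 < a * (n:ℝ) + b := by
          rcases (lt_or_ge 0 a) with h' | h'
          · have : (1:ℝ) ≤ (n:ℝ) := by exact_mod_cast hn1
            nlinarith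
          · have ha0 : a = 0 := le_antisymm h' ha
            rw [ha0] at *
            simpa using by linarith [hab]
        nlinarith [hqy]
      · exact h
    exact ⟨hy1, hy0⟩
  rw [hroots, Multiset.filter_add] at hcount
  have h1 : Multiset.filter (fun x : ℝ => -1 < x ∧ x < 0) (3 • {(1:ℝ)}) = 0 := by
    apply Multiset.filter_eq_nil.2
    intro x hx
    have : x = 1 := by
      have : (3 • ({1} : Multiset ℝ)) = Multiset.replicate 3 1 :=
        Multiset.nsmul_singleton 1 3
      rw [this] at hx
      exact Multiset.eq_of_mem_replicate hx
    rw [this]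
    intro hcon
    linarith [hcon.2]
  have h2 : Multiset.filter (fun x : ℝ => -1 < x ∧ x < 0) (Pp a b c n).roots
      = (Pp a b c n).roots := Multiset.filter_eq_self.2 hloc
  rw [h1, h2] at hcount
  simpa using hcount


/-- uniform backward machine for cases I, II, III(i), III(ii) -/
lemma trivial_of (ha : 0 ≤ a) (hb : 0 ≤ b) (hc : 0 < c) (hM : a + b ≤ 4*c)
    (hR : ∀ x : ℝ, -1 ≤ x → x ≤ 0 → 0 ≤ Rf a b c x) :
    ∀ n : ℕ, Multiset.card (Pp a b c n).roots = n % 2 := by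
  intro n
  rcases Nat.even_or_odd n with hn | hn
  · rw [Nat.even_iff.1 hn]
    exact even_case ha hb hc (fun x h1 h0 => hR x h1.le h0.le) hn
  · rw [Nat.odd_iff.1 hn]
    have hn1 : 1 ≤ n := by rcases hn with ⟨k, hk⟩; omega
    exact odd_case ha hb hc hM hR hn hn1

/-- location of roots of `Pp` for odd n when a+b > 0 and c > 0 -/
lemma Pp_root_mem (ha : 0 ≤ a) (hb : 0 ≤ b) (hc : 0 < c) (hab : 0 < a + b)
    {n : ℕ} (hn : Odd n) (hn1 : 1 ≤ n) {y : ℝ} (hyroot : (Pp a b c n).IsRoot y) :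
    -1 < y ∧ y < 0 := by
  have hy0 : y < 0 := by
    by_contra h
    push_neg at h
    exact (eval_Pp_pos_of_nonneg ha hb hc n h).ne' hyroot
  have hqy : (qAux a b c n).eval y = 0 := (Pp_eval_eq_zero_iff n (by linarith)).1 hyroot
  have hy1 : -1 < y := by
    rcases lt_trichotomy y (-1) with h | h | h
    · exact absurd hqy (qAux_neg_of_lt_neg_one ha hb hc hn hn1 h).ne
    · exfalso
      rw [h, eval_qAux_neg_one hn] at hqy
      have hnb : 0 < a * (n:ℝ) + b := by
        rcases lt_or_ge 0 a with h' | h'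
        · have : (1:ℝ) ≤ (n:ℝ) := by exact_mod_cast hn1
          nlinarith
        · have ha0 : a = 0 := le_antisymm h' ha
          rw [ha0]
          rw [ha0] at hab
          simpa using by linarith
      nlinarith [hqy]
    · exact h
  exact ⟨hy1, hy0⟩

lemma backward_iii (ha : 0 ≤ a) (hb : 0 ≤ b) (hc : 0 < c) (hab : 0 < a + b)
    (hL : 0 < a - b + c) (hD : (a+b)^2 ≤ 8*a*c)
    (hcount : ∀ n : ℕ, 1 ≤ n → Odd n →
      Multiset.card ((qAux a b c n).roots.filter (fun x : ℝ => -1 < x ∧ x < 0)) = 1) :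
    ∀ n : ℕ, Multiset.card (Pp a b c n).roots = n % 2 := by
  have hR : ∀ x : ℝ, 0 ≤ Rf a b c x := by
    intro x
    have key : 4*(a-b+c) * Rf a b c x
        = (2*(a-b+c)*x + (a+b-2*c))^2 + (8*a*c - (a+b)^2) := by
      simp only [Rf]; ring
    nlinarith [sq_nonneg (2*(a-b+c)*x + (a+b-2*c))]
  intro n
  rcases Nat.even_or_odd n with hn | hn
  · rw [Nat.even_iff.1 hn]
    exact even_case ha hb hc (fun x h1 h0 => hR x) hn
  · rw [Nat.odd_iff.1 hn]
    have hn1 : 1 ≤ n := by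
      rcases hn with ⟨k, hk⟩; omega
    exact odd_case_iii ha hb hc hab hn hn1 (hcount n hn1 hn)

/-- even-index contradiction from a point where R is negative -/
lemma even_contra (ha : 0 ≤ a) (hb : 0 ≤ b) (hc : 0 < c) {x₀ : ℝ}
    (hx1 : -1 < x₀) (hx0 : x₀ < 0) (hRneg : Rf a b c x₀ < 0)
    (H : ∀ n : ℕ, Multiset.card (Pp a b c n).roots = n % 2) : False := by
  have habs : |x₀| < 1 := abs_lt.2 ⟨hx1, by linarith⟩
  -- the tail tends to 0
  have htail : Filter.Tendsto (fun n : ℕ => x₀^(n+1) * Gf a b c n x₀)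
      Filter.atTop (nhds 0) := by
    have h2 := tendsto_pow_const_mul_const_pow_of_abs_lt_one 2 habs
    have h1 := tendsto_pow_const_mul_const_pow_of_abs_lt_one 1 habs
    have h0 := tendsto_pow_const_mul_const_pow_of_abs_lt_one 0 habs
    have hcomb := ((h2.const_mul (x₀*(a*x₀^2 - 2*a*x₀ + a))).add
      ((h1.const_mul (x₀*(b*x₀^2 - 2*a*x₀ - 2*b*x₀ + 2*a + b))).add
        (h0.const_mul (x₀*(c*x₀^2 + a*x₀ - b*x₀ - 2*c*x₀ + a + b + c)))))
    simp only [mul_zero, add_zero] at hcomb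
    convert hcomb using 2 with n
    simp only [Gf]
    push_cast
    ring
  have hev : Filter.Tendsto (fun n : ℕ => (qAux a b c n).eval x₀)
      Filter.atTop (nhds (Rf a b c x₀)) := by
    have := (tendsto_const_nhds (x := Rf a b c x₀) (f := Filter.atTop (α := ℕ))).sub htail
    simp only [sub_zero] at this
    convert this using 2 with n
    rw [eval_qAux]
  have hevent : ∀ᶠ n : ℕ in Filter.atTop, (qAux a b c n).eval x₀ < 0 :=
    hev.eventually (isOpen_Iio.eventually_mem hRneg)
  obtain ⟨N, hN⟩ := Filter.eventually_atTop.1 hevent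
  set n := 2*N + 2 with hndef
  have hqneg : (qAux a b c n).eval x₀ < 0 := hN n (by omega)
  have hPneg : (Pp a b c n).eval x₀ < 0 := by
    have hid := eval_Pp_identity (a := a) (b := b) (c := c) n x₀
    rw [← eval_qAux] at hid
    have h1x : (0:ℝ) < (1 - x₀)^3 := by
      have : (0:ℝ) < 1 - x₀ := by linarith
      positivity
    nlinarith [hid, hqneg]
  -- but Pp has no roots for even n, contradiction via IVT
  have hcard : Multiset.card (Pp a b c n).roots = 0 := by
    rw [H n, hndef]
    omega
  have hP0 : 0 < (Pp a b c n).eval 0 := by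
    rw [eval_Pp_zero]; exact hc
  have hcont : ContinuousOn (fun x => (Pp a b c n).eval x) (Set.Icc x₀ 0) :=
    (Pp a b c n).continuous_aeval.continuousOn
  have h0mem : (0:ℝ) ∈ Set.Ioo ((Pp a b c n).eval x₀) ((Pp a b c n).eval 0) :=
    ⟨hPneg, hP0⟩
  obtain ⟨z, hz, hzeq⟩ := intermediate_value_Ioo hx0.le hcont h0mem
  have hzroot : z ∈ (Pp a b c n).roots :=
    Polynomial.mem_roots'.2 ⟨Pp_ne_zero hc.ne' n, hzeq⟩
  rw [Multiset.card_eq_zero] at hcard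
  rw [hcard] at hzroot
  simp at hzroot


lemma R_nonneg_L_nonpos (hc : 0 ≤ c) (hL : a - b + c ≤ 0) (h2c : b ≤ 2*c) :
    ∀ x : ℝ, -1 ≤ x → x ≤ 0 → 0 ≤ Rf a b c x := by
  intro x h1 h0
  have hid : Rf a b c x = (1+x)*c + (-x)*(4*c-2*b) + (a-b+c)*(x*(x+1)) := by
    simp only [Rf]; ring
  have t1 : 0 ≤ (1+x)*c := mul_nonneg (by linarith) hc
  have t2 : 0 ≤ (-x)*(4*c-2*b) := mul_nonneg (by linarith) (by linarith)
  have t3 : 0 ≤ (-(a-b+c))*((-x)*(x+1)) :=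
    mul_nonneg (by linarith) (mul_nonneg (by linarith) (by linarith))
  nlinarith [t1, t2, t3]

lemma R_nonneg_i (hc : 0 ≤ c) (hL : 0 ≤ a - b + c) (hM : a + b - 2*c ≤ 0) :
    ∀ x : ℝ, -1 ≤ x → x ≤ 0 → 0 ≤ Rf a b c x := by
  intro x h1 h0
  have t1 : 0 ≤ (a-b+c)*x^2 := mul_nonneg hL (sq_nonneg x)
  have t2 : 0 ≤ (-(a+b-2*c))*(-x) := mul_nonneg (by linarith) (by linarith)
  simp only [Rf]
  nlinarith [t1, t2]

lemma R_nonneg_ii (hc : 0 ≤ c) (hL : 0 ≤ a - b + c) (h2c : b ≤ 2*c)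
    (hii : 4*c ≤ 3*b - a) :
    ∀ x : ℝ, -1 ≤ x → x ≤ 0 → 0 ≤ Rf a b c x := by
  intro x h1 h0
  have hid : Rf a b c x = (4*c-2*b) + ((3*b-a)-4*c)*(x+1) + (a-b+c)*(x+1)^2 := by
    simp only [Rf]; ring
  have t1 : 0 ≤ ((3*b-a)-4*c)*(x+1) := mul_nonneg (by linarith) (by linarith)
  have t2 : 0 ≤ (a-b+c)*(x+1)^2 := mul_nonneg hL (sq_nonneg _)
  nlinarith [t1, t2]

lemma filter_ones :
    Multiset.filter (fun x : ℝ => -1 < x ∧ x < 0) (3 • {(1:ℝ)}) = 0 := by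
  apply Multiset.filter_eq_nil.2
  intro x hx
  have hx1 : x = 1 := by
    rw [Multiset.nsmul_singleton] at hx
    exact Multiset.eq_of_mem_replicate hx
  rw [hx1]
  intro hcon
  linarith [hcon.2]

lemma forward (ha : 0 ≤ a) (hb : 0 ≤ b) (hc : 0 ≤ c)
    (H : ∀ n : ℕ, Multiset.card (Pp a b c n).roots = n % 2) :
    ((b > a ∧ b / 2 ≤ c ∧ c < b - a) ∨
     (b > a ∧ c = b - a ∧ b ≥ 2 * a) ∨
     (c > max 0 (b - a) ∧
       (c ≥ (a + b) / 2 ∨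
        (b / 2 ≤ c ∧ c ≤ (3 * b - a) / 4) ∨
        ((3 * b - a) / 4 < c ∧ c < (a + b) / 2 ∧ 8 * a * c ≥ (a + b) ^ 2 ∧
          ∀ n : ℕ, 1 ≤ n → Odd n →
            Multiset.card ((qAux a b c n).roots.filter
              (fun x : ℝ => -1 < x ∧ x < 0)) = 1)))) := by
  -- c must be positive
  have hc0 : 0 < c := by
    rcases eq_or_lt_of_le hc with h | h
    swap
    · exact h
    exfalso
    rcases eq_or_lt_of_le (add_nonneg ha hb) with hab | hab
    · -- a = b = c = 0, contradiction at n = 1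
      have ha0 : a = 0 := by linarith
      have hb0 : b = 0 := by linarith
      have hP1 : Pp a b c 1 = 0 := by
        simp [Pp, Finset.sum_range_succ, ha0, hb0, ← h]
      have := H 1
      rw [hP1] at this
      simp at this
    · -- c = 0, a + b > 0 : zero is a root of P₂ but b₂ = 0
      have hcard := H 2
      have hne : Pp a b c 2 ≠ 0 := by
        intro hP
        have heval : (Pp a b c 2).eval 1 = 5*a + 3*b + 3*c := by
          simp [Pp, Finset.sum_range_succ]
          ring
        rw [hP] at heval
        simp at heval
        linarith
      have hroot : (0:ℝ) ∈ (Pp a b c 2).roots := by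
        apply Polynomial.mem_roots'.2
        refine ⟨hne, ?_⟩
        rw [Polynomial.IsRoot, eval_Pp_zero, ← h]
      rw [show (2:ℕ) % 2 = 0 by norm_num, Multiset.card_eq_zero] at hcard
      rw [hcard] at hroot
      simp at hroot
  -- b ≤ 2c
  have h2cb : b ≤ 2 * c := by
    by_contra hcon
    push_neg at hcon
    have hRm1 : Rf a b c (-1) < 0 := by
      simp only [Rf]
      nlinarith
    have hcont : Continuous (Rf a b c) := by
      show Continuous fun x : ℝ => (a - b + c) * x ^ 2 + (a + b - 2 * c) * x + c
      fun_prop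
    have hev : ∀ᶠ x in nhds (-1:ℝ), Rf a b c x < 0 :=
      hcont.continuousAt.eventually (isOpen_Iio.eventually_mem hRm1)
    have hev' : ∀ᶠ x in nhdsWithin (-1:ℝ) (Set.Ioi (-1)), Rf a b c x < 0 :=
      hev.filter_mono nhdsWithin_le_nhds
    have hmem : Set.Ioo (-1:ℝ) 0 ∈ nhdsWithin (-1:ℝ) (Set.Ioi (-1)) :=
      Ioo_mem_nhdsGT_of_mem ⟨le_refl _, by norm_num⟩
    obtain ⟨x₀, hx₀R, hx₀mem⟩ := (hev'.and (Filter.eventually_mem_set.2 hmem)).exists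
    exact even_contra ha hb hc0 hx₀mem.1 hx₀mem.2 hx₀R H
  rcases lt_trichotomy (a - b + c) 0 with hL | hL | hL
  · exact Or.inl ⟨by linarith, by linarith, by linarith⟩
  · exact Or.inr (Or.inl ⟨by linarith, by linarith, by linarith⟩)
  · refine Or.inr (Or.inr ⟨max_lt_iff.2 ⟨hc0, by linarith⟩, ?_⟩)
    by_cases hi : (a+b)/2 ≤ c
    · exact Or.inl hi
    push_neg at hi
    by_cases hii : c ≤ (3*b - a)/4
    · exact Or.inr (Or.inl ⟨by linarith, hii⟩)
    push_neg at hii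
    have hM : 0 < a + b - 2*c := by linarith
    have hab : 0 < a + b := by linarith
    refine Or.inr (Or.inr ⟨hii, hi, ?_, ?_⟩)
    · -- 8ac ≥ (a+b)²
      by_contra hD
      push_neg at hD
      set x₀ : ℝ := -((a + b - 2*c)/(2*(a - b + c))) with hx₀def
      have h2L : 0 < 2*(a - b + c) := by linarith
      have hx₀0 : x₀ < 0 := by
        rw [hx₀def, neg_lt, neg_zero]
        exact div_pos hM h2L
      have hx₀1 : -1 < x₀ := by
        rw [hx₀def, neg_lt, neg_neg]
        rw [div_lt_one h2L]
        linarith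
      have hRneg : Rf a b c x₀ < 0 := by
        have hid : Rf a b c x₀ = (4*(a-b+c)*c - (a+b-2*c)^2)/(4*(a-b+c)) := by
          rw [hx₀def]
          simp only [Rf]
          field_simp
          ring
        rw [hid]
        apply div_neg_of_neg_of_pos
        · nlinarith
        · linarith
      exact even_contra ha hb hc0 hx₀1 hx₀0 hRneg H
    · -- the root count condition
      intro n hn1 hnodd
      have hcard : Multiset.card (Pp a b c n).roots = 1 := by
        rw [H n, Nat.odd_iff.1 hnodd]
      obtain ⟨ξ, hξ⟩ := Multiset.card_eq_one.1 hcard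
      have hξroot : (Pp a b c n).IsRoot ξ := by
        have : ξ ∈ (Pp a b c n).roots := by rw [hξ]; exact Multiset.mem_singleton_self ξ
        exact (Polynomial.mem_roots'.1 this).2
      have hloc := Pp_root_mem ha hb hc0 hab hnodd hn1 hξroot
      rw [roots_qAux hc0.ne' n, Multiset.filter_add, filter_ones, hξ,
        Multiset.filter_singleton, if_pos hloc]
      simp

end Stmt4

theorem stmt_4 (a b c : ℝ) (ha : 0 ≤ a) (hb : 0 ≤ b) (hc : 0 ≤ c) :
    (∀ n : ℕ, Multiset.card
        ((∑ i ∈ Finset.range (n + 1),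
          C (a * (i : ℝ) ^ 2 + b * i + c) * X ^ i : Polynomial ℝ).roots) = n % 2)
    ↔
    ((b > a ∧ b / 2 ≤ c ∧ c < b - a) ∨
     (b > a ∧ c = b - a ∧ b ≥ 2 * a) ∨
     (c > max 0 (b - a) ∧
       (c ≥ (a + b) / 2 ∨
        (b / 2 ≤ c ∧ c ≤ (3 * b - a) / 4) ∨
        ((3 * b - a) / 4 < c ∧ c < (a + b) / 2 ∧ 8 * a * c ≥ (a + b) ^ 2 ∧
          ∀ n : ℕ, 1 ≤ n → Odd n →
            Multiset.card ((qAux a b c n).roots.filter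
              (fun x : ℝ => -1 < x ∧ x < 0)) = 1)))) := by
  constructor
  · intro H
    exact Stmt4.forward ha hb hc H
  · intro hR n
    show Multiset.card (Stmt4.Pp a b c n).roots = n % 2
    rcases hR with ⟨h1, h2, h3⟩ | ⟨h1, h2, h3⟩ | ⟨h0, hsub⟩
    · exact Stmt4.trivial_of ha hb (by linarith) (by linarith)
        (Stmt4.R_nonneg_L_nonpos hc (by linarith) (by linarith)) n
    · exact Stmt4.trivial_of ha hb (by linarith) (by linarith)
        (Stmt4.R_nonneg_L_nonpos hc (by linarith) (by linarith)) n
    · have hc0 : 0 < c := lt_of_le_of_lt (le_max_left 0 (b-a)) h0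
      have hL : b - a < c := lt_of_le_of_lt (le_max_right 0 (b-a)) h0
      rcases hsub with hi | ⟨hii1, hii2⟩ | ⟨h3b, hhalf, hD, hcount⟩
      · exact Stmt4.trivial_of ha hb hc0 (by linarith)
          (Stmt4.R_nonneg_i hc (by linarith) (by linarith)) n
      · exact Stmt4.trivial_of ha hb hc0 (by linarith)
          (Stmt4.R_nonneg_ii hc (by linarith) (by linarith) (by linarith)) n
      · exact Stmt4.backward_iii ha hb hc0 (by linarith) (by linarith)
          (by linarith) hcount n
end

section
/- Suppose (a_n) is a sequence of positive real numbers satisfying a_{n+1}/a_n = (a·n + b)/(c·n + d) for all n ≥ 0, where a, b, c, d ≥ 0 are real numbers with c ≤ d, such that a and b are not both zero and c and d are not both zero. Then b_n = n mod 2 for all n ≥ 0, i.e., for every n the polynomial p_n(x) = a_0 + a_1 x + ... + a_n x^n has exactly n mod 2 real roots counted with multiplicity. -/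
open Polynomial Finset

private lemma aux_key (a b c d : ℝ) (s : ℕ → ℝ)
    (hrec : ∀ i : ℕ, (c * i + d) * s (i + 1) = (a * i + b) * s i) (n : ℕ) :
    (C c * X - C a * X ^ 2) * derivative (∑ i ∈ range (n + 1), C (s i) * X ^ i)
      + (C (d-c) - C b * X) * (∑ i ∈ range (n + 1), C (s i) * X ^ i)
      = C ((d-c) * s 0) - C ((a * n + b) * s n) * X ^ (n + 1) := by
  induction n with
  | zero =>
      simp only [Finset.sum_range_one, pow_zero, mul_one, Nat.cast_zero, mul_zero, zero_add]
      simp only [derivative_C, mul_zero, zero_add, map_mul]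
      ring
  | succ n ih =>
      have h1 := congrArg C (hrec n)
      simp only [map_mul, map_add, map_sub, map_natCast, map_one] at h1
      rw [Finset.sum_range_succ, derivative_add, derivative_C_mul_X_pow]
      push_cast
      push_cast at ih
      simp only [map_mul, map_add, map_sub, map_natCast, map_one]
      simp only [map_mul, map_add, map_sub, map_natCast, map_one] at ih
      linear_combination ih + (X:ℝ[X])^(n+1) * h1

private lemma aux_keyev (a b c d : ℝ) (s : ℕ → ℝ)
    (hrec : ∀ i : ℕ, (c * i + d) * s (i + 1) = (a * i + b) * s i) (n : ℕ) (x : ℝ) :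
    (c * x - a * x ^ 2) * eval x (derivative (∑ i ∈ range (n + 1), C (s i) * X ^ i))
      + ((d - c) - b * x) * eval x (∑ i ∈ range (n + 1), C (s i) * X ^ i)
      = (d - c) * s 0 - ((a * n + b) * s n) * x ^ (n + 1) := by
  have h := congrArg (eval x) (aux_key a b c d s hrec n)
  simp only [eval_add, eval_sub, eval_mul, eval_C, eval_X, eval_pow] at h
  linarith

private lemma aux_keyd (a b c d : ℝ) (s : ℕ → ℝ)
    (hrec : ∀ i : ℕ, (c * i + d) * s (i + 1) = (a * i + b) * s i) (n : ℕ) (y : ℝ) :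
    (c * y - a * y ^ 2) * eval y (derivative (derivative (∑ i ∈ range (n + 1), C (s i) * X ^ i)))
      + ((c - 2 * a * y) + ((d - c) - b * y)) *
          eval y (derivative (∑ i ∈ range (n + 1), C (s i) * X ^ i))
      - b * eval y (∑ i ∈ range (n + 1), C (s i) * X ^ i)
      = -((a * n + b) * s n) * ((n : ℝ) + 1) * y ^ n := by
  have h := congrArg (fun q => eval y (derivative q)) (aux_key a b c d s hrec n)
  simp only [derivative_add, derivative_sub, derivative_mul, derivative_C, derivative_X,
    derivative_X_pow, derivative_C_mul_X_pow, derivative_one, eval_add, eval_sub, eval_mul,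
    eval_C, eval_X, eval_pow, eval_natCast, zero_mul, mul_zero, zero_add, add_zero, mul_one,
    one_mul, zero_sub, sub_zero, eval_zero, eval_neg, pow_one] at h
  push_cast at h
  linear_combination h

private lemma ivt_root {q : ℝ[X]} {u v : ℝ} (huv : u ≤ v) (h1 : eval u q < 0)
    (h2 : 0 < eval v q) : ∃ w, u < w ∧ w < v ∧ eval w q = 0 := by
  obtain ⟨w, hw, hw0⟩ := intermediate_value_Ioo huv
    ((q.continuous).continuousOn) (Set.mem_Ioo.mpr ⟨h1, h2⟩)
  exact ⟨w, hw.1, hw.2, hw0⟩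

private lemma ivt_root' {q : ℝ[X]} {u v : ℝ} (huv : u ≤ v) (h1 : 0 < eval u q)
    (h2 : eval v q < 0) : ∃ w, u < w ∧ w < v ∧ eval w q = 0 := by
  obtain ⟨w, hw, hw0⟩ := intermediate_value_Ioo' huv
    ((q.continuous).continuousOn) (Set.mem_Ioo.mpr ⟨h2, h1⟩)
  exact ⟨w, hw.1, hw.2, hw0⟩

set_option maxHeartbeats 1000000 in
theorem stmt_5 (a b c d : ℝ) (ha : 0 ≤ a) (hb : 0 ≤ b) (hc : 0 ≤ c) (hd : 0 ≤ d)
    (hcd : c ≤ d) (hab0 : ¬(a = 0 ∧ b = 0)) (hcd0 : ¬(c = 0 ∧ d = 0))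
    (s : ℕ → ℝ) (hpos : ∀ n, 0 < s n)
    (hratio : ∀ n : ℕ, s (n + 1) / s n = (a * n + b) / (c * n + d)) :
    ∀ n : ℕ, Multiset.card
      ((∑ i ∈ Finset.range (n + 1), C (s i) * X ^ i : Polynomial ℝ).roots) = n % 2 := by
  -- d > 0
  have hd0 : 0 < d := by
    rcases lt_or_eq_of_le hd with h | h
    · exact h
    · exact absurd ⟨le_antisymm (h ▸ hcd) hc, h.symm⟩ hcd0
  -- b > 0
  have hb0 : 0 < b := by
    have h := hratio 0
    have h2 : 0 < s 1 / s 0 := div_pos (hpos 1) (hpos 0)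
    rw [h] at h2
    simp only [Nat.cast_zero, mul_zero, zero_add] at h2
    have h3 : 0 < (b / d) * d := mul_pos h2 hd0
    rwa [div_mul_cancel₀ _ (ne_of_gt hd0)] at h3
  have hrec : ∀ i : ℕ, (c * i + d) * s (i + 1) = (a * i + b) * s i := by
    intro i
    have hcd' : (0:ℝ) < c * i + d := by positivity
    have h := hratio i
    rw [div_eq_div_iff (ne_of_gt (hpos i)) (ne_of_gt hcd')] at h
    linarith
  intro n
  set p : ℝ[X] := ∑ i ∈ Finset.range (n + 1), C (s i) * X ^ i with hp
  have heval : ∀ x : ℝ, eval x p = ∑ i ∈ Finset.range (n + 1), s i * x ^ i := by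
    intro x; rw [hp]; simp [eval_finset_sum]
  have hp0 : eval 0 p = s 0 := by
    rw [heval, Finset.sum_eq_single 0]
    · simp
    · intro i _ hi; simp [pow_eq_zero_iff, hi]
    · simp
  have hpne : p ≠ 0 := by
    intro h
    rw [h] at hp0
    simp at hp0
    linarith [hpos 0, hp0]
  have hposx : ∀ x : ℝ, 0 ≤ x → 0 < eval x p := by
    intro x hx
    rw [heval]
    apply Finset.sum_pos'
    · intro i _; exact mul_nonneg (hpos i).le (pow_nonneg hx i)
    · exact ⟨0, Finset.mem_range.mpr (Nat.succ_pos n), by simpa using hpos 0⟩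
  have hrootneg : ∀ y : ℝ, eval y p = 0 → y < 0 := by
    intro y hy
    by_contra hy'
    push_neg at hy'
    linarith [hposx y hy']
  set En : ℝ := (a * n + b) * s n with hEn
  have hEpos : 0 < En := by
    have : (0:ℝ) ≤ a * n := by positivity
    exact mul_pos (by linarith) (hpos n)
  have hsign : ∀ y : ℝ, eval y p = 0 →
      (c * y - a * y ^ 2) * eval y (derivative p) = (d - c) * s 0 - En * y ^ (n + 1) := by
    intro y hy
    have h := aux_keyev a b c d s hrec n y
    rw [← hp] at h
    rw [hy] at h
    rw [hEn]
    linarith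
  have hDle : ∀ y : ℝ, y < 0 → c * y - a * y ^ 2 ≤ 0 := by
    intro y hy
    have h1 : c * y ≤ 0 := mul_nonpos_of_nonneg_of_nonpos hc hy.le
    nlinarith [mul_nonneg ha (sq_nonneg y)]
  have he0 : 0 ≤ (d - c) * s 0 := mul_nonneg (by linarith) (hpos 0).le
  rcases Nat.even_or_odd n with he | ho
  · -- EVEN case: no roots
    rw [Nat.even_iff.mp he]
    rw [Multiset.card_eq_zero]
    by_contra hne
    have hFne : p.roots.toFinset.Nonempty := Multiset.toFinset_nonempty.mpr hne
    set xR := p.roots.toFinset.max' hFne with hxR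
    have hxRroot : eval xR p = 0 :=
      (mem_roots'.mp (Multiset.mem_toFinset.mp (p.roots.toFinset.max'_mem hFne))).2
    have hxRneg : xR < 0 := hrootneg xR hxRroot
    have hmax : ∀ y : ℝ, eval y p = 0 → y ≤ xR := fun y hy =>
      p.roots.toFinset.le_max' y (Multiset.mem_toFinset.mpr (mem_roots'.mpr ⟨hpne, hy⟩))
    have hIoc : ∀ z : ℝ, xR < z → z ≤ 0 → 0 < eval z p := by
      intro z h1 h2
      rcases lt_trichotomy (eval z p) 0 with hlt | heq | hgt
      · have hz0 : z ≠ 0 := by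
          intro h; rw [h, hp0] at hlt; linarith [hpos 0]
        obtain ⟨w, hw1, hw2, hw0⟩ := ivt_root (lt_of_le_of_ne h2 hz0).le hlt
          (by rw [hp0]; exact hpos 0)
        linarith [hmax w hw0]
      · exact absurd (hmax z heq) (not_le.mpr h1)
      · exact hgt
    obtain ⟨g, hg⟩ := dvd_iff_isRoot.mpr (hxRroot : IsRoot p xR)
    have hgz : ∀ z : ℝ, eval z p = (z - xR) * eval z g := by
      intro z; rw [hg]; simp
    have hghalf : 0 < eval (xR / 2) g := by
      have h1 : 0 < eval (xR / 2) p := hIoc _ (by linarith) (by linarith)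
      rw [hgz] at h1
      nlinarith
    have hgxR : 0 ≤ eval xR g := by
      by_contra hlt
      push_neg at hlt
      obtain ⟨w, hw1, hw2, hw0⟩ := ivt_root (show xR ≤ xR / 2 by linarith) hlt hghalf
      have hpw : eval w p = 0 := by rw [hgz, hw0, mul_zero]
      linarith [hmax w hpw]
    have hderiv : eval xR (derivative p) = eval xR g := by
      rw [hg]; simp [derivative_mul]
    have hs := hsign xR hxRroot
    have hoddp : xR ^ (n + 1) < 0 := Odd.pow_neg he.add_one hxRneg
    have h1 : (c * xR - a * xR ^ 2) * eval xR (derivative p) ≤ 0 :=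
      mul_nonpos_of_nonpos_of_nonneg (hDle xR hxRneg) (hderiv ▸ hgxR)
    nlinarith [mul_pos hEpos (neg_pos.mpr hoddp)]
  · -- ODD case: exactly one root
    have hne : p.roots ≠ 0 := by
      -- there is a point where p is negative, then IVT
      have hn1 : 1 ≤ n := by have := Nat.odd_iff.mp ho; omega
      have hnegpt : ∃ z : ℝ, z < 0 ∧ eval z p < 0 := by
        set T : ℝ := ∑ i ∈ Finset.range (n + 1), s i with hT
        have hTpos : 0 < T :=
          Finset.sum_pos (fun i _ => hpos i) (Finset.nonempty_range_iff.mpr (Nat.succ_ne_zero n))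
        have hsn := hpos n
        set M : ℝ := max 1 (T / s n + 1) with hM
        have hM1 : (1:ℝ) ≤ M := le_max_left _ _
        have hM0 : (0:ℝ) < M := lt_of_lt_of_le one_pos hM1
        have hMT : T / s n < M := lt_of_lt_of_le (lt_add_one _) (le_max_right _ _)
        have hMT' : T < s n * M := by
          rw [div_lt_iff₀ hsn] at hMT; linarith
        refine ⟨-M, by linarith, ?_⟩
        rw [heval, Finset.sum_range_succ]
        have hbound : ∑ i ∈ Finset.range n, s i * (-M) ^ i ≤ T * M ^ (n - 1) := by
          calc ∑ i ∈ Finset.range n, s i * (-M) ^ i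
              ≤ ∑ i ∈ Finset.range n, s i * M ^ (n - 1) := by
                apply Finset.sum_le_sum
                intro i hi
                have hin : i < n := Finset.mem_range.mp hi
                have h1 : (-M) ^ i ≤ M ^ i := by
                  calc (-M) ^ i ≤ |(-M) ^ i| := le_abs_self _
                    _ = M ^ i := by rw [abs_pow, abs_neg, abs_of_pos hM0]
                have h2 : M ^ i ≤ M ^ (n - 1) :=
                  pow_le_pow_right₀ hM1 (by omega : i ≤ n - 1)
                exact mul_le_mul_of_nonneg_left (h1.trans h2) (hpos i).le
            _ = (∑ i ∈ Finset.range n, s i) * M ^ (n - 1) := by rw [← Finset.sum_mul]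
            _ ≤ T * M ^ (n - 1) := by
                apply mul_le_mul_of_nonneg_right _ (pow_nonneg hM0.le _)
                rw [hT, Finset.sum_range_succ]
                linarith [hpos n]
        have hsn' : s n * (-M) ^ n = -(s n * M ^ n) := by
          rw [Odd.neg_pow ho]; ring
        have hnn : M ^ n = M ^ (n - 1) * M := by
          rw [← pow_succ]; congr 1; omega
        have hfin : T * M ^ (n - 1) - s n * M ^ n < 0 := by
          rw [hnn]
          have := pow_pos hM0 (n - 1)
          nlinarith
        linarith [hbound, hsn', hfin]
      obtain ⟨z, hz0, hzneg⟩ := hnegpt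
      obtain ⟨w, _, hw2, hw0⟩ := ivt_root hz0.le hzneg (by rw [hp0]; exact hpos 0)
      intro h
      have hw : w ∈ p.roots := mem_roots'.mpr ⟨hpne, hw0⟩
      rw [h] at hw
      simp at hw
    have hFne : p.roots.toFinset.Nonempty := Multiset.toFinset_nonempty.mpr hne
    set xR := p.roots.toFinset.max' hFne with hxR
    have hxRroot : eval xR p = 0 :=
      (mem_roots'.mp (Multiset.mem_toFinset.mp (p.roots.toFinset.max'_mem hFne))).2
    have hxRneg : xR < 0 := hrootneg xR hxRroot
    have hmax : ∀ y : ℝ, eval y p = 0 → y ≤ xR := fun y hy =>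
      p.roots.toFinset.le_max' y (Multiset.mem_toFinset.mpr (mem_roots'.mpr ⟨hpne, hy⟩))
    have hIoc : ∀ z : ℝ, xR < z → z ≤ 0 → 0 < eval z p := by
      intro z h1 h2
      rcases lt_trichotomy (eval z p) 0 with hlt | heq | hgt
      · have hz0 : z ≠ 0 := by
          intro h; rw [h, hp0] at hlt; linarith [hpos 0]
        obtain ⟨w, hw1, hw2, hw0⟩ := ivt_root (lt_of_le_of_ne h2 hz0).le hlt
          (by rw [hp0]; exact hpos 0)
        linarith [hmax w hw0]
      · exact absurd (hmax z heq) (not_le.mpr h1)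
      · exact hgt
    obtain ⟨g, hg⟩ := dvd_iff_isRoot.mpr (hxRroot : IsRoot p xR)
    have hgz : ∀ z : ℝ, eval z p = (z - xR) * eval z g := by
      intro z; rw [hg]; simp
    have hghalf : 0 < eval (xR / 2) g := by
      have h1 : 0 < eval (xR / 2) p := hIoc _ (by linarith) (by linarith)
      rw [hgz] at h1
      nlinarith
    have hgxR : 0 ≤ eval xR g := by
      by_contra hlt
      push_neg at hlt
      obtain ⟨w, hw1, hw2, hw0⟩ := ivt_root (show xR ≤ xR / 2 by linarith) hlt hghalf
      have hpw : eval w p = 0 := by rw [hgz, hw0, mul_zero]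
      linarith [hmax w hpw]
    have hderiv : eval xR (derivative p) = eval xR g := by
      rw [hg]; simp [derivative_mul]
    have hxRn : xR ^ n < 0 := Odd.pow_neg ho hxRneg
    -- derivative at xR is positive
    have hp'xRpos : 0 < eval xR (derivative p) := by
      rcases eq_or_lt_of_le (hDle xR hxRneg) with hD0 | hDlt
      · -- degenerate: a = 0 and c = 0
        have hcx : c * xR ≤ 0 := mul_nonpos_of_nonneg_of_nonpos hc hxRneg.le
        have hax : 0 ≤ a * xR ^ 2 := mul_nonneg ha (sq_nonneg xR)
        have hceq : c * xR = 0 := by linarith only [hcx, hax, hD0]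
        have haeq : a * xR ^ 2 = 0 := by linarith only [hcx, hax, hD0]
        have hc0 : c = 0 := by
          rcases mul_eq_zero.mp hceq with h | h
          · exact h
          · exact absurd h hxRneg.ne
        have ha0 : a = 0 := by
          rcases mul_eq_zero.mp haeq with h | h
          · exact h
          · exact absurd h (pow_ne_zero 2 hxRneg.ne)
        have hkd := aux_keyd a b c d s hrec n xR
        rw [← hp] at hkd
        rw [hxRroot] at hkd
        rw [hD0, zero_mul] at hkd
        have hcoef : 0 < (c - 2 * a * xR) + ((d - c) - b * xR) := by
          rw [ha0, hc0]
          linarith only [mul_pos hb0 (neg_pos.mpr hxRneg), hd0]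
        have hrhs : 0 < -((a * ↑n + b) * s n) * ((n : ℝ) + 1) * xR ^ n := by
          have h1 : 0 < (a * ↑n + b) * s n := by rw [← hEn]; exact hEpos
          have h2 : (0:ℝ) < (n : ℝ) + 1 := by positivity
          have h4 : -((a * ↑n + b) * s n) * ((n : ℝ) + 1) * xR ^ n
              = ((a * ↑n + b) * s n) * (((n : ℝ) + 1) * -(xR ^ n)) := by ring
          rw [h4]
          exact mul_pos h1 (mul_pos h2 (neg_pos.mpr hxRn))
        by_contra hle
        push_neg at hle
        have hprod : ((c - 2 * a * xR) + ((d - c) - b * xR)) * eval xR (derivative p) ≤ 0 :=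
          mul_nonpos_of_nonneg_of_nonpos hcoef.le hle
        linarith only [hkd, hrhs, hprod]
      · -- nondegenerate: rule out derivative zero via double root
        rcases eq_or_lt_of_le (hderiv ▸ hgxR : (0:ℝ) ≤ eval xR (derivative p)) with heq | h
        · exfalso
          have hgxR0 : eval xR g = 0 := by rw [← hderiv, ← heq]
          obtain ⟨h2, hh⟩ := dvd_iff_isRoot.mpr (hgxR0 : IsRoot g xR)
          have hp2 : p = (X - C xR) ^ 2 * h2 := by rw [hg, hh]; ring
          have hdp : derivative p = (X - C xR) ^ 2 * derivative h2
              + C 2 * (X - C xR) * h2 := by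
            rw [hp2]
            simp only [derivative_mul, derivative_pow, derivative_sub, derivative_X,
              derivative_C, sub_zero, mul_one]
            push_cast
            ring
          have hddp : derivative (derivative p) = (X - C xR) ^ 2 * derivative (derivative h2)
              + C 2 * (X - C xR) * derivative h2
              + (C 2 * (X - C xR) * derivative h2 + C 2 * h2) := by
            rw [hdp]
            simp only [derivative_add, derivative_mul, derivative_pow, derivative_sub,
              derivative_X, derivative_C, sub_zero, mul_one]
            push_cast
            ring
          have hd2 : eval xR (derivative (derivative p)) = 2 * eval xR h2 := by
            rw [hddp]
            simp [sub_self]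
          have hkd := aux_keyd a b c d s hrec n xR
          rw [← hp] at hkd
          rw [hxRroot, ← heq] at hkd
          simp only [mul_zero, sub_zero, add_zero] at hkd
          -- hkd : (c xR - a xR²) * p''(xR) = -En (n+1) xR^n
          have hrhs : 0 < -((a * ↑n + b) * s n) * ((n : ℝ) + 1) * xR ^ n := by
            have h1 : 0 < (a * ↑n + b) * s n := by rw [← hEn]; exact hEpos
            have h2 : (0:ℝ) < (n : ℝ) + 1 := by positivity
            have h4 : -((a * ↑n + b) * s n) * ((n : ℝ) + 1) * xR ^ n
                = ((a * ↑n + b) * s n) * (((n : ℝ) + 1) * -(xR ^ n)) := by ring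
            rw [h4]
            exact mul_pos h1 (mul_pos h2 (neg_pos.mpr hxRn))
          have hpp : eval xR (derivative (derivative p)) < 0 := by
            by_contra hge
            push_neg at hge
            have hprod : (c * xR - a * xR ^ 2) * eval xR (derivative (derivative p)) ≤ 0 :=
              mul_nonpos_of_nonpos_of_nonneg hDlt.le hge
            linarith only [hkd, hrhs, hprod]
          have hh2neg : eval xR h2 < 0 := by rw [hd2] at hpp; linarith
          have hph : 0 < eval (xR / 2) p := hIoc _ (by linarith) (by linarith)
          have hh2pos : 0 < eval (xR / 2) h2 := by
            rw [hp2] at hph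
            simp only [eval_mul, eval_pow, eval_sub, eval_X, eval_C] at hph
            nlinarith
          obtain ⟨w, hw1, hw2, hw0⟩ :=
            ivt_root (show xR ≤ xR / 2 by linarith) hh2neg hh2pos
          have hpw : eval w p = 0 := by
            rw [hp2]
            simp only [eval_mul, eval_pow, eval_sub, eval_X, eval_C, hw0, mul_zero]
          linarith [hmax w hpw]
        · exact h
    -- threshold inequality at xR
    have hkeyxR := hsign xR hxRroot
    have hxRrhs : (d - c) * s 0 - En * xR ^ (n + 1) ≤ 0 := by
      have := mul_nonpos_of_nonpos_of_nonneg (hDle xR hxRneg) hp'xRpos.le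
      linarith
    -- uniqueness of the root
    have huniq : ∀ y : ℝ, eval y p = 0 → y = xR := by
      intro y hy
      by_contra hne'
      have hylt : y < xR := lt_of_le_of_ne (hmax y hy) hne'
      -- auxiliary: any root strictly below xR has positive derivative
      have hp'any : ∀ z : ℝ, eval z p = 0 → z < xR → 0 < eval z (derivative p) := by
        intro z hz hzlt
        have hzneg := hrootneg z hz
        have hpowlt : xR ^ (n + 1) < z ^ (n + 1) := by
          have h1 : (-xR) ^ (n + 1) < (-z) ^ (n + 1) :=
            pow_lt_pow_left₀ (by linarith) (by linarith) (Nat.succ_ne_zero n)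
          have he1 : Even (n + 1) := ho.add_one
          rwa [he1.neg_pow, he1.neg_pow] at h1
        have hsz := hsign z hz
        have hzrhs : (d - c) * s 0 - En * z ^ (n + 1) < 0 := by nlinarith
        by_contra hple
        push_neg at hple
        have : 0 ≤ (c * z - a * z ^ 2) * eval z (derivative p) := by
          have hmm := mul_nonneg (neg_nonneg.mpr (hDle z hzneg)) (neg_nonneg.mpr hple)
          rw [neg_mul_neg] at hmm
          exact hmm
        linarith
      -- the largest root strictly below xR
      have hyF2 : y ∈ p.roots.toFinset.filter (fun z => z < xR) :=
        Finset.mem_filter.mpr ⟨Multiset.mem_toFinset.mpr (mem_roots'.mpr ⟨hpne, hy⟩), hylt⟩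
      have hF2ne : (p.roots.toFinset.filter (fun z => z < xR)).Nonempty := ⟨y, hyF2⟩
      set yR := (p.roots.toFinset.filter (fun z => z < xR)).max' hF2ne with hyRdef
      have hyRmem := (p.roots.toFinset.filter (fun z => z < xR)).max'_mem hF2ne
      have hyRroot : eval yR p = 0 :=
        (mem_roots'.mp (Multiset.mem_toFinset.mp (Finset.mem_filter.mp hyRmem).1)).2
      have hyRlt : yR < xR := (Finset.mem_filter.mp hyRmem).2
      have hyRmax : ∀ z : ℝ, eval z p = 0 → z < xR → z ≤ yR := fun z hz hzlt =>
        (p.roots.toFinset.filter (fun z => z < xR)).le_max' z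
          (Finset.mem_filter.mpr ⟨Multiset.mem_toFinset.mpr (mem_roots'.mpr ⟨hpne, hz⟩), hzlt⟩)
      have hyRneg : yR < 0 := hrootneg yR hyRroot
      have hp'yR : 0 < eval yR (derivative p) := hp'any yR hyRroot hyRlt
      set m := (yR + xR) / 2 with hm
      have hm1 : yR < m := by rw [hm]; linarith
      have hm2 : m < xR := by rw [hm]; linarith
      have hgm : 0 < eval m g := by
        rcases lt_trichotomy (eval m g) 0 with hlt | heq | hgt
        · obtain ⟨w, hw1, hw2, hw0⟩ := ivt_root (show m ≤ xR / 2 by linarith) hlt hghalf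
          have hpw : eval w p = 0 := by rw [hgz, hw0, mul_zero]
          rcases lt_trichotomy w xR with hw | hw | hw
          · linarith [hyRmax w hpw hw]
          · rw [hw] at hw0
            rw [hderiv, hw0] at hp'xRpos
            linarith
          · linarith [hmax w hpw]
        · have hpm : eval m p = 0 := by rw [hgz, heq, mul_zero]
          linarith [hyRmax m hpm hm2]
        · exact hgt
      have hpm_neg : eval m p < 0 := by
        rw [hgz]
        exact mul_neg_of_neg_of_pos (by linarith) hgm
      obtain ⟨k, hk⟩ := dvd_iff_isRoot.mpr (hyRroot : IsRoot p yR)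
      have hkz : ∀ z : ℝ, eval z p = (z - yR) * eval z k := by
        intro z; rw [hk]; simp
      have hk_yR : eval yR k = eval yR (derivative p) := by
        rw [hk]; simp [derivative_mul]
      have hkm : eval m k < 0 := by
        have h1 := hpm_neg
        rw [hkz] at h1
        nlinarith
      have hkyR : 0 < eval yR k := by rw [hk_yR]; exact hp'yR
      obtain ⟨w, hw1, hw2, hw0⟩ := ivt_root' hm1.le hkyR hkm
      have hpw : eval w p = 0 := by rw [hkz, hw0, mul_zero]
      linarith [hyRmax w hpw (by linarith)]
    -- conclude: multiplicity one
    have hmult1 : rootMultiplicity xR p = 1 := by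
      have hge : 1 ≤ rootMultiplicity xR p := (rootMultiplicity_pos hpne).mpr hxRroot
      have hle : rootMultiplicity xR p ≤ 1 := by
        by_contra hgt
        push_neg at hgt
        have hdvd : (X - C xR) ^ 2 ∣ p :=
          dvd_trans (pow_dvd_pow _ (by omega : 2 ≤ rootMultiplicity xR p))
            (pow_rootMultiplicity_dvd p xR)
        obtain ⟨r, hr⟩ := hdvd
        have hz : eval xR (derivative p) = 0 := by
          rw [hr]
          simp [derivative_mul, derivative_pow]
        rw [hz] at hp'xRpos
        linarith
      omega
    have hrep : p.roots = Multiset.replicate (Multiset.card p.roots) xR :=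
      Multiset.eq_replicate_card.mpr (fun z hz => huniq z ((mem_roots'.mp hz).2))
    have hcount : p.roots.count xR = Multiset.card p.roots := by
      conv_lhs => rw [hrep]
      exact Multiset.count_replicate_self _ _
    rw [count_roots] at hcount
    rw [Nat.odd_iff.mp ho]
    omega
end

section
/- Let a_n = C(2n, n)/(n+1) be the n-th Catalan number, viewed as a real number. Then for every n ≥ 0, the polynomial p_n(x) = a_0 + a_1 x + ... + a_n x^n has exactly n mod 2 real roots counted with multiplicity. -/
open Polynomial Real Finset intervalIntegral

noncomputable def cat (n : ℕ) : ℝ := (Nat.choose (2*n) n : ℝ)/(n+1)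

lemma cat_pos (n : ℕ) : 0 < cat n := by
  unfold cat
  apply div_pos
  · exact_mod_cast Nat.cast_pos.mpr (Nat.choose_pos (by omega))
  · positivity

lemma choose_identity (n : ℕ) :
    (n+1)^2 * Nat.choose (2*n+2) (n+1) = (2*n+2)*(2*n+1)*Nat.choose (2*n) n := by
  have h1 := Nat.add_one_mul_choose_eq (2*n+1) n
  have h2 := Nat.add_one_mul_choose_eq (2*n) n
  have h3 : Nat.choose (2*n+1) (n+1) = Nat.choose (2*n+1) n := by
    have := Nat.choose_symm (n := 2*n+1) (k := n+1) (by omega)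
    simpa [show 2*n+1-(n+1) = n by omega] using this.symm
  calc (n+1)^2 * Nat.choose (2*n+2) (n+1) = (n+1) * (Nat.choose (2*n+1+1) (n+1) * (n+1)) := by ring
    _ = (n+1) * ((2*n+1+1) * Nat.choose (2*n+1) n) := by rw [← h1]
    _ = (2*n+2) * ((n+1) * Nat.choose (2*n+1) n) := by ring
    _ = (2*n+2) * (Nat.choose (2*n+1) (n+1) * (n+1)) := by rw [h3]; ring
    _ = (2*n+2) * ((2*n+1) * Nat.choose (2*n) n) := by rw [← h2]
    _ = (2*n+2)*(2*n+1)*Nat.choose (2*n) n := by ring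


lemma choose_real (m : ℕ) : ((m:ℝ)+1) * (Nat.choose (2*m+2) (m+1) : ℝ)
    = 2*(2*(m:ℝ)+1)*(Nat.choose (2*m) m : ℝ) := by
  have hcast : ((m:ℝ)+1)^2 * (Nat.choose (2*m+2) (m+1) : ℝ)
      = (2*m+2)*(2*m+1)*(Nat.choose (2*m) m : ℝ) := by exact_mod_cast choose_identity m
  have hm1 : ((m:ℝ)+1) ≠ 0 := by positivity
  apply mul_left_cancel₀ hm1
  nlinarith [hcast]

lemma prod_eq_choose (n : ℕ) :
    ∏ i ∈ range n, ((2*(i:ℝ)+1)/(2*i+2)) = (Nat.choose (2*n) n : ℝ)/4^n := by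
  induction n with
  | zero => simp
  | succ m ih =>
    rw [prod_range_succ, ih]
    have h := choose_identity m
    have hcast : ((m:ℝ)+1)^2 * (Nat.choose (2*m+2) (m+1) : ℝ)
        = (2*m+2)*(2*m+1)*(Nat.choose (2*m) m : ℝ) := by exact_mod_cast h
    have h4 : (4:ℝ)^(m+1) = 4 * 4^m := by ring
    have : (2*(m+1)) = 2*m+2 := by ring
    rw [show 2*(m+1) = 2*m+2 from by ring]
    have hm1 : ((m:ℝ)+1) ≠ 0 := by positivity
    have h4m : (4:ℝ)^m ≠ 0 := by positivity
    field_simp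
    push_cast
    have hA := choose_real m
    linear_combination (-2*(4:ℝ)^m) * hA

lemma sin_pow_integral (n : ℕ) :
    ∫ θ in (0:ℝ)..π, sin θ^(2*n) = π * (Nat.choose (2*n) n : ℝ)/4^n := by
  rw [integral_sin_pow_even, prod_eq_choose]; ring

lemma moment (n : ℕ) :
    ∫ θ in (0:ℝ)..π, (4*sin θ^2)^n * cos θ^2 = π/2 * cat n := by
  have h1 : ∀ θ : ℝ, (4*sin θ^2)^n * cos θ^2
      = 4^n * sin θ^(2*n) - 4^n * sin θ^(2*(n+1)) := by
    intro θ
    have h := sin_sq_add_cos_sq θ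
    have hc : cos θ^2 = 1 - sin θ^2 := by linarith
    rw [hc]
    ring
  rw [intervalIntegral.integral_congr (g := fun θ => 4^n * sin θ^(2*n) - 4^n * sin θ^(2*(n+1)))
    (fun θ _ => h1 θ)]
  rw [intervalIntegral.integral_sub (by apply Continuous.intervalIntegrable; fun_prop)
    (by apply Continuous.intervalIntegrable; fun_prop),
    intervalIntegral.integral_const_mul, intervalIntegral.integral_const_mul,
    sin_pow_integral, sin_pow_integral]
  unfold cat
  have hA := choose_real n
  have h4 : (4:ℝ)^n ≠ 0 := by positivity
  have hn1 : ((n:ℝ)+1) ≠ 0 := by positivity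
  rw [show 2*(n+1) = 2*n+2 from by ring, show (4:ℝ)^(n+1) = 4*4^n from by ring]
  push_cast
  field_simp
  linear_combination (-2) * hA

lemma geom_lower {s : ℝ} (hs : s ≤ 0) {n : ℕ} (hn : Even n) :
    1/(1-s) ≤ ∑ i ∈ range (n+1), s^i := by
  have h1 : (0:ℝ) < 1 - s := by linarith
  have hmul : (∑ i ∈ range (n+1), s^i) * (1-s) = 1 - s^(n+1) := by
    have := geom_sum_mul s (n+1)
    linarith [this]
  have hodd : Odd (n+1) := Even.add_one hn
  have hpow : s^(n+1) ≤ 0 := hodd.pow_nonpos hs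
  rw [div_le_iff₀ h1, hmul]
  linarith

lemma dgeom_identity (n : ℕ) (s : ℝ) :
    (∑ j ∈ range n, ((j:ℝ)+1)*s^j) * (1-s)^2 = 1 - ((n:ℝ)+1)*s^n + n*s^(n+1) := by
  induction n with
  | zero => simp
  | succ m ih =>
    rw [Finset.sum_range_succ, add_mul, ih]
    push_cast
    ring

lemma dgeom_lower {s : ℝ} (hs : s ≤ 0) {n : ℕ} (hn : Odd n) :
    1/(1-s)^2 ≤ ∑ j ∈ range n, ((j:ℝ)+1)*s^j := by
  have h1 : (0:ℝ) < 1 - s := by linarith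
  have h2 : (0:ℝ) < (1-s)^2 := by positivity
  have hpn : s^n ≤ 0 := hn.pow_nonpos hs
  have hpn1 : 0 ≤ s^(n+1) := (hn.add_one).pow_nonneg s
  rw [div_le_iff₀ h2, dgeom_identity]
  nlinarith [hpn, hpn1, Nat.cast_nonneg (α := ℝ) n]

lemma cat_zero : cat 0 = 1 := by simp [cat]

lemma cat_one : cat 1 = 1 := by norm_num [cat]

lemma integral_cos_sq' : ∫ θ in (0:ℝ)..π, cos θ^2 = π/2 := by
  have := moment 0
  simpa [cat_zero] using this

lemma integral_sincos : ∫ θ in (0:ℝ)..π, 4*sin θ^2*cos θ^2 = π/2 := by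
  have := moment 1
  rw [cat_one, mul_one] at this
  rw [← this]
  apply intervalIntegral.integral_congr
  intro θ _
  ring

lemma sum_eval_pos_neg {n : ℕ} (hn : Even n) {x : ℝ} (hx : x ≤ 0) :
    0 < ∑ i ∈ range (n+1), cat i * x^i := by
  have hpi : (0:ℝ) < π := pi_pos
  have h14 : (0:ℝ) < 1 - 4*x := by linarith
  have key : ∑ i ∈ range (n+1), cat i * x^i
      = (2/π) * ∫ θ in (0:ℝ)..π, (∑ i ∈ range (n+1), (4*x*sin θ^2)^i) * cos θ^2 := by
    have hptws : ∀ θ ∈ Set.uIcc (0:ℝ) π,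
        (∑ i ∈ range (n+1), (4*x*sin θ^2)^i) * cos θ^2
        = ∑ i ∈ range (n+1), ((4*sin θ^2)^i * cos θ^2) * x^i := by
      intro θ _
      rw [Finset.sum_mul]
      apply Finset.sum_congr rfl
      intro i _
      ring
    rw [intervalIntegral.integral_congr hptws,
      intervalIntegral.integral_finset_sum (fun i _ => by
        apply Continuous.intervalIntegrable; fun_prop)]
    rw [Finset.mul_sum]
    apply Finset.sum_congr rfl
    intro i _
    rw [intervalIntegral.integral_mul_const, moment]
    field_simp
  rw [key]
  have hmono : (1/(1-4*x)) * (π/2) ≤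
      ∫ θ in (0:ℝ)..π, (∑ i ∈ range (n+1), (4*x*sin θ^2)^i) * cos θ^2 := by
    have h0 : (1/(1-4*x)) * (π/2) = ∫ θ in (0:ℝ)..π, (1/(1-4*x)) * cos θ^2 := by
      rw [intervalIntegral.integral_const_mul, integral_cos_sq']
    rw [h0]
    apply intervalIntegral.integral_mono_on pi_pos.le
    · apply Continuous.intervalIntegrable; fun_prop
    · apply Continuous.intervalIntegrable
      apply Continuous.mul _ (by fun_prop)
      exact continuous_finset_sum _ (fun i _ => by fun_prop)
    · intro θ _
      set s : ℝ := 4*x*sin θ^2 with hsdef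
      have hs0 : s ≤ 0 := by
        have : sin θ^2 ≥ 0 := sq_nonneg _
        nlinarith
      have hs4 : 4*x ≤ s := by nlinarith [sin_sq_le_one θ]
      have h1s : (0:ℝ) < 1 - s := by linarith
      have hstep : 1/(1-4*x) ≤ 1/(1-s) := by
        apply one_div_le_one_div_of_le h1s
        linarith
      have := geom_lower hs0 hn
      have hcos : (0:ℝ) ≤ cos θ^2 := sq_nonneg _
      exact mul_le_mul_of_nonneg_right (le_trans hstep this) hcos
  calc (0:ℝ) < (2/π) * ((1/(1-4*x)) * (π/2)) := by positivity
    _ ≤ _ := by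
      apply mul_le_mul_of_nonneg_left hmono (by positivity)

lemma sum_deriv_pos_neg {n : ℕ} (hn : Odd n) {x : ℝ} (hx : x ≤ 0) :
    0 < ∑ j ∈ range n, ((j:ℝ)+1) * cat (j+1) * x^j := by
  have hpi : (0:ℝ) < π := pi_pos
  have h14 : (0:ℝ) < 1 - 4*x := by linarith
  have key : ∑ j ∈ range n, ((j:ℝ)+1) * cat (j+1) * x^j
      = (2/π) * ∫ θ in (0:ℝ)..π,
          (∑ j ∈ range n, ((j:ℝ)+1)*(4*x*sin θ^2)^j) * (4*sin θ^2*cos θ^2) := by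
    have hptws : ∀ θ ∈ Set.uIcc (0:ℝ) π,
        (∑ j ∈ range n, ((j:ℝ)+1)*(4*x*sin θ^2)^j) * (4*sin θ^2*cos θ^2)
        = ∑ j ∈ range n, (((j:ℝ)+1) * ((4*sin θ^2)^(j+1) * cos θ^2)) * x^j := by
      intro θ _
      rw [Finset.sum_mul]
      apply Finset.sum_congr rfl
      intro j _
      rw [pow_succ]
      ring
    rw [intervalIntegral.integral_congr hptws,
      intervalIntegral.integral_finset_sum (fun j _ => by
        apply Continuous.intervalIntegrable; fun_prop)]
    rw [Finset.mul_sum]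
    apply Finset.sum_congr rfl
    intro j _
    rw [intervalIntegral.integral_mul_const, intervalIntegral.integral_const_mul, moment]
    field_simp
  rw [key]
  have hmono : (1/(1-4*x)^2) * (π/2) ≤
      ∫ θ in (0:ℝ)..π,
          (∑ j ∈ range n, ((j:ℝ)+1)*(4*x*sin θ^2)^j) * (4*sin θ^2*cos θ^2) := by
    have h0 : (1/(1-4*x)^2) * (π/2) = ∫ θ in (0:ℝ)..π, (1/(1-4*x)^2) * (4*sin θ^2*cos θ^2) := by
      rw [intervalIntegral.integral_const_mul, integral_sincos]
    rw [h0]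
    apply intervalIntegral.integral_mono_on pi_pos.le
    · apply Continuous.intervalIntegrable; fun_prop
    · apply Continuous.intervalIntegrable
      apply Continuous.mul _ (by fun_prop)
      exact continuous_finset_sum _ (fun j _ => by fun_prop)
    · intro θ _
      set s : ℝ := 4*x*sin θ^2 with hsdef
      have hs0 : s ≤ 0 := by
        have : sin θ^2 ≥ 0 := sq_nonneg _
        nlinarith
      have hs4 : 4*x ≤ s := by nlinarith [sin_sq_le_one θ]
      have h1s : (0:ℝ) < 1 - s := by linarith
      have hstep : 1/(1-4*x)^2 ≤ 1/(1-s)^2 := by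
        apply one_div_le_one_div_of_le (by positivity)
        nlinarith
      have := dgeom_lower hs0 hn
      have hcos : (0:ℝ) ≤ 4*sin θ^2*cos θ^2 := by positivity
      exact mul_le_mul_of_nonneg_right (le_trans hstep this) hcos
  calc (0:ℝ) < (2/π) * ((1/(1-4*x)^2) * (π/2)) := by positivity
    _ ≤ _ := by
      apply mul_le_mul_of_nonneg_left hmono (by positivity)

theorem stmt_6 :
    ∀ n : ℕ, Multiset.card
      ((∑ i ∈ Finset.range (n + 1),
        C ((Nat.choose (2 * i) i : ℝ) / (i + 1)) * X ^ i : Polynomial ℝ).roots) = n % 2 := by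
  intro n
  set p : Polynomial ℝ := ∑ i ∈ Finset.range (n + 1),
      C ((Nat.choose (2 * i) i : ℝ) / (i + 1)) * X ^ i with hp
  have heval : ∀ x : ℝ, eval x p = ∑ i ∈ range (n+1), cat i * x^i := by
    intro x
    rw [hp, eval_finset_sum]
    apply Finset.sum_congr rfl
    intro i _
    simp [cat]
  have hderiv : ∀ x : ℝ, eval x (derivative p) =
      ∑ j ∈ range n, ((j:ℝ)+1) * cat (j+1) * x^j := by
    intro x
    rw [hp, derivative_sum]
    simp only [derivative_C_mul_X_pow]
    rw [eval_finset_sum, Finset.sum_range_succ']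
    simp only [eval_mul, eval_C, eval_pow, eval_X, Nat.cast_zero, mul_zero, zero_mul,
      Nat.add_sub_cancel, add_zero, zero_add]
    apply Finset.sum_congr rfl
    intro j _
    unfold cat
    push_cast
    ring
  have h0 : 0 < eval 0 p := by
    rw [heval]
    have hterm := Finset.single_le_sum (f := fun i => cat i * (0:ℝ)^i)
      (fun i _ => mul_nonneg (cat_pos i).le (pow_nonneg le_rfl i))
      (Finset.mem_range.mpr (Nat.succ_pos n))
    simp only [pow_zero, mul_one, cat_zero] at hterm
    linarith
  have hp0 : p ≠ 0 := by
    intro h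
    rw [h] at h0
    simp at h0
  rcases Nat.even_or_odd n with he | ho
  · -- even case: no roots
    have hpos : ∀ x : ℝ, 0 < eval x p := by
      intro x
      rw [heval]
      rcases le_or_gt x 0 with h | h
      · exact sum_eval_pos_neg he h
      · exact Finset.sum_pos
          (fun i _ => mul_pos (cat_pos i) (pow_pos h i)) Finset.nonempty_range_add_one
    have hroots : p.roots = 0 := by
      apply Multiset.eq_zero_of_forall_notMem
      intro a ha
      rw [mem_roots'] at ha
      exact (hpos a).ne' ha.2
    rw [hroots, Nat.even_iff.mp he]
    simp
  · -- odd case: exactly one root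
    have hn1 : n % 2 = 1 := Nat.odd_iff.mp ho
    have hdpos : ∀ x : ℝ, 0 < eval x (derivative p) := by
      intro x
      rw [hderiv]
      rcases le_or_gt x 0 with h | h
      · exact sum_deriv_pos_neg ho h
      · exact Finset.sum_pos
          (fun j _ => mul_pos (mul_pos (by positivity) (cat_pos (j+1))) (pow_pos h j))
          ⟨0, Finset.mem_range.mpr ho.pos⟩
    have hdroots : (derivative p).roots = 0 := by
      apply Multiset.eq_zero_of_forall_notMem
      intro a ha
      rw [mem_roots'] at ha
      exact (hdpos a).ne' ha.2
    have hub : Multiset.card p.roots ≤ 1 := by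
      have := p.card_roots_le_derivative
      rw [hdroots] at this
      simpa using this
    -- existence of a root by IVT
    have hcn := cat_pos n
    set M : ℝ := ∑ i ∈ range n, cat i with hM
    obtain ⟨t, h1t, hMt⟩ : ∃ t : ℝ, 1 ≤ t ∧ M < cat n * t := by
      refine ⟨max 1 (M / cat n) + 1, ?_, ?_⟩
      · have := le_max_left (1:ℝ) (M / cat n)
        linarith
      · have h1 : M / cat n ≤ max 1 (M / cat n) := le_max_right _ _
        have h2 : M = (M / cat n) * cat n := by field_simp
        nlinarith
    have htpos : (0:ℝ) < t := by linarith
    have hneg : eval (-t) p < 0 := by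
      rw [heval, Finset.sum_range_succ]
      have hlast : cat n * (-t)^n = -(cat n * t^n) := by
        rw [ho.neg_pow]; ring
      have hbound : ∀ i ∈ range n, cat i * (-t)^i ≤ cat i * t^(n-1) := by
        intro i hi
        rw [Finset.mem_range] at hi
        have h1 : (-t)^i ≤ t^i := by
          calc (-t)^i ≤ |(-t)^i| := le_abs_self _
            _ = |(-t)|^i := by rw [abs_pow]
            _ = t^i := by rw [abs_neg, abs_of_pos htpos]
        have h2 : t^i ≤ t^(n-1) := pow_le_pow_right₀ h1t (by omega)
        exact mul_le_mul_of_nonneg_left (h1.trans h2) (cat_pos i).le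
      have hsum : ∑ i ∈ range n, cat i * (-t)^i ≤ M * t^(n-1) := by
        rw [hM, Finset.sum_mul]
        exact Finset.sum_le_sum hbound
      have htn : t^n = t^(n-1) * t := by
        rw [← pow_succ]
        congr 1
        omega
      have htn1 : (0:ℝ) < t^(n-1) := pow_pos htpos _
      rw [hlast] at *
      nlinarith [hsum, hMt, htn1]
    obtain ⟨x₀, _, hx₀⟩ := intermediate_value_Icc (by linarith : -t ≤ (0:ℝ))
      (p.continuous_aeval.continuousOn) (by exact ⟨hneg.le, h0.le⟩ :
        (0:ℝ) ∈ Set.Icc (eval (-t) p) (eval 0 p))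
    have hlb : 0 < Multiset.card p.roots := by
      rw [Multiset.card_pos_iff_exists_mem]
      exact ⟨x₀, mem_roots'.mpr ⟨hp0, hx₀⟩⟩
    omega
end

section
/- Fix a natural number k ≥ 0 and let a_n = C(n+k, k), viewed as a real number. Then for every n ≥ 0, the polynomial p_n(x) = a_0 + a_1 x + ... + a_n x^n has exactly n mod 2 real roots counted with multiplicity. -/
open Polynomial Finset

noncomputable def Pol (k n : ℕ) : Polynomial ℝ :=
  ∑ i ∈ Finset.range (n + 1), C ((Nat.choose (i + k) k : ℝ)) * X ^ i

lemma eval_Pol (k n : ℕ) (x : ℝ) :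
    (Pol k n).eval x = ∑ i ∈ Finset.range (n + 1), ((i + k).choose k : ℝ) * x ^ i := by
  simp [Pol, eval_finset_sum]

lemma eval_Pol_zero (k n : ℕ) : (Pol k n).eval 0 = 1 := by
  rw [eval_Pol, Finset.sum_eq_single 0]
  · simp
  · intro i _ hi; simp [zero_pow hi]
  · simp

lemma Pol_ne_zero (k n : ℕ) : Pol k n ≠ 0 := by
  intro h
  have := eval_Pol_zero k n
  rw [h] at this; simp at this

lemma choose_id (i k : ℕ) :
    (i + 1) * (i + k + 1).choose k = (k + 1) * (i + k + 1).choose (k + 1) := by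
  have h1 := Nat.add_one_mul_choose_eq (i + k) k
  have h2 := Nat.add_one_mul_choose_eq (i + k) i
  have h3 : (i + k + 1).choose ((i + k + 1) - k) = (i + k + 1).choose k :=
    Nat.choose_symm (by omega)
  have h4 : (i + k).choose ((i + k) - i) = (i + k).choose i := Nat.choose_symm (by omega)
  have e3 : (i + k + 1) - k = i + 1 := by omega
  have e4 : (i + k) - i = k := by omega
  rw [e3] at h3; rw [e4] at h4
  calc (i + 1) * (i + k + 1).choose k = (i + k + 1).choose (i + 1) * (i + 1) := by
        rw [h3]; ring
    _ = (i + k + 1) * (i + k).choose i := h2.symm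
    _ = (i + k + 1) * (i + k).choose k := by rw [h4]
    _ = (k + 1) * (i + k + 1).choose (k + 1) := by rw [h1]; ring

lemma deriv_Pol (k n : ℕ) :
    derivative (Pol k (n + 1)) = C ((k : ℝ) + 1) * Pol (k + 1) n := by
  unfold Pol
  rw [derivative_sum, Finset.sum_range_succ', Finset.mul_sum]
  have h0 : derivative (C (((0 + k).choose k : ℕ) : ℝ) * X ^ 0) = 0 := by simp
  rw [h0, add_zero]
  refine Finset.sum_congr rfl fun i _ => ?_
  rw [derivative_C_mul, derivative_X_pow, Nat.add_sub_cancel,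
    ← mul_assoc, ← mul_assoc, ← C_mul, ← C_mul]
  congr 2
  have h : (i + 1) * (i + 1 + k).choose k = (k + 1) * ((i + (k + 1)).choose (k + 1)) := by
    have e1 : i + 1 + k = i + k + 1 := by ring
    have e2 : i + (k + 1) = i + k + 1 := by ring
    rw [e1, e2]; exact choose_id i k
  have h' : ((i + 1 + k).choose k) * (i + 1) = (k + 1) * ((i + (k + 1)).choose (k + 1)) := by
    rw [mul_comm]; exact h
  exact_mod_cast h'

lemma eval_id (k n : ℕ) (x : ℝ) :
    (1 - x) * (Pol (k + 1) n).eval x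
      = (Pol k n).eval x - ((n + k + 1).choose (k + 1) : ℝ) * x ^ (n + 1) := by
  induction n with
  | zero => simp [eval_Pol]
  | succ n ih =>
    have e1 : (Pol (k + 1) (n + 1)).eval x
        = (Pol (k + 1) n).eval x + ((n + 1 + (k + 1)).choose (k + 1) : ℝ) * x ^ (n + 1) := by
      rw [eval_Pol, Finset.sum_range_succ, ← eval_Pol]
    have e2 : (Pol k (n + 1)).eval x
        = (Pol k n).eval x + ((n + 1 + k).choose k : ℝ) * x ^ (n + 1) := by
      rw [eval_Pol, Finset.sum_range_succ, ← eval_Pol]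
    have pas : (n + 1 + k + 1).choose (k + 1) = (n + k + 1).choose k + (n + k + 1).choose (k + 1) := by
      have e : n + 1 + k + 1 = (n + k + 1) + 1 := by omega
      rw [e, Nat.choose_succ_succ]
    have pas' : (n + 1 + (k + 1)).choose (k + 1)
        = (n + k + 1).choose k + (n + k + 1).choose (k + 1) := by
      rw [show n + 1 + (k + 1) = n + 1 + k + 1 by omega, pas]
    rw [show n + 1 + k = n + k + 1 by omega] at e2
    rw [e1, e2, pas', pas]
    push_cast
    linear_combination ih

lemma choose_one_le (i k : ℕ) : (1 : ℝ) ≤ ((i + k).choose k : ℝ) := by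
  exact_mod_cast Nat.one_le_iff_ne_zero.mpr (Nat.choose_pos (by omega : k ≤ i + k)).ne'

lemma neg_val (k m : ℕ) (hm : Odd (m + 1)) : ∃ x : ℝ, x < 0 ∧ (Pol k (m + 1)).eval x < 0 := by
  set c : ℕ → ℝ := fun i => ((i + k).choose k : ℝ) with hc
  have hc1 : ∀ i, (1 : ℝ) ≤ c i := fun i => choose_one_le i k
  have hc0 : ∀ i, (0 : ℝ) ≤ c i := fun i => le_trans zero_le_one (hc1 i)
  set S : ℝ := ∑ i ∈ Finset.range (m + 2), c i with hS
  have hS1 : (1 : ℝ) ≤ S := by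
    calc (1 : ℝ) ≤ c 0 := hc1 0
      _ ≤ S := Finset.single_le_sum (fun i _ => hc0 i) (Finset.mem_range.mpr (by omega))
  have hS0 : (0 : ℝ) ≤ S := le_trans zero_le_one hS1
  refine ⟨-S, by linarith, ?_⟩
  rw [eval_Pol, Finset.sum_range_succ]
  have hpow : (-S) ^ (m + 1) = -(S ^ (m + 1)) := Odd.neg_pow hm S
  have hbound : ∑ i ∈ Finset.range (m + 1), c i * (-S) ^ i
      ≤ (∑ i ∈ Finset.range (m + 1), c i) * S ^ m := by
    rw [Finset.sum_mul]
    apply Finset.sum_le_sum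
    intro i hi
    have h1 : (-S) ^ i ≤ S ^ i := by
      calc (-S) ^ i ≤ |(-S) ^ i| := le_abs_self _
        _ = |(-S)| ^ i := by rw [abs_pow]
        _ = S ^ i := by rw [abs_neg, abs_of_nonneg hS0]
    have h2 : S ^ i ≤ S ^ m := pow_le_pow_right₀ hS1 (Nat.lt_succ_iff.mp (Finset.mem_range.mp hi))
    exact mul_le_mul_of_nonneg_left (le_trans h1 h2) (hc0 i)
  have hsum : (∑ i ∈ Finset.range (m + 1), c i) = S - c (m + 1) := by
    have := Finset.sum_range_succ c (m + 1)
    rw [hS]; linarith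
  rw [hsum] at hbound
  have hSm : (0 : ℝ) < S ^ m := by positivity
  have hSm1 : (0 : ℝ) < S ^ (m + 1) := by positivity
  have hcm := hc1 (m + 1)
  have key : c (m + 1) * (-S) ^ (m + 1) = -(c (m + 1) * S ^ (m + 1)) := by rw [hpow]; ring
  have hS' : S ^ (m + 1) = S * S ^ m := by ring
  nlinarith [hbound, mul_le_mul_of_nonneg_right hcm (le_of_lt hSm1)]

lemma deriv_eval (k n : ℕ) (x : ℝ) :
    deriv (fun y => (Pol k (n + 1)).eval y) x = ((k : ℝ) + 1) * (Pol (k + 1) n).eval x := by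
  rw [Polynomial.deriv, deriv_Pol]; simp

lemma odd_strictMono (k m : ℕ) (hpos : ∀ x : ℝ, 0 < (Pol (k + 1) m).eval x) :
    StrictMono (fun y => (Pol k (m + 1)).eval y) := by
  apply strictMono_of_deriv_pos
  intro x
  rw [deriv_eval]
  exact mul_pos (by positivity) (hpos x)

lemma odd_root (k m : ℕ) (hm : Even m) (hpos : ∀ x : ℝ, 0 < (Pol (k + 1) m).eval x) :
    ∃ r : ℝ, (Pol k (m + 1)).eval r = 0 := by
  obtain ⟨x0, hx0neg, hx0⟩ := neg_val k m (Even.add_one hm)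
  have hcont : ContinuousOn (fun y => (Pol k (m + 1)).eval y) (Set.Icc x0 0) :=
    (Pol k (m + 1)).continuous.continuousOn
  have hmem : (0 : ℝ) ∈ Set.Icc ((Pol k (m + 1)).eval x0) ((Pol k (m + 1)).eval 0) := by
    rw [eval_Pol_zero]
    exact ⟨le_of_lt hx0, zero_le_one⟩
  obtain ⟨r, _, hr⟩ := intermediate_value_Icc (le_of_lt hx0neg) hcont hmem
  exact ⟨r, hr⟩

lemma even_pos : ∀ n, Even n → ∀ (k : ℕ) (x : ℝ), 0 < (Pol k n).eval x := by
  intro n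
  induction n using Nat.strong_induction_on with
  | _ n ih =>
    intro hn k x
    match n, hn, ih with
    | 0, _, _ => simp [eval_Pol]
    | 1, hn, _ => exact absurd hn (by decide)
    | (m + 2), hn, ih =>
      have hm : Even m := by
        rcases hn with ⟨t, ht⟩; exact ⟨t - 1, by omega⟩
      have IH : ∀ (j : ℕ) (y : ℝ), 0 < (Pol j m).eval y := ih m (by omega) hm
      set g : ℝ → ℝ := fun y => (Pol (k + 1) (m + 1)).eval y with hg
      have hgmono : StrictMono g := odd_strictMono (k + 1) m (fun y => IH (k + 2) y)
      obtain ⟨r, hr⟩ := odd_root (k + 1) m hm (fun y => IH (k + 2) y)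
      set f : ℝ → ℝ := fun y => (Pol k (m + 2)).eval y with hf
      have hderiv : ∀ y, deriv f y = ((k : ℝ) + 1) * g y := fun y => deriv_eval k (m + 1) y
      have hcont : Continuous f := (Pol k (m + 2)).continuous
      have hmonoOn : StrictMonoOn f (Set.Ici r) := by
        apply strictMonoOn_of_deriv_pos (convex_Ici r) hcont.continuousOn
        intro y hy
        rw [interior_Ici] at hy
        rw [hderiv]
        have : g r < g y := hgmono hy
        exact mul_pos (by positivity) (by linarith [hr])
      have hantiOn : StrictAntiOn f (Set.Iic r) := by
        apply strictAntiOn_of_deriv_neg (convex_Iic r) hcont.continuousOn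
        intro y hy
        rw [interior_Iic] at hy
        rw [hderiv]
        have : g y < g r := hgmono hy
        exact mul_neg_of_pos_of_neg (by positivity) (by linarith [hr])
      have hmin : ∀ y, f r ≤ f y := by
        intro y
        rcases lt_trichotomy y r with h | h | h
        · exact le_of_lt (hantiOn (le_of_lt h) Set.self_mem_Iic h)
        · rw [h]
        · exact le_of_lt (hmonoOn Set.self_mem_Ici (le_of_lt h) h)
      have hr0 : r ≠ 0 := by
        intro h
        have h1 : g 0 = 1 := eval_Pol_zero (k + 1) (m + 1)
        have h2 : g r = 0 := hr
        rw [h] at h2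
        rw [h2] at h1
        norm_num at h1
      have hpow : (0 : ℝ) < r ^ (m + 2) := Even.pow_pos (by rcases hm with ⟨t, ht⟩; exact ⟨t + 1, by omega⟩) hr0
      have hfr : 0 < f r := by
        have hid := eval_id k (m + 1) r
        rw [show (Pol (k + 1) (m + 1)).eval r = 0 from hr, mul_zero] at hid
        have h1 : (Pol k (m + 1)).eval r = ((m + 1 + k + 1).choose (k + 1) : ℝ) * r ^ (m + 2) := by
          linarith [hid]
        have h2 : f r = (Pol k (m + 1)).eval r + ((m + 2 + k).choose k : ℝ) * r ^ (m + 2) := by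
          rw [hf]
          simp only
          rw [eval_Pol, Finset.sum_range_succ, ← eval_Pol]
        rw [h2, h1, ← add_mul]
        apply mul_pos _ hpow
        have hA : (0 : ℝ) ≤ ((m + 1 + k + 1).choose (k + 1) : ℝ) := Nat.cast_nonneg _
        have hB : (1 : ℝ) ≤ ((m + 2 + k).choose k : ℝ) := choose_one_le (m + 2) k
        linarith
      exact lt_of_lt_of_le hfr (hmin x)

theorem stmt_7 (k : ℕ) :
    ∀ n : ℕ, Multiset.card
      ((∑ i ∈ Finset.range (n + 1),
        C ((Nat.choose (i + k) k : ℝ)) * X ^ i : Polynomial ℝ).roots) = n % 2 := by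
  intro n
  show Multiset.card ((Pol k n).roots) = n % 2
  rcases Nat.even_or_odd n with hn | hn
  · have hroots : (Pol k n).roots = 0 := by
      apply Multiset.eq_zero_of_forall_notMem
      intro x hx
      have hroot : (Pol k n).eval x = 0 := isRoot_of_mem_roots hx
      exact (even_pos n hn k x).ne' hroot
    rw [hroots, Multiset.card_zero, Nat.even_iff.mp hn]
  · obtain ⟨t, ht⟩ := hn
    subst ht
    have hm : Even (2 * t) := even_two_mul t
    have hpos : ∀ x : ℝ, 0 < (Pol (k + 1) (2 * t)).eval x := even_pos (2 * t) hm (k + 1)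
    have hmono : StrictMono (fun y => (Pol k (2 * t + 1)).eval y) := odd_strictMono k (2 * t) hpos
    obtain ⟨r, hr⟩ := odd_root k (2 * t) hm hpos
    have hne := Pol_ne_zero k (2 * t + 1)
    have hmult : rootMultiplicity r (Pol k (2 * t + 1)) = 1 := by
      have hlt : ¬ 1 < rootMultiplicity r (Pol k (2 * t + 1)) := by
        rw [Polynomial.one_lt_rootMultiplicity_iff_isRoot hne]
        rintro ⟨-, hd⟩
        have hde : (derivative (Pol k (2 * t + 1))).eval r
            = ((k : ℝ) + 1) * (Pol (k + 1) (2 * t)).eval r := by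
          rw [deriv_Pol]; simp
        have : (derivative (Pol k (2 * t + 1))).eval r = 0 := hd
        rw [hde] at this
        have := hpos r
        nlinarith
      have hpos' : 0 < rootMultiplicity r (Pol k (2 * t + 1)) :=
        (Polynomial.rootMultiplicity_pos hne).mpr hr
      omega
    have hall : ∀ b ∈ (Pol k (2 * t + 1)).roots, b = r := by
      intro b hb
      have hb' : (Pol k (2 * t + 1)).eval b = 0 := isRoot_of_mem_roots hb
      exact hmono.injective (show (fun y => (Pol k (2 * t + 1)).eval y) b
        = (fun y => (Pol k (2 * t + 1)).eval y) r by simp only; rw [hb', hr])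
    have hrep := Multiset.eq_replicate_card.mpr hall
    have : Multiset.card ((Pol k (2 * t + 1)).roots)
        = Multiset.count r ((Pol k (2 * t + 1)).roots) := by
      conv_rhs => rw [hrep]
      rw [Multiset.count_replicate_self]
    rw [this, count_roots, hmult]
    omega
end

section
/- Let a_n = C(2n, n) be the n-th central binomial coefficient, viewed as a real number. Then for every n ≥ 0, the polynomial p_n(x) = a_0 + a_1 x + ... + a_n x^n has exactly n mod 2 real roots counted with multiplicity. -/
open Polynomial Finset

noncomputable def PP (n : ℕ) : ℝ[X] :=
  ∑ i ∈ Finset.range (n + 1), C ((Nat.choose (2 * i) i : ℝ)) * X ^ i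

lemma PP_succ (n : ℕ) :
    PP (n+1) = PP n + C ((Nat.choose (2*(n+1)) (n+1) : ℝ)) * X ^ (n+1) := by
  rw [PP, Finset.sum_range_succ]; rfl

lemma cb_pos (n : ℕ) : (0:ℝ) < (Nat.choose (2*n) n : ℝ) := by
  exact_mod_cast Nat.choose_pos (by omega)

lemma natDegree_PP (n : ℕ) : (PP n).natDegree = n := by
  induction n with
  | zero => simp [PP]
  | succ n ih =>
    rw [PP_succ, natDegree_add_eq_right_of_natDegree_lt]
    · exact natDegree_C_mul_X_pow _ _ (cb_pos (n+1)).ne'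
    · rw [ih, natDegree_C_mul_X_pow _ _ (cb_pos (n+1)).ne']; omega

lemma eval_PP (n : ℕ) (x : ℝ) :
    eval x (PP n) = ∑ i ∈ Finset.range (n+1), (Nat.choose (2*i) i : ℝ) * x ^ i := by
  simp [PP, eval_finset_sum]

lemma eval_PP_pos (n : ℕ) {x : ℝ} (hx : 0 ≤ x) : 0 < eval x (PP n) := by
  rw [eval_PP]
  apply Finset.sum_pos'
  · intro i _; positivity
  · exact ⟨0, Finset.mem_range.mpr (by omega), by simp⟩

lemma PP_ne_zero (n : ℕ) : PP n ≠ 0 := fun h => by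
  have := eval_PP_pos n (le_refl 0); rw [h] at this; simp at this
lemma hrec (n : ℕ) : ((n:ℝ)+1) * (Nat.choose (2*(n+1)) (n+1) : ℝ)
    = (4*(n:ℝ)+2) * (Nat.choose (2*n) n : ℝ) := by
  have h := Nat.succ_mul_centralBinom_succ n
  rw [Nat.centralBinom_eq_two_mul_choose, Nat.centralBinom_eq_two_mul_choose] at h
  have h2 := congrArg (Nat.cast : ℕ → ℝ) h
  push_cast at h2
  linear_combination h2

lemma key (n : ℕ) : (1 - C (4:ℝ) * X) * derivative (PP n)
    = 2 * PP n - (4 * (n : ℝ[X]) + 2) * C ((Nat.choose (2*n) n : ℝ)) * X ^ n := by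
  induction n with
  | zero => simp [PP]
  | succ n ih =>
    rw [PP_succ, derivative_add, derivative_C_mul, derivative_X_pow]
    have hC : ((n:ℝ[X])+1) * C ((Nat.choose (2*(n+1)) (n+1) : ℝ))
        = (4*(n:ℝ[X])+2) * C ((Nat.choose (2*n) n : ℝ)) := by
      have := congrArg (C : ℝ → ℝ[X]) (hrec n)
      push_cast at this ⊢
      simpa [C_mul, C_add, map_ofNat C] using this
    simp only [C_eq_natCast, map_ofNat] at ih hC ⊢
    push_cast at ih hC ⊢
    linear_combination ih + (X:ℝ[X])^n * hC



lemma root_neg {n : ℕ} {r : ℝ} (hr : (PP n).IsRoot r) : r < 0 := by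
  by_contra h
  exact absurd hr.eq_zero (ne_of_gt (eval_PP_pos n (not_lt.mp h)))

lemma deriv_eval_s8 (n : ℕ) {r : ℝ} (hr : (PP n).IsRoot r) :
    (1 - 4*r) * eval r (derivative (PP n))
      = -((4*(n:ℝ)+2) * (Nat.choose (2*n) n : ℝ)) * r^n := by
  have h := congrArg (eval r) (key n)
  simp only [eval_mul, eval_sub, eval_add, eval_one, eval_C, eval_X, eval_pow,
    eval_ofNat, eval_natCast, hr.eq_zero] at h
  linarith [h]

lemma deriv_sign (n : ℕ) {r : ℝ} (hr : (PP n).IsRoot r) :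
    (0 < eval r (derivative (PP n)) ∧ Odd n) ∨
    (eval r (derivative (PP n)) < 0 ∧ Even n) := by
  have hneg := root_neg hr
  have h14 : 0 < 1 - 4*r := by linarith
  have h := deriv_eval_s8 n hr
  have hc := cb_pos n
  rcases Nat.even_or_odd n with he | ho
  · right
    refine ⟨?_, he⟩
    have hrn : 0 < r^n := he.pow_pos hneg.ne
    have hrhs : -((4*(n:ℝ)+2) * (Nat.choose (2*n) n : ℝ)) * r^n < 0 :=
      mul_neg_of_neg_of_pos (by nlinarith) hrn
    rw [← h] at hrhs
    rcases mul_neg_iff.mp hrhs with ⟨_, hD⟩ | ⟨h1, _⟩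
    · exact hD
    · linarith
  · left
    refine ⟨?_, ho⟩
    have hrn : r^n < 0 := ho.pow_neg hneg
    have hrhs : 0 < -((4*(n:ℝ)+2) * (Nat.choose (2*n) n : ℝ)) * r^n :=
      mul_pos_of_neg_of_neg (by nlinarith) hrn
    rw [← h] at hrhs
    rcases mul_pos_iff.mp hrhs with ⟨_, hD⟩ | ⟨h1, _⟩
    · exact hD
    · linarith

lemma cross {p : ℝ[X]} {r : ℝ} (hr : p.IsRoot r) (hd : 0 < eval r (derivative p)) :
    ∃ δ > 0, (∀ t, r < t → t < r + δ → 0 < eval t p) ∧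
      (∀ t, r - δ < t → t < r → eval t p < 0) := by
  set q := p / (X - C r) with hqdef
  have hq : (X - C r) * q = p := mul_div_eq_iff_isRoot.mpr hr
  have hqr : eval r q = eval r (derivative p) := by
    conv_rhs => rw [← hq]
    simp [derivative_mul]
  have hq0 : 0 < eval r q := hqr ▸ hd
  have hc : ContinuousAt (fun t => eval t q) r := (Polynomial.continuous q).continuousAt
  have hev : ∀ᶠ t in nhds r, 0 < eval t q := hc.eventually (eventually_gt_nhds hq0)
  rw [Metric.eventually_nhds_iff] at hev
  obtain ⟨δ, hδ, hball⟩ := hev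
  have hqpos : ∀ t, r - δ < t → t < r + δ → 0 < eval t q := by
    intro t h1 h2
    apply hball
    rw [Real.dist_eq, abs_lt]
    constructor <;> linarith
  have hevp : ∀ t, eval t p = (t - r) * eval t q := by
    intro t; rw [← hq]; simp
  refine ⟨δ, hδ, fun t h1 h2 => ?_, fun t h1 h2 => ?_⟩
  · rw [hevp]
    exact mul_pos (by linarith) (hqpos t (by linarith) h2)
  · rw [hevp]
    exact mul_neg_of_neg_of_pos (by linarith) (hqpos t h1 (by linarith))

lemma ivt_pm {p : ℝ[X]} {u v : ℝ} (huv : u < v) (hu : 0 < eval u p) (hv : eval v p < 0) :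
    ∃ z, u < z ∧ z < v ∧ p.IsRoot z := by
  have hsub := intermediate_value_Ioo' (le_of_lt huv)
    (Continuous.continuousOn (Polynomial.continuous p))
  have h0 : (0:ℝ) ∈ Set.Ioo (eval v p) (eval u p) := ⟨hv, hu⟩
  obtain ⟨z, hz, hz0⟩ := hsub h0
  exact ⟨z, hz.1, hz.2, hz0⟩

lemma ivt_mp {p : ℝ[X]} {u v : ℝ} (huv : u < v) (hu : eval u p < 0) (hv : 0 < eval v p) :
    ∃ z, u < z ∧ z < v ∧ p.IsRoot z := by
  have hsub := intermediate_value_Ioo (le_of_lt huv)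
    (Continuous.continuousOn (Polynomial.continuous p))
  have h0 : (0:ℝ) ∈ Set.Ioo (eval u p) (eval v p) := ⟨hu, hv⟩
  obtain ⟨z, hz, hz0⟩ := hsub h0
  exact ⟨z, hz.1, hz.2, hz0⟩



lemma mem_rtf {n : ℕ} {r : ℝ} : r ∈ (PP n).roots.toFinset ↔ (PP n).IsRoot r := by
  rw [Multiset.mem_toFinset, mem_roots (PP_ne_zero n)]

lemma even_case {n : ℕ} (hn : Even n) : (PP n).roots = 0 := by
  by_contra h
  have hS : (PP n).roots.toFinset.Nonempty := by
    obtain ⟨r, hr⟩ := Multiset.exists_mem_of_ne_zero h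
    exact ⟨r, Multiset.mem_toFinset.mpr hr⟩
  set x := (PP n).roots.toFinset.max' hS with hxdef
  have hx : (PP n).IsRoot x := mem_rtf.mp ((PP n).roots.toFinset.max'_mem hS)
  have hxneg : x < 0 := root_neg hx
  have hd : eval x (derivative (PP n)) < 0 := by
    rcases deriv_sign n hx with ⟨_, ho⟩ | ⟨hd, _⟩
    · exact absurd hn (Nat.not_even_iff_odd.mpr ho)
    · exact hd
  -- apply cross to -PP n
  have hx' : (-(PP n)).IsRoot x := by simp [IsRoot, hx.eq_zero]
  have hd' : 0 < eval x (derivative (-(PP n))) := by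
    rw [derivative_neg, eval_neg]; linarith
  obtain ⟨δ, hδ, hpos, _⟩ := cross hx' hd'
  set w := min (x + δ/2) (x/2) with hwdef
  have hxw : x < w := lt_min (by linarith) (by linarith)
  have hw0 : w < 0 := lt_of_le_of_lt (min_le_right _ _) (by linarith)
  have hpw : eval w (PP n) < 0 := by
    have := hpos w hxw (lt_of_le_of_lt (min_le_left _ _) (by linarith))
    rw [eval_neg] at this; linarith
  obtain ⟨z, hwz, hz0, hz⟩ := ivt_mp hw0 hpw (eval_PP_pos n le_rfl)
  have : z ≤ x := (PP n).roots.toFinset.le_max' z (mem_rtf.mpr hz)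
  linarith



lemma leadingCoeff_PP (n : ℕ) : (PP n).leadingCoeff = (Nat.choose (2*n) n : ℝ) := by
  rw [leadingCoeff, natDegree_PP]
  rw [PP, finset_sum_coeff]
  simp only [coeff_C_mul, coeff_X_pow]
  rw [Finset.sum_eq_single n]
  · simp
  · intro b _ hb; simp [Ne.symm hb]
  · intro h; exact absurd (Finset.mem_range.mpr (by omega)) h

lemma exists_root_odd {n : ℕ} (hn : Odd n) : ∃ r, (PP n).IsRoot r := by
  set Q := (PP n).comp (-X : ℝ[X]) with hQdef
  have hdegX : (-X : ℝ[X]).natDegree = 1 := by simp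
  have hQdeg : Q.natDegree = n := by
    rw [hQdef, natDegree_comp, hdegX, natDegree_PP, mul_one]
  have hlc : Q.leadingCoeff = -(Nat.choose (2*n) n : ℝ) := by
    rw [hQdef, leadingCoeff_comp (by simp [hdegX]), leadingCoeff_PP, natDegree_PP]
    simp [hn.neg_one_pow]
  have hQne : Q ≠ 0 := fun h => by
    rw [h] at hlc; simp at hlc; exact (Nat.choose_pos (show n ≤ 2*n by omega)).ne' hlc
  have hQdegpos : 0 < Q.degree := by
    rw [← natDegree_pos_iff_degree_pos, hQdeg]
    exact hn.pos
  have htend := Polynomial.tendsto_atBot_of_leadingCoeff_nonpos Q hQdegpos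
    (by rw [hlc]; linarith [cb_pos n])
  obtain ⟨b, hb⟩ := (htend.eventually (Filter.eventually_lt_atBot (0:ℝ))).exists
  have hb' : eval (-b) (PP n) < 0 := by
    rwa [hQdef, eval_comp, eval_neg, eval_X] at hb
  have hbneg : -b < 0 := by
    by_contra h
    exact absurd hb' (not_lt.mpr (eval_PP_pos n (not_lt.mp h)).le)
  obtain ⟨z, _, _, hz⟩ := ivt_mp hbneg hb' (eval_PP_pos n le_rfl)
  exact ⟨z, hz⟩

lemma unique_root_odd {n : ℕ} (hn : Odd n) {x y : ℝ}
    (hx : (PP n).IsRoot x) (hy : (PP n).IsRoot y) : x = y := by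
  by_contra hne
  have hS : (PP n).roots.toFinset.Nonempty := ⟨x, mem_rtf.mpr hx⟩
  set x0 := (PP n).roots.toFinset.min' hS with hx0def
  have hx0 : (PP n).IsRoot x0 := mem_rtf.mp ((PP n).roots.toFinset.min'_mem hS)
  have hT : ((PP n).roots.toFinset.erase x0).Nonempty := by
    rcases eq_or_ne x x0 with h | h
    · exact ⟨y, Finset.mem_erase.mpr ⟨by rw [← h]; exact Ne.symm hne, mem_rtf.mpr hy⟩⟩
    · exact ⟨x, Finset.mem_erase.mpr ⟨h, mem_rtf.mpr hx⟩⟩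
  set y0 := ((PP n).roots.toFinset.erase x0).min' hT with hy0def
  have hy0mem := ((PP n).roots.toFinset.erase x0).min'_mem hT
  have hy0 : (PP n).IsRoot y0 := mem_rtf.mp (Finset.mem_of_mem_erase hy0mem)
  have hx0y0 : x0 < y0 := by
    have h1 : x0 ≤ y0 := (PP n).roots.toFinset.min'_le y0 (Finset.mem_of_mem_erase hy0mem)
    have h2 : y0 ≠ x0 := (Finset.mem_erase.mp hy0mem).1
    exact lt_of_le_of_ne h1 (Ne.symm h2)
  have hnoroot : ∀ w, x0 < w → w < y0 → ¬ (PP n).IsRoot w := by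
    intro w hw1 hw2 hw
    have hwS : w ∈ (PP n).roots.toFinset := mem_rtf.mpr hw
    have hwT : w ∈ (PP n).roots.toFinset.erase x0 :=
      Finset.mem_erase.mpr ⟨hw1.ne', hwS⟩
    exact absurd (((PP n).roots.toFinset.erase x0).min'_le w hwT) (not_le.mpr hw2)
  have hdx : 0 < eval x0 (derivative (PP n)) := by
    rcases deriv_sign n hx0 with ⟨h, _⟩ | ⟨_, he⟩
    · exact h
    · exact absurd he (Nat.not_even_iff_odd.mpr hn)
  have hdy : 0 < eval y0 (derivative (PP n)) := by
    rcases deriv_sign n hy0 with ⟨h, _⟩ | ⟨_, he⟩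
    · exact h
    · exact absurd he (Nat.not_even_iff_odd.mpr hn)
  obtain ⟨δ, hδ, hposx, _⟩ := cross hx0 hdx
  obtain ⟨δ', hδ', _, hnegy⟩ := cross hy0 hdy
  set u := min (x0 + δ/2) ((x0 + y0)/2) with hudef
  have hxu : x0 < u := lt_min (by linarith) (by linarith)
  have huy : u < y0 := lt_of_le_of_lt (min_le_right _ _) (by linarith)
  have hpu : 0 < eval u (PP n) :=
    hposx u hxu (lt_of_le_of_lt (min_le_left _ _) (by linarith))
  set v := max ((u + y0)/2) (y0 - δ'/2) with hvdef
  have huv : u < v := lt_of_lt_of_le (by linarith) (le_max_left _ _)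
  have hvy : v < y0 := max_lt (by linarith) (by linarith)
  have hpv : eval v (PP n) < 0 :=
    hnegy v (lt_of_lt_of_le (by linarith) (le_max_right _ _)) hvy
  obtain ⟨z, hz1, hz2, hz⟩ := ivt_pm huv hpu hpv
  exact hnoroot z (by linarith) (by linarith) hz

lemma mult_one {n : ℕ} {r : ℝ} (hr : (PP n).IsRoot r) :
    rootMultiplicity r (PP n) = 1 := by
  have hne := PP_ne_zero n
  have h1 : 0 < rootMultiplicity r (PP n) := (rootMultiplicity_pos hne).mpr hr
  have h2 : ¬ 1 < rootMultiplicity r (PP n) := by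
    rw [one_lt_rootMultiplicity_iff_isRoot hne]
    rintro ⟨_, hd⟩
    rw [IsRoot] at hd
    rcases deriv_sign n hr with ⟨h, _⟩ | ⟨h, _⟩ <;> rw [hd] at h <;> exact lt_irrefl _ h
  omega

theorem stmt_8 :
    ∀ n : ℕ, Multiset.card
      ((∑ i ∈ Finset.range (n + 1),
        C ((Nat.choose (2 * i) i : ℝ)) * X ^ i : Polynomial ℝ).roots) = n % 2 := by
  intro n
  show Multiset.card (PP n).roots = n % 2
  rcases Nat.even_or_odd n with he | ho
  · rw [even_case he, Nat.even_iff.mp he]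
    rfl
  · obtain ⟨x, hx⟩ := exists_root_odd ho
    have htf : (PP n).roots.toFinset = {x} :=
      Finset.eq_singleton_iff_unique_mem.mpr
        ⟨mem_rtf.mpr hx, fun y hy => unique_root_odd ho (mem_rtf.mp hy) hx⟩
    have hcard := Multiset.toFinset_sum_count_eq (PP n).roots
    rw [htf, Finset.sum_singleton, count_roots, mult_one hx] at hcard
    rw [← hcard, Nat.odd_iff.mp ho]
end

section
/- Let a_n = C(2n+1, n), viewed as a real number. Then for every n ≥ 0, the polynomial p_n(x) = a_0 + a_1 x + ... + a_n x^n has exactly n mod 2 real roots counted with multiplicity. -/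
open Polynomial Finset

noncomputable def aa (i : ℕ) : ℝ := (Nat.choose (2 * i + 1) i : ℝ)

lemma aa_pos (i : ℕ) : 0 < aa i := by
  have : 0 < Nat.choose (2 * i + 1) i := Nat.choose_pos (by omega)
  unfold aa
  exact_mod_cast this

lemma nat_id (i : ℕ) :
    (i + 2) * Nat.choose (2 * (i + 1) + 1) (i + 1) = (4 * i + 6) * Nat.choose (2 * i + 1) i := by
  have h1 : Nat.choose (2 * i + 2) (i + 1) = 2 * Nat.choose (2 * i + 1) i := by
    have hs : Nat.choose (2 * i + 1) (i + 1) = Nat.choose (2 * i + 1) i := by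
      have := Nat.choose_symm (n := 2 * i + 1) (k := i + 1) (by omega)
      simpa [show 2 * i + 1 - (i + 1) = i by omega] using this.symm
    have hp : Nat.choose (2 * i + 2) (i + 1)
        = Nat.choose (2 * i + 1) i + Nat.choose (2 * i + 1) (i + 1) :=
      Nat.choose_succ_succ (2 * i + 1) i
    omega
  -- choose (2i+2, i+1)*(i+1) = choose(2i+2, i)*(i+2)
  have h2 : Nat.choose (2 * i + 2) (i + 1) * (i + 1) = Nat.choose (2 * i + 2) i * (i + 2) := by
    have := Nat.choose_succ_right_eq (2 * i + 2) i
    simpa [show 2 * i + 2 - i = i + 2 by omega] using this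
  have h3 : Nat.choose (2 * i + 3) (i + 1)
      = Nat.choose (2 * i + 2) i + Nat.choose (2 * i + 2) (i + 1) :=
    Nat.choose_succ_succ (2 * i + 2) i
  have : 2 * (i + 1) + 1 = 2 * i + 3 := by omega
  rw [this, h3]
  -- (i+2)*(C(2i+2,i) + C(2i+2,i+1)) = (2i+3)*C(2i+2,i+1) = (4i+6)*C(2i+1,i)
  nlinarith [h1, h2]

lemma aa_rec (i : ℕ) : ((i : ℝ) + 2) * aa (i + 1) = (4 * i + 6) * aa i := by
  have := nat_id i
  have := congrArg (fun n : ℕ => (n : ℝ)) this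
  push_cast at this
  unfold aa
  linarith [this]

lemma aa_lt (i : ℕ) : aa i < aa (i + 1) := by
  have h := aa_rec i
  have hp := aa_pos i
  have hip : (0:ℝ) ≤ (i:ℝ) := Nat.cast_nonneg i
  nlinarith

lemma aa_logconvex (i : ℕ) : aa (i + 1) ^ 2 ≤ aa i * aa (i + 2) := by
  have h1 := aa_rec i
  have h2 := aa_rec (i + 1)
  push_cast at h2
  have hA := aa_pos i
  have hB := aa_pos (i + 1)
  have hC := aa_pos (i + 2)
  have hip : (0:ℝ) ≤ (i:ℝ) := Nat.cast_nonneg i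
  have e3 : ((i:ℝ)+2)*((i:ℝ)+3)*(aa i * aa (i+2) - aa (i+1)^2) = 2*(aa i * aa (i+1)) := by
    linear_combination ((i:ℝ)+2) * aa i * h2 - ((i:ℝ)+3) * aa (i+1) * h1
  nlinarith [e3, mul_pos hA hB, mul_pos (by positivity : (0:ℝ) < (i:ℝ)+2) (by positivity : (0:ℝ) < (i:ℝ)+3)]

lemma aa0 : aa 0 = 1 := by unfold aa; norm_num
lemma aa1 : aa 1 = 3 := by unfold aa; norm_num

lemma even_pow_nonneg (m : ℕ) (x : ℝ) : (0:ℝ) ≤ x ^ (2*m) := by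
  rw [pow_mul]; positivity

lemma even_pow_pos {x : ℝ} (hx : x ≠ 0) (m : ℕ) : (0:ℝ) < x ^ (2*m) := by
  rw [pow_mul]; exact pow_pos (by positivity) m

lemma even_low (m : ℕ) (x : ℝ) :
    1/2 + aa (2*m)/2 * x^(2*m) ≤ ∑ i ∈ Finset.range (2*m+1), aa i * x^i := by
  induction m with
  | zero => simp [aa0]; norm_num
  | succ m ih =>
    have h1 : 2 * (m+1) + 1 = (2*m+1) + 1 + 1 := by ring
    rw [h1, Finset.sum_range_succ, Finset.sum_range_succ]
    have hquad : 0 ≤ aa (2*m)/2 + aa (2*m+1)*x + aa (2*m+2)/2 * x^2 := by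
      nlinarith [aa_logconvex (2*m), sq_nonneg (aa (2*m) + aa (2*m+1)*x),
        aa_pos (2*m), aa_pos (2*m+2), sq_nonneg x]
    have hmul := mul_nonneg (even_pow_nonneg m x) hquad
    have e1 : x^(2*m+1) = x^(2*m) * x := by ring
    have e2 : x^(2*m+1+1) = x^(2*m) * x^2 := by ring
    have e3 : 2*(m+1) = 2*m+1+1 := by ring
    rw [e3, e1, e2]
    have e4 : aa (2*m+2) = aa (2*m+1+1) := by norm_num
    nlinarith [ih, hmul, e4.symm ▸ hmul]

lemma odd_low (m : ℕ) (x : ℝ) :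
    ((m:ℝ)+1) * aa (2*m+1) * x^(2*m) ≤
      ∑ i ∈ Finset.range (2*m+1), ((i:ℝ)+1) * aa (i+1) * x^i := by
  induction m with
  | zero => simp
  | succ m ih =>
    have h1 : 2 * (m+1) + 1 = (2*m+1) + 1 + 1 := by ring
    rw [h1, Finset.sum_range_succ, Finset.sum_range_succ]
    have key : (((2*m:ℝ)+2) * aa (2*m+2))^2
        ≤ 4 * (((m:ℝ)+1) * aa (2*m+1)) * (((m:ℝ)+1) * aa (2*m+3)) := by
      nlinarith [aa_logconvex (2*m+1), sq_nonneg ((m:ℝ)+1), Nat.cast_nonneg (α := ℝ) m,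
        aa_pos (2*m+1), aa_pos (2*m+2), aa_pos (2*m+3)]
    have hquad : 0 ≤ ((m:ℝ)+1) * aa (2*m+1) + ((2*m:ℝ)+2) * aa (2*m+2) * x
        + ((m:ℝ)+1) * aa (2*m+3) * x^2 := by
      nlinarith [key, sq_nonneg (2*(((m:ℝ)+1) * aa (2*m+1)) + ((2*m:ℝ)+2) * aa (2*m+2) * x),
        mul_pos (show (0:ℝ) < (m:ℝ)+1 by positivity) (aa_pos (2*m+1)), sq_nonneg x]
    have hmul := mul_nonneg (even_pow_nonneg m x) hquad
    have e1 : x^(2*m+1) = x^(2*m) * x := by ring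
    have e2 : x^(2*m+1+1) = x^(2*m) * x^2 := by ring
    have e3 : 2*(m+1) = 2*m+1+1 := by ring
    rw [e3, e1, e2]
    push_cast
    nlinarith [ih, hmul]

lemma alt_neg (m : ℕ) : ∑ i ∈ Finset.range (2*m+2), aa i * (-1:ℝ)^i < 0 := by
  induction m with
  | zero => rw [show 2*0+2 = 2 by ring, Finset.sum_range_succ, Finset.sum_range_one]; simp [aa0, aa1]
  | succ m ih =>
    have h1 : 2 * (m+1) + 2 = (2*m+2) + 1 + 1 := by ring
    rw [h1, Finset.sum_range_succ, Finset.sum_range_succ]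
    have e1 : (-1:ℝ)^(2*m+2) = 1 := by
      rw [show 2*m+2 = 2*(m+1) by ring, pow_mul]; norm_num
    have e2 : (-1:ℝ)^(2*m+2+1) = -1 := by rw [pow_succ, e1]; norm_num
    rw [e1, e2]
    have := aa_lt (2*m+2)
    have : aa (2*m+2) < aa (2*m+2+1) := this
    linarith

lemma sum_zero_pow (n : ℕ) (f : ℕ → ℝ) :
    ∑ i ∈ Finset.range (n+1), f i * (0:ℝ)^i = f 0 := by
  rw [Finset.sum_range_succ']
  simp

lemma eval_P (n : ℕ) (x : ℝ) :
    (∑ i ∈ Finset.range (n+1), C (aa i) * X^i : Polynomial ℝ).eval x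
      = ∑ i ∈ Finset.range (n+1), aa i * x^i := by
  simp [eval_finset_sum]

lemma eval_P_deriv (n : ℕ) (x : ℝ) :
    (derivative (∑ i ∈ Finset.range (n+1), C (aa i) * X^i : Polynomial ℝ)).eval x
      = ∑ i ∈ Finset.range n, ((i:ℝ)+1) * aa (i+1) * x^i := by
  rw [derivative_sum, eval_finset_sum]
  have h : ∀ i, ((derivative (C (aa i) * X^i) : Polynomial ℝ)).eval x
      = aa i * ((i:ℝ) * x^(i-1)) := by
    intro i
    rw [derivative_C_mul, derivative_X_pow]
    simp
  simp only [h]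
  rw [Finset.sum_range_succ']
  simp only [Nat.cast_zero, zero_mul, mul_zero, add_zero, Nat.add_sub_cancel]
  apply Finset.sum_congr rfl
  intro i _
  push_cast
  ring

theorem stmt_9 :
    ∀ n : ℕ, Multiset.card
      ((∑ i ∈ Finset.range (n + 1),
        C ((Nat.choose (2 * i + 1) i : ℝ)) * X ^ i : Polynomial ℝ).roots) = n % 2 := by
  intro n
  set P : Polynomial ℝ := ∑ i ∈ Finset.range (n + 1), C (aa i) * X ^ i with hP
  have hrw : (∑ i ∈ Finset.range (n + 1),
      C ((Nat.choose (2 * i + 1) i : ℝ)) * X ^ i : Polynomial ℝ) = P := rfl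
  rw [hrw]
  rcases Nat.even_or_odd n with he | ho
  · -- even case: no roots
    obtain ⟨m, hm⟩ := he
    have hm2 : n = 2 * m := by omega
    have hpos : ∀ x : ℝ, 0 < P.eval x := by
      intro x
      rw [hP, eval_P]
      have := even_low m x
      have h2 : (0:ℝ) ≤ aa (2*m)/2 * x^(2*m) :=
        mul_nonneg (by linarith [aa_pos (2*m)]) (even_pow_nonneg m x)
      rw [hm2]
      linarith
    have : P.roots = 0 := by
      apply Multiset.eq_zero_of_forall_notMem
      intro x hx
      have h := (mem_roots'.mp hx).2
      exact absurd h (hpos x).ne'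
    rw [this]
    simp
    omega
  · -- odd case: exactly one root
    obtain ⟨m, hm⟩ := ho
    have hP0 : P ≠ 0 := by
      intro h
      have : P.eval 0 = 1 := by
        rw [hP, eval_P, sum_zero_pow, aa0]
      rw [h] at this
      simp at this
    -- at least one root
    have hcont : ContinuousOn (fun x : ℝ => P.eval x) (Set.Icc (-1) 0) :=
      P.continuous.continuousOn
    have hneg : P.eval (-1) < 0 := by
      rw [hP, eval_P, hm]
      have := alt_neg m
      have hrr : 2*m+1+1 = 2*m+2 := by ring
      rw [hrr]
      exact this
    have hpos0 : (0:ℝ) < P.eval 0 := by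
      rw [hP, eval_P, sum_zero_pow, aa0]; norm_num
    have hsub := intermediate_value_Icc (by norm_num : (-1:ℝ) ≤ 0) hcont
    have h0mem : (0:ℝ) ∈ Set.Icc (P.eval (-1)) (P.eval 0) := ⟨hneg.le, hpos0.le⟩
    obtain ⟨x, _, hfx⟩ := hsub h0mem
    have hxroot : x ∈ P.roots := mem_roots'.mpr ⟨hP0, hfx⟩
    have hge : 0 < Multiset.card P.roots := Multiset.card_pos.mpr (by
      intro h
      rw [h] at hxroot
      simp at hxroot)
    -- derivative has no roots
    have hderivpos : ∀ x : ℝ, 0 < (derivative P).eval x := by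
      intro x
      rw [hP, eval_P_deriv, hm]
      rcases eq_or_ne x 0 with rfl | hx
      · rw [sum_zero_pow (2*m) (fun i => ((i:ℝ)+1) * aa (i+1))]
        have := aa_pos 1
        norm_num
        linarith
      · have := odd_low m x
        have h1 : 0 < ((m:ℝ)+1) * aa (2*m+1) * x^(2*m) := by
          have := even_pow_pos hx m
          have := aa_pos (2*m+1)
          positivity
        linarith
    have hderiv0 : Multiset.card (derivative P).roots = 0 := by
      rw [Multiset.card_eq_zero]
      apply Multiset.eq_zero_of_forall_notMem
      intro x hx
      exact absurd (mem_roots'.mp hx).2 (hderivpos x).ne'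
    have hle := P.card_roots_le_derivative
    rw [hderiv0] at hle
    omega
end

section
/- Let a_n = n! (the factorial of n), viewed as a real number. Then for every n ≥ 0, the polynomial p_n(x) = a_0 + a_1 x + ... + a_n x^n has exactly n mod 2 real roots counted with multiplicity. -/
open Polynomial Filter

noncomputable def myP (n : ℕ) : Polynomial ℝ :=
  ∑ i ∈ Finset.range (n + 1), C ((Nat.factorial i : ℝ)) * X ^ i

lemma myP_coeff (n k : ℕ) : (myP n).coeff k = if k ≤ n then (Nat.factorial k : ℝ) else 0 := by
  rw [myP, finset_sum_coeff]
  simp only [coeff_C_mul, coeff_X_pow, mul_ite, mul_one, mul_zero]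
  rw [Finset.sum_ite_eq (Finset.range (n+1)) k fun i => (Nat.factorial i : ℝ)]
  simp [Nat.lt_succ_iff]

lemma myP_eval (n : ℕ) (x : ℝ) :
    (myP n).eval x = ∑ i ∈ Finset.range (n + 1), (Nat.factorial i : ℝ) * x ^ i := by
  simp [myP, eval_finset_sum]

lemma myP_natDegree (n : ℕ) : (myP n).natDegree = n := by
  apply le_antisymm
  · rw [natDegree_le_iff_coeff_eq_zero]
    intro N hN
    rw [myP_coeff]
    simp [Nat.not_le.mpr hN]
  · apply le_natDegree_of_ne_zero
    rw [myP_coeff]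
    simp [Nat.factorial_ne_zero]

lemma myP_ne_zero (n : ℕ) : myP n ≠ 0 := by
  intro h
  have := myP_coeff n n
  rw [h] at this
  simp only [coeff_zero, le_refl, if_true] at this
  exact Nat.cast_ne_zero.mpr (Nat.factorial_ne_zero n) this.symm

lemma myP_leadingCoeff (n : ℕ) : (myP n).leadingCoeff = (Nat.factorial n : ℝ) := by
  rw [leadingCoeff, myP_natDegree, myP_coeff]
  simp

lemma myP_succ (n : ℕ) :
    myP (n + 1) = myP n + C ((Nat.factorial (n+1) : ℝ)) * X ^ (n+1) :=
  Finset.sum_range_succ _ _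

lemma deriv_eval_succ (n : ℕ) (x : ℝ) :
    (derivative (myP (n+1))).eval x =
      (derivative (myP n)).eval x + (Nat.factorial (n+1) : ℝ) * (n+1) * x ^ n := by
  rw [myP_succ, derivative_add, derivative_C_mul_X_pow]
  push_cast
  simp

lemma key1 (n : ℕ) (x : ℝ) :
    (1 - x) * (myP n).eval x =
      x ^ 2 * (derivative (myP n)).eval x + 1 - (Nat.factorial (n+1) : ℝ) * x ^ (n+1) := by
  induction n with
  | zero => simp [myP]
  | succ n ih =>
    rw [deriv_eval_succ, myP_succ, eval_add]
    have hf : (Nat.factorial (n+2) : ℝ) = (n+2) * (Nat.factorial (n+1)) := by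
      rw [Nat.factorial_succ]; push_cast; ring
    simp only [eval_mul, eval_C, eval_pow, eval_X]
    rw [hf]
    linear_combination ih

lemma deriv2_eval_succ (n : ℕ) (x : ℝ) :
    (derivative (derivative (myP (n+1)))).eval x =
      (derivative (derivative (myP n))).eval x
        + (Nat.factorial (n+1) : ℝ) * (n+1) * n * x ^ (n-1) := by
  rw [myP_succ, derivative_add, derivative_C_mul_X_pow]
  rw [Nat.add_sub_cancel, derivative_add, derivative_C_mul_X_pow]
  push_cast
  simp [mul_assoc]

lemma pow_helper (n : ℕ) (x : ℝ) : x^2 * ((n:ℝ) * x^(n-1)) = (n:ℝ) * x^(n+1) := by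
  cases n with
  | zero => simp
  | succ m => simp only [Nat.succ_sub_one]; push_cast; ring

lemma key2 (n : ℕ) (x : ℝ) :
    (1 - 3*x) * (derivative (myP n)).eval x =
      x^2 * (derivative (derivative (myP n))).eval x + (myP n).eval x
        - ((n+1) * Nat.factorial (n+1) : ℝ) * x ^ n := by
  induction n with
  | zero => simp [myP]
  | succ n ih =>
    rw [deriv2_eval_succ, deriv_eval_succ, myP_succ, eval_add]
    have hf : (Nat.factorial (n+2) : ℝ) = (n+2) * (Nat.factorial (n+1)) := by
      rw [Nat.factorial_succ]; push_cast; ring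
    have hx := pow_helper n x
    simp only [eval_mul, eval_C, eval_pow, eval_X]
    push_cast
    rw [hf]
    linear_combination ih - ((Nat.factorial (n+1) : ℝ) * ((n:ℝ)+1)) * hx

lemma eval_myP_ge_one (n : ℕ) {x : ℝ} (hx : 0 ≤ x) : 1 ≤ (myP n).eval x := by
  rw [myP_eval]
  have h0 : (1:ℝ) = (Nat.factorial 0 : ℝ) * x ^ 0 := by simp
  rw [h0]
  exact Finset.single_le_sum (f := fun i => (Nat.factorial i : ℝ) * x ^ i)
    (fun i _ => by positivity) (Finset.mem_range.mpr (Nat.succ_pos n))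

lemma derivP_eval (n : ℕ) (x : ℝ) :
    (derivative (myP n)).eval x
      = ∑ i ∈ Finset.range (n+1), (Nat.factorial i : ℝ) * i * x ^ (i-1) := by
  rw [myP, derivative_sum]
  rw [eval_finset_sum]
  refine Finset.sum_congr rfl fun i _ => ?_
  rw [derivative_C_mul_X_pow]
  simp

lemma eval_derivP_ge_one (n : ℕ) (hn : 1 ≤ n) {x : ℝ} (hx : 0 ≤ x) :
    1 ≤ (derivative (myP n)).eval x := by
  rw [derivP_eval]
  have key := Finset.single_le_sum (f := fun i => (Nat.factorial i : ℝ) * i * x ^ (i-1))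
    (fun i _ => by positivity) (Finset.mem_range.mpr (show 1 < n + 1 by omega))
  simpa using key

lemma exists_min_of_even {q : Polynomial ℝ} (h1 : Even q.natDegree) (h2 : 0 < q.natDegree)
    (h3 : 0 < q.leadingCoeff) : ∃ m : ℝ, ∀ y : ℝ, q.eval m ≤ q.eval y := by
  apply q.continuous.exists_forall_le
  rw [cocompact_eq_atBot_atTop, Filter.tendsto_sup]
  constructor
  · have key : Filter.Tendsto (fun x : ℝ => q.eval (-x)) Filter.atTop Filter.atTop := by
      have he : (fun x : ℝ => q.eval (-x)) = fun x => (q.comp (-X)).eval x := by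
        funext x; simp [eval_comp]
      rw [he]
      have hdX : (-X : Polynomial ℝ).natDegree = 1 := by
        rw [natDegree_neg, natDegree_X]
      apply tendsto_atTop_of_leadingCoeff_nonneg
      · refine natDegree_pos_iff_degree_pos.mp ?_
        rw [natDegree_comp, hdX, mul_one]
        exact h2
      · rw [leadingCoeff_comp (by rw [hdX]; exact one_ne_zero)]
        have : (-X : Polynomial ℝ).leadingCoeff = -1 := by
          rw [leadingCoeff_neg, leadingCoeff_X]
        rw [this, h1.neg_one_pow, mul_one]
        exact h3.le
    exact Filter.Tendsto.congr (fun x => by simp) (key.comp tendsto_neg_atBot_atTop)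
  · exact tendsto_atTop_of_leadingCoeff_nonneg q (natDegree_pos_iff_degree_pos.mp h2) h3.le

lemma myP_pos_of_even {n : ℕ} (hn : Even n) (x : ℝ) : 0 < (myP n).eval x := by
  rcases Nat.eq_zero_or_pos n with h0 | hpos
  · subst h0
    rw [myP_eval]
    norm_num
  · obtain ⟨m, hm⟩ := exists_min_of_even (q := myP n)
      (by rw [myP_natDegree]; exact hn) (by rw [myP_natDegree]; exact hpos)
      (by rw [myP_leadingCoeff]; exact_mod_cast Nat.factorial_pos n)
    rcases lt_or_ge 0 ((myP n).eval m) with h | h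
    · exact lt_of_lt_of_le h (hm x)
    · exfalso
      have hm0 : m < 0 := by
        by_contra h'
        push_neg at h'
        linarith [eval_myP_ge_one n h']
      have hloc : IsLocalMin (fun y => (myP n).eval y) m :=
        Filter.Eventually.of_forall fun y => hm y
      have hderiv : (derivative (myP n)).eval m = 0 := by
        have := hloc.deriv_eq_zero
        rwa [Polynomial.deriv] at this
      have hk := key1 n m
      rw [hderiv] at hk
      have hodd : Odd (n+1) := hn.add_one
      have hneg : m ^ (n+1) < 0 := hodd.pow_neg hm0
      have hfac : (0:ℝ) < (Nat.factorial (n+1) : ℝ) := by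
        exact_mod_cast Nat.factorial_pos (n+1)
      have h1 : (1 - m) * (myP n).eval m ≤ 0 :=
        mul_nonpos_iff.mpr (Or.inl ⟨by linarith, h⟩)
      linarith [h1, mul_pos hfac (neg_pos.mpr hneg), hk]

lemma derivP_coeff (n k : ℕ) :
    (derivative (myP n)).coeff k =
      if k + 1 ≤ n then (Nat.factorial (k+1) : ℝ) * (k+1) else 0 := by
  rw [coeff_derivative, myP_coeff]
  split_ifs with h
  · ring
  · simp

lemma derivP_natDegree {n : ℕ} (hn : 1 ≤ n) : (derivative (myP n)).natDegree = n - 1 := by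
  apply le_antisymm
  · rw [natDegree_le_iff_coeff_eq_zero]
    intro N hN
    rw [derivP_coeff]
    have : ¬ (N + 1 ≤ n) := by omega
    simp [this]
  · apply le_natDegree_of_ne_zero
    rw [derivP_coeff]
    have : n - 1 + 1 ≤ n := by omega
    rw [if_pos this]
    have h1 : (0:ℝ) < (Nat.factorial (n-1+1) : ℝ) := by exact_mod_cast Nat.factorial_pos _
    positivity

lemma derivP_leadingCoeff {n : ℕ} (hn : 1 ≤ n) :
    0 < (derivative (myP n)).leadingCoeff := by
  rw [leadingCoeff, derivP_natDegree hn, derivP_coeff]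
  have : n - 1 + 1 ≤ n := by omega
  rw [if_pos this]
  have h1 : (0:ℝ) < (Nat.factorial (n-1+1) : ℝ) := by exact_mod_cast Nat.factorial_pos _
  positivity

lemma derivP_pos_of_odd {n : ℕ} (hn : Odd n) (x : ℝ) :
    0 < (derivative (myP n)).eval x := by
  have hn1 : 1 ≤ n := hn.pos
  rcases eq_or_lt_of_le hn1 with h1 | h2
  · -- n = 1
    rw [derivP_eval, ← h1]
    norm_num [Finset.sum_range_succ]
  · -- n ≥ 2
    obtain ⟨m, hm⟩ := exists_min_of_even (q := derivative (myP n))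
      (by rw [derivP_natDegree hn1]; exact Nat.Odd.sub_odd hn odd_one)
      (by rw [derivP_natDegree hn1]; omega)
      (derivP_leadingCoeff hn1)
    rcases lt_or_ge 0 ((derivative (myP n)).eval m) with h | h
    · exact lt_of_lt_of_le h (hm x)
    · exfalso
      have hm0 : m < 0 := by
        by_contra h'
        push_neg at h'
        linarith [eval_derivP_ge_one n hn1 h']
      have hloc : IsLocalMin (fun y => (derivative (myP n)).eval y) m :=
        Filter.Eventually.of_forall fun y => hm y
      have hderiv : (derivative (derivative (myP n))).eval m = 0 := by
        have := hloc.deriv_eq_zero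
        rwa [Polynomial.deriv] at this
      have hk := key2 n m
      rw [hderiv] at hk
      -- split myP n = myP (n-1) + n! X^n
      have hsplit : (myP n).eval m = (myP (n-1)).eval m + (Nat.factorial n : ℝ) * m ^ n := by
        have hs : n = (n - 1) + 1 := by omega
        rw [hs, myP_succ, eval_add, ← hs]
        simp
      rw [hsplit] at hk
      have heven : Even (n - 1) := Nat.Odd.sub_odd hn odd_one
      have hpos := myP_pos_of_even heven m
      have hneg : m ^ n < 0 := hn.pow_neg hm0
      have hfac1 : (Nat.factorial n : ℝ) < ((n:ℝ)+1) * (Nat.factorial (n+1) : ℝ) := by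
        have a1 : (Nat.factorial n : ℝ) < (Nat.factorial (n+1) : ℝ) := by
          exact_mod_cast (Nat.factorial_lt (by omega)).mpr (Nat.lt_succ_self n)
        have a2 : (0:ℝ) < (Nat.factorial (n+1) : ℝ) := by exact_mod_cast Nat.factorial_pos _
        nlinarith [Nat.cast_nonneg (α := ℝ) n]
      have h1 : (1 - 3*m) * (derivative (myP n)).eval m ≤ 0 :=
        mul_nonpos_iff.mpr (Or.inl ⟨by linarith, h⟩)
      have h2' : 0 < (-(m^n)) * (((n:ℝ)+1) * (Nat.factorial (n+1) : ℝ) - (Nat.factorial n : ℝ)) :=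
        mul_pos (by linarith) (by linarith)
      nlinarith [h1, h2', hk, hpos]

lemma myP_roots_even {n : ℕ} (hn : Even n) : (myP n).roots = 0 :=
  Multiset.eq_zero_of_forall_notMem fun a ha =>
    (myP_pos_of_even hn a).ne' (mem_roots'.mp ha).2

lemma derivP_roots_odd {n : ℕ} (hn : Odd n) : (derivative (myP n)).roots = 0 :=
  Multiset.eq_zero_of_forall_notMem fun a ha =>
    (derivP_pos_of_odd hn a).ne' (mem_roots'.mp ha).2

lemma myP_has_root {n : ℕ} (hn : Odd n) : ∃ c : ℝ, (myP n).eval c = 0 := by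
  -- eval tends to atBot along atBot
  have hc : Filter.Tendsto (fun x : ℝ => ((myP n).comp (-X)).eval x) Filter.atTop Filter.atBot := by
    have hdX : (-X : Polynomial ℝ).natDegree = 1 := by rw [natDegree_neg, natDegree_X]
    apply tendsto_atBot_of_leadingCoeff_nonpos
    · refine natDegree_pos_iff_degree_pos.mp ?_
      rw [natDegree_comp, hdX, mul_one, myP_natDegree]
      exact hn.pos
    · rw [leadingCoeff_comp (by rw [hdX]; exact one_ne_zero)]
      have hX : (-X : Polynomial ℝ).leadingCoeff = -1 := by
        rw [leadingCoeff_neg, leadingCoeff_X]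
      rw [hX, myP_natDegree, hn.neg_one_pow, myP_leadingCoeff]
      have : (0:ℝ) ≤ (Nat.factorial n : ℝ) := by positivity
      linarith
  obtain ⟨t, ht⟩ := (hc.eventually (Filter.eventually_le_atBot (-1))).exists
  rw [eval_comp] at ht
  simp only [eval_neg, eval_X] at ht
  set z := -t with hz
  have hz0 : z ≤ 0 := by
    by_contra h'
    push_neg at h'
    linarith [eval_myP_ge_one n h'.le]
  have hIcc := intermediate_value_Icc hz0 ((myP n).continuous.continuousOn)
  have h0mem : (0:ℝ) ∈ Set.Icc ((myP n).eval z) ((myP n).eval 0) := by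
    constructor
    · exact le_trans ht (by norm_num)
    · linarith [eval_myP_ge_one n (le_refl (0:ℝ))]
  obtain ⟨c, _, hc0⟩ := hIcc h0mem
  exact ⟨c, hc0⟩

theorem stmt_10 :
    ∀ n : ℕ, Multiset.card
      ((∑ i ∈ Finset.range (n + 1),
        C ((Nat.factorial i : ℝ)) * X ^ i : Polynomial ℝ).roots) = n % 2 := by
  intro n
  show Multiset.card (myP n).roots = n % 2
  rcases Nat.even_or_odd n with hn | hn
  · rw [Nat.even_iff.mp hn, myP_roots_even hn, Multiset.card_zero]
  · rw [Nat.odd_iff.mp hn]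
    apply le_antisymm
    · have h := Polynomial.card_roots_le_derivative (myP n)
      rwa [derivP_roots_odd hn, Multiset.card_zero, zero_add] at h
    · obtain ⟨c, hc⟩ := myP_has_root hn
      have : c ∈ (myP n).roots := mem_roots'.mpr ⟨myP_ne_zero n, hc⟩
      exact Multiset.card_pos_iff_exists_mem.mpr ⟨c, this⟩
end
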